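/- arXiv:0709.0334 — 7 statements merged into one kernel-verified Lean document; each statement's English description precedes it below -/
import Mathlib

section
/- There exists a unique concave function ψ̂ : [x_1, x_n] → ℝ such that Ψ_n(ψ̂) ≥ Ψ_n(ψ) for every concave function ψ : [x_1, x_n] → ℝ. Moreover, this maximizer ψ̂ is affine on each interval [x_j, x_{j+1}] for 1 ≤ j < n. -/
open MeasureTheory Set Finset

/-- The normalized log-likelihood functional
`Ψ_n(ψ) = (1/n) Σ_{i<n} ψ(x_i) − ∫_{x_0}^{x_{n-1}} exp(ψ(t)) dt`. -/
noncomputable def Psi (n : ℕ) (x : ℕ → ℝ) (ψ : ℝ → ℝ) : ℝ :=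
  (∑ i ∈ Finset.range n, ψ (x i)) / n - ∫ t in (x 0)..(x (n - 1)), Real.exp (ψ t)

namespace NPMLE

variable (n : ℕ) (x : ℕ → ℝ)

/-- slope of piece `j`. -/
noncomputable def sl (y : ℕ → ℝ) (j : ℕ) : ℝ := (y (j+1) - y j) / (x (j+1) - x j)

/-- the affine extension of piece `j`. -/
noncomputable def lin (y : ℕ → ℝ) (j : ℕ) (t : ℝ) : ℝ := y j + sl x y j * (t - x j)

/-- the piecewise-linear concave interpolant: min of the affine pieces. -/
noncomputable def interp (hn : 2 ≤ n) (y : ℕ → ℝ) (t : ℝ) : ℝ :=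
  (Finset.range (n-1)).inf' (by rw [Finset.nonempty_range_iff]; omega) (fun j => lin x y j t)

/-- the "concave" cone of knot values: slopes nonincreasing. -/
def K (y : ℕ → ℝ) : Prop := ∀ j, j + 2 < n → sl x y (j+1) ≤ sl x y j

section Basic

variable {n x} (hn : 2 ≤ n) (hx : ∀ i, i + 1 < n → x i < x (i + 1))

include hx in
lemma x_lt {i j : ℕ} (hij : i < j) (hj : j < n) : x i < x j := by
  induction j with
  | zero => omega
  | succ k ih =>
    rcases Nat.lt_succ_iff_lt_or_eq.mp hij with h | h
    · exact (ih h (by omega)).trans (hx k hj)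
    · subst h; exact hx i hj

include hx in
lemma x_le {i j : ℕ} (hij : i ≤ j) (hj : j < n) : x i ≤ x j := by
  rcases eq_or_lt_of_le hij with h | h
  · subst h; rfl
  · exact (x_lt hx h hj).le

include hx in
lemma h_pos {j : ℕ} (hj : j + 1 < n) : (0:ℝ) < x (j+1) - x j :=
  sub_pos.mpr (hx j hj)

variable {y : ℕ → ℝ}

include hx in
lemma lin_eval_right {j : ℕ} (hj : j + 1 < n) : lin x y j (x (j+1)) = y (j+1) := by
  have h := h_pos hx hj
  simp only [lin, sl]
  field_simp
  ring

lemma lin_eval_left {j : ℕ} : lin x y j (x j) = y j := by simp [lin]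

include hx in
lemma lin_shift {j : ℕ} (hj : j + 1 < n) (t : ℝ) :
    lin x y j t = y (j+1) + sl x y j * (t - x (j+1)) := by
  have h := (h_pos hx hj).ne'
  simp only [lin, sl]
  field_simp
  ring

include hx in
/-- For `y ∈ K`, on `[x j, ∞)` piece `j` is below all earlier pieces. -/
lemma lin_le_of_le (hK : K n x y) {k j : ℕ} (hkj : k ≤ j) (hj : j + 1 < n)
    {t : ℝ} (ht : x j ≤ t) : lin x y j t ≤ lin x y k t := by
  induction j with
  | zero => have hk0 : k = 0 := by omega
            subst hk0; rfl
  | succ m ih =>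
    rcases Nat.lt_succ_iff_lt_or_eq.mp (Nat.lt_succ_of_le hkj) with h | h
    · -- k ≤ m
      have h1 : lin x y (m+1) t ≤ lin x y m t := by
        rw [lin_shift hx (j := m) (by omega) t]
        have hsl : sl x y (m+1) ≤ sl x y m := hK m (by omega)
        have htm : 0 ≤ t - x (m+1) := by linarith
        have hmul := mul_le_mul_of_nonneg_right hsl htm
        simp only [lin]
        linarith
      exact h1.trans (ih (by omega) (by omega) ((x_le hx (Nat.le_succ m) (by omega)).trans ht))
    · subst h; rfl

include hx in
/-- For `y ∈ K`, on `(-∞, x (j+1)]` piece `j` is below all later pieces. -/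
lemma lin_le_of_ge (hK : K n x y) {k j : ℕ} (hkj : j ≤ k) (hk : k + 1 < n)
    {t : ℝ} (ht : t ≤ x (j+1)) : lin x y j t ≤ lin x y k t := by
  induction k with
  | zero => have hj0 : j = 0 := by omega
            subst hj0; rfl
  | succ m ih =>
    rcases Nat.lt_succ_iff_lt_or_eq.mp (Nat.lt_succ_of_le hkj) with h | h
    · -- j ≤ m
      have h1 : lin x y m t ≤ lin x y (m+1) t := by
        rw [lin_shift hx (j := m) (by omega) t]
        have hsl : sl x y (m+1) ≤ sl x y m := hK m (by omega)
        have htm : t - x (m+1) ≤ 0 := by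
          have : x (j+1) ≤ x (m+1) := x_le hx (by omega) (by omega)
          linarith
        have hmul := mul_le_mul_of_nonpos_right hsl htm
        simp only [lin]
        linarith
      exact (ih (by omega) (by omega)).trans h1
    · subst h; rfl

include hx in
lemma interp_eq_lin (hK : K n x y) {j : ℕ} (hj : j + 1 < n)
    {t : ℝ} (ht : t ∈ Icc (x j) (x (j+1))) : interp n x hn y t = lin x y j t := by
  apply le_antisymm
  · exact Finset.inf'_le _ (by simp [Finset.mem_range]; omega)
  · apply Finset.le_inf'
    intro k hk
    simp only [Finset.mem_range] at hk
    rcases le_or_gt k j with h | h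
    · exact lin_le_of_le hx hK h hj ht.1
    · exact lin_le_of_ge hx hK h.le (by omega) ht.2

include hx in
lemma interp_knot (hK : K n x y) {i : ℕ} (hi : i < n) : interp n x hn y (x i) = y i := by
  rcases lt_or_ge i (n-1) with h | h
  · rw [interp_eq_lin hn hx hK (j := i) (by omega)
      ⟨le_refl _, (x_le hx (Nat.le_succ i) (by omega))⟩]
    exact lin_eval_left
  · have hi' : i = n - 1 := by omega
    subst hi'
    have h2 : n - 2 + 1 = n - 1 := by omega
    have hxx : x (n - 2 + 1) = x (n - 1) := by rw [h2]
    rw [interp_eq_lin hn hx hK (j := n-2) (by omega)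
      ⟨x_le hx (by omega) (by omega), le_of_eq hxx.symm⟩]
    rw [← hxx, lin_eval_right hx (by omega), h2]

lemma interp_concave : ConcaveOn ℝ univ (interp n x hn y) := by
  constructor
  · exact convex_univ
  · intro u _ v _ a b ha hb hab
    apply Finset.le_inf'
    intro j hj
    have h1 : interp n x hn y u ≤ lin x y j u := Finset.inf'_le _ hj
    have h2 : interp n x hn y v ≤ lin x y j v := Finset.inf'_le _ hj
    have heq : lin x y j (a • u + b • v) = a * lin x y j u + b * lin x y j v := by
      simp only [lin, smul_eq_mul]
      linear_combination (sl x y j * x j - y j) * hab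
    rw [heq]
    have hm1 := mul_le_mul_of_nonneg_left h1 ha
    have hm2 := mul_le_mul_of_nonneg_left h2 hb
    simp only [smul_eq_mul]
    linarith

lemma interp_continuous : Continuous (interp n x hn y) := by
  apply Continuous.finset_inf'_apply
  intro j _
  unfold lin
  fun_prop

end Basic

section Concave

variable {n x}
variable (hn : 2 ≤ n) (hx : ∀ i, i + 1 < n → x i < x (i + 1)) {ψ : ℝ → ℝ}

include hx in
lemma knot_mem {i : ℕ} (hi : i < n) : x i ∈ Icc (x 0) (x (n-1)) :=
  ⟨x_le hx (Nat.zero_le i) hi, x_le hx (by omega) (by omega)⟩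

include hx in
lemma K_of_concave (hψ : ConcaveOn ℝ (Icc (x 0) (x (n-1))) ψ) :
    K n x (fun i => ψ (x i)) := by
  intro j hj
  have h := hψ.slope_anti_adjacent (knot_mem hx (i := j) (by omega))
    (knot_mem hx (i := j+2) (by omega)) (hx j (by omega)) (hx (j+1) (by omega))
  simp only [sl]
  exact h

include hx in
lemma chord_le (hψ : ConcaveOn ℝ (Icc (x 0) (x (n-1))) ψ) {j : ℕ} (hj : j + 1 < n)
    {t : ℝ} (ht : t ∈ Icc (x j) (x (j+1))) :
    lin x (fun i => ψ (x i)) j t ≤ ψ t := by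
  have hpos := h_pos hx hj
  set lam : ℝ := (x (j+1) - t) / (x (j+1) - x j) with hlam_def
  set mu : ℝ := (t - x j) / (x (j+1) - x j) with hmu_def
  have hlam : 0 ≤ lam := div_nonneg (by linarith [ht.2]) hpos.le
  have hmu : 0 ≤ mu := div_nonneg (by linarith [ht.1]) hpos.le
  have hsum : lam + mu = 1 := by rw [hlam_def, hmu_def]; field_simp; ring
  have hcomb : lam • (x j) + mu • (x (j+1)) = t := by
    simp only [smul_eq_mul, hlam_def, hmu_def]
    field_simp
    ring
  have key := hψ.2 (knot_mem hx (i := j) (by omega)) (knot_mem hx (i := j+1) hj) hlam hmu hsum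
  rw [hcomb] at key
  have heq : lin x (fun i => ψ (x i)) j t = lam * ψ (x j) + mu * ψ (x (j+1)) := by
    simp only [lin, sl, hlam_def, hmu_def]
    field_simp
    ring
  rw [heq]
  simpa using key

include hn hx in
lemma exists_piece {t : ℝ} (ht : t ∈ Icc (x 0) (x (n-1))) :
    ∃ j, j + 1 < n ∧ t ∈ Icc (x j) (x (j+1)) := by
  classical
  set j := Nat.findGreatest (fun k => x k ≤ t) (n-2) with hj_def
  have hjle : j ≤ n - 2 := Nat.findGreatest_le _
  have hPj : x j ≤ t := Nat.findGreatest_spec (P := fun k => x k ≤ t) (Nat.zero_le _) ht.1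
  refine ⟨j, by omega, hPj, ?_⟩
  rcases lt_or_ge j (n-2) with h | h
  · have h3 := Nat.findGreatest_is_greatest (P := fun k => x k ≤ t) (n := n-2) (k := j+1)
      (by rw [← hj_def]; omega) (by omega)
    have h4 : ¬ x (j+1) ≤ t := by simpa using h3
    exact (not_le.mp h4).le
  · have hj2 : j = n - 2 := by omega
    have h2 : j + 1 = n - 1 := by omega
    rw [h2]
    exact ht.2

include hn hx in
lemma interp_le_concave (hψ : ConcaveOn ℝ (Icc (x 0) (x (n-1))) ψ)
    {t : ℝ} (ht : t ∈ Icc (x 0) (x (n-1))) :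
    interp n x hn (fun i => ψ (x i)) t ≤ ψ t := by
  obtain ⟨j, hj, htj⟩ := exists_piece hn hx ht
  exact le_trans (Finset.inf'_le _ (by simp [Finset.mem_range]; omega))
    (chord_le hx hψ hj htj)

/-- A real concave function on a closed interval is bounded above. -/
lemma concave_le_bound {a b : ℝ} (hab : a < b) (hψ : ConcaveOn ℝ (Icc a b) ψ)
    {t : ℝ} (ht : t ∈ Icc a b) :
    ψ t ≤ 2 * (|ψ ((a+b)/2)| + |ψ a| + |ψ b|) := by
  set c : ℝ := (a+b)/2 with hc_def
  rcases le_or_gt (ψ t) 0 with h0 | h0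
  · have := abs_nonneg (ψ c); have := abs_nonneg (ψ a); have := abs_nonneg (ψ b)
    linarith
  rcases le_or_gt t c with htc | htc
  · -- use c = lam • t + mu • b
    have hbt : 0 < b - t := by
      have : c < b := by rw [hc_def]; linarith
      linarith
    set lam : ℝ := (b - c) / (b - t) with hlam_def
    set mu : ℝ := (c - t) / (b - t) with hmu_def
    have hlam0 : 0 ≤ lam := div_nonneg (by rw [hc_def]; linarith) hbt.le
    have hmu0 : 0 ≤ mu := div_nonneg (by linarith) hbt.le
    have hsum : lam + mu = 1 := by rw [hlam_def, hmu_def]; field_simp; ring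
    have hlam_half : (1:ℝ)/2 ≤ lam := by
      rw [hlam_def, le_div_iff₀ hbt, hc_def]
      linarith [ht.1]
    have hcomb : lam • t + mu • b = c := by
      simp only [smul_eq_mul, hlam_def, hmu_def]
      field_simp
      ring
    have key := hψ.2 ht (⟨hab.le, le_refl b⟩ : b ∈ Icc a b) hlam0 hmu0 hsum
    rw [hcomb] at key
    simp only [smul_eq_mul] at key
    have h1 : ψ c ≤ |ψ c| := le_abs_self _
    have h2 : -|ψ b| ≤ ψ b := neg_abs_le _
    have hmu1 : mu ≤ 1 := by linarith
    have habs : 0 ≤ |ψ a| := abs_nonneg _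
    nlinarith [mul_le_mul_of_nonneg_right hlam_half h0.le,
      mul_le_mul_of_nonneg_left h2 hmu0,
      mul_le_mul_of_nonneg_right hmu1 (abs_nonneg (ψ b))]
  · -- use c = lam • a + mu • t
    have hta : 0 < t - a := by
      have : a < c := by rw [hc_def]; linarith
      linarith
    set lam : ℝ := (t - c) / (t - a) with hlam_def
    set mu : ℝ := (c - a) / (t - a) with hmu_def
    have hlam0 : 0 ≤ lam := div_nonneg (by linarith) hta.le
    have hmu0 : 0 ≤ mu := div_nonneg (by rw [hc_def]; linarith) hta.le
    have hsum : lam + mu = 1 := by rw [hlam_def, hmu_def]; field_simp; ring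
    have hmu_half : (1:ℝ)/2 ≤ mu := by
      rw [hmu_def, le_div_iff₀ hta, hc_def]
      linarith [ht.2]
    have hcomb : lam • a + mu • t = c := by
      simp only [smul_eq_mul, hlam_def, hmu_def]
      field_simp
      ring
    have key := hψ.2 (⟨le_refl a, hab.le⟩ : a ∈ Icc a b) ht hlam0 hmu0 hsum
    rw [hcomb] at key
    simp only [smul_eq_mul] at key
    have h1 : ψ c ≤ |ψ c| := le_abs_self _
    have h2 : -|ψ a| ≤ ψ a := neg_abs_le _
    have hlam1 : lam ≤ 1 := by linarith
    have habs : 0 ≤ |ψ b| := abs_nonneg _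
    nlinarith [mul_le_mul_of_nonneg_right hmu_half h0.le,
      mul_le_mul_of_nonneg_left h2 hlam0,
      mul_le_mul_of_nonneg_right hlam1 (abs_nonneg (ψ a))]

/-- `exp ∘ ψ` is interval-integrable for concave `ψ`. -/
lemma integrable_exp_concave {a b : ℝ} (hab : a < b) (hψ : ConcaveOn ℝ (Icc a b) ψ) :
    IntervalIntegrable (fun t => Real.exp (ψ t)) volume a b := by
  set R : ℝ := 2 * (|ψ ((a+b)/2)| + |ψ a| + |ψ b|) with hR_def
  have hcont : ContinuousOn ψ (Ioo a b) := by
    have := hψ.continuousOn_interior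
    rwa [interior_Icc] at this
  have hmeas : AEStronglyMeasurable (fun t => Real.exp (ψ t)) (volume.restrict (Ioo a b)) :=
    (Real.continuous_exp.comp_continuousOn hcont).aestronglyMeasurable measurableSet_Ioo
  have hint : IntegrableOn (fun t => Real.exp (ψ t)) (Ioo a b) volume := by
    apply Integrable.mono' (g := fun _ => Real.exp R)
      (integrableOn_const measure_Ioo_lt_top.ne) hmeas
    rw [ae_restrict_iff' measurableSet_Ioo]
    apply ae_of_all
    intro t htm
    rw [Real.norm_eq_abs, Real.abs_exp, Real.exp_le_exp]
    exact concave_le_bound hab hψ (Ioo_subset_Icc_self htm)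
  rw [intervalIntegrable_iff_integrableOn_Ioc_of_le hab.le]
  rwa [integrableOn_Ioc_iff_integrableOn_Ioo]

end Concave

section Functional

/-- The objective as a function of knot values. -/
noncomputable def FF (hn : 2 ≤ n) (y : ℕ → ℝ) : ℝ :=
  (∑ i ∈ Finset.range n, y i) / n - ∫ t in (x 0)..(x (n-1)), Real.exp (interp n x hn y t)

/-- minimal gap between knots -/
noncomputable def gapMin (hn : 2 ≤ n) : ℝ :=
  (Finset.range (n-1)).inf' (by rw [Finset.nonempty_range_iff]; omega) (fun j => x (j+1) - x j)

variable {n x}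
variable (hn : 2 ≤ n) (hx : ∀ i, i + 1 < n → x i < x (i + 1))

include hx in
lemma gapMin_pos : 0 < gapMin n x hn := by
  rw [gapMin, Finset.lt_inf'_iff]
  intro j hj
  simp only [Finset.mem_range] at hj
  exact h_pos hx (by omega)

lemma gapMin_le {j : ℕ} (hj : j + 1 < n) : gapMin n x hn ≤ x (j+1) - x j :=
  Finset.inf'_le _ (by simp only [Finset.mem_range]; omega)

lemma integrable_exp_interp (y : ℕ → ℝ) :
    IntervalIntegrable (fun t => Real.exp (interp n x hn y t)) volume (x 0) (x (n-1)) :=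
  (Real.continuous_exp.comp (interp_continuous hn)).intervalIntegrable _ _

include hx in
lemma Psi_interp {y : ℕ → ℝ} (hK : K n x y) :
    Psi n x (interp n x hn y) = FF n x hn y := by
  unfold Psi FF
  congr 2
  exact Finset.sum_congr rfl fun i hi =>
    interp_knot hn hx hK (Finset.mem_range.mp hi)

include hn hx in
lemma Psi_le_FF {ψ : ℝ → ℝ} (hψ : ConcaveOn ℝ (Icc (x 0) (x (n-1))) ψ) :
    Psi n x ψ ≤ FF n x hn (fun i => ψ (x i)) := by
  have hab : x 0 < x (n-1) := x_lt hx (by omega) (by omega)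
  unfold Psi FF
  have hsum : (∑ i ∈ Finset.range n, ψ (x i)) = ∑ i ∈ Finset.range n, (fun i => ψ (x i)) i := rfl
  rw [hsum]
  apply sub_le_sub_left
  apply intervalIntegral.integral_mono_on hab.le (integrable_exp_interp hn _)
    (integrable_exp_concave hab hψ)
  intro t ht
  exact Real.exp_le_exp.mpr (interp_le_concave hn hx hψ ht)

include hx in
lemma integral_exp_lin_lower {y : ℕ → ℝ} (hK : K n x y) {j : ℕ} (hj : j + 1 < n)
    {c d L : ℝ} (hcd : c ≤ d) (hc : x j ≤ c) (hd : d ≤ x (j+1))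
    (hL : ∀ t ∈ Icc c d, L ≤ lin x y j t) :
    (d - c) * Real.exp L ≤ ∫ t in (x 0)..(x (n-1)), Real.exp (interp n x hn y t) := by
  have hxa : x 0 ≤ x j := x_le hx (by omega) (by omega)
  have hxb : x (j+1) ≤ x (n-1) := x_le hx (by omega) (by omega)
  have hsub : Icc c d ⊆ Icc (x j) (x (j+1)) := Icc_subset_Icc hc hd
  have h1 : (d - c) * Real.exp L ≤ ∫ t in c..d, Real.exp (interp n x hn y t) := by
    have := intervalIntegral.integral_mono_on (μ := volume) hcd
      (intervalIntegrable_const (c := Real.exp L))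
      ((integrable_exp_interp hn y).mono_set (by
        rw [uIcc_of_le hcd, uIcc_of_le (by linarith : x 0 ≤ x (n-1))]
        exact (hsub.trans (Icc_subset_Icc hxa hxb))))
      (fun t ht => by
        rw [Real.exp_le_exp, interp_eq_lin hn hx hK hj (hsub ht)]
        exact hL t ht)
    simpa [smul_eq_mul] using this
  refine h1.trans ?_
  apply intervalIntegral.integral_mono_interval (by linarith) hcd (by linarith)
  · filter_upwards with t using Real.exp_nonneg _
  · exact integrable_exp_interp hn y

include hx in
lemma exp_lower_bound {y : ℕ → ℝ} (hK : K n x y) {M u : ℝ} (hu : 0 ≤ u)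
    (hmax : ∃ i, i < n ∧ y i = M) (hub : ∀ i, i < n → y i ≤ M)
    (hdev : ∀ i, i < n → M - u ≤ y i) :
    (gapMin n x hn / (1 + u)) * Real.exp (M - 1)
      ≤ ∫ t in (x 0)..(x (n-1)), Real.exp (interp n x hn y t) := by
  obtain ⟨i1, hi1, hyi1⟩ := hmax
  have hgap := gapMin_pos hn hx
  have h1u : (0:ℝ) < 1 + u := by linarith
  have hE : (0:ℝ) < Real.exp (M - 1) := Real.exp_pos _
  rcases lt_or_ge (i1 + 1) n with hcase | hcase
  · -- use piece j = i1, interval [x i1, x i1 + δ]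
    have hh : 0 < x (i1+1) - x i1 := h_pos hx hcase
    set Δ : ℝ := y i1 - y (i1+1) with hΔ_def
    have hΔ0 : 0 ≤ Δ := by
      have := hub (i1+1) hcase; rw [hΔ_def, hyi1]; linarith
    have hΔu : Δ ≤ u := by
      have := hdev (i1+1) hcase; rw [hΔ_def, hyi1]; linarith
    have h1Δ : (0:ℝ) < 1 + Δ := by linarith
    set δ : ℝ := (x (i1+1) - x i1) / (1 + Δ) with hδ_def
    have hδ0 : 0 < δ := div_pos hh h1Δ
    have hδh : δ ≤ x (i1+1) - x i1 := by
      rw [hδ_def, div_le_iff₀ h1Δ]; nlinarith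
    have hslΔ : sl x y i1 * (x (i1+1) - x i1) = -Δ := by
      rw [sl, div_mul_cancel₀ _ hh.ne']; rw [hΔ_def]; ring
    have hslnp : sl x y i1 ≤ 0 := by
      rw [sl]; apply div_nonpos_of_nonpos_of_nonneg _ hh.le; rw [hΔ_def] at hΔ0; linarith
    have hL : ∀ t ∈ Icc (x i1) (x i1 + δ), M - 1 ≤ lin x y i1 t := by
      intro t ht
      have ht1 : 0 ≤ t - x i1 := by linarith [ht.1]
      have ht2 : t - x i1 ≤ δ := by linarith [ht.2]
      have hs1 : sl x y i1 * δ ≤ sl x y i1 * (t - x i1) :=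
        mul_le_mul_of_nonpos_left ht2 hslnp
      have hs2 : -1 ≤ sl x y i1 * δ := by
        have hcalc : sl x y i1 * δ = -Δ / (1 + Δ) := by
          rw [hδ_def, ← mul_div_assoc, hslΔ]
        rw [hcalc, neg_div, neg_le_neg_iff, div_le_one h1Δ]; linarith
      rw [lin, hyi1]
      linarith
    have hmain := integral_exp_lin_lower hn hx hK hcase
      (by linarith : x i1 ≤ x i1 + δ) (le_refl (x i1)) (by linarith) hL
    refine le_trans ?_ hmain
    have hδge : gapMin n x hn / (1 + u) ≤ δ := by
      rw [hδ_def]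
      exact div_le_div₀ hh.le (gapMin_le hn hcase) h1Δ (by linarith)
    have : x i1 + δ - x i1 = δ := by ring
    rw [this]
    exact mul_le_mul_of_nonneg_right hδge hE.le
  · -- i1 = n - 1 : use piece j = n-2, interval [x (n-1) - δ, x (n-1)]
    have hi1' : i1 = n - 1 := by omega
    subst hi1'
    have hj : (n-2) + 1 < n := by omega
    have hj1 : (n-2) + 1 = n - 1 := by omega
    have hh : 0 < x ((n-2)+1) - x (n-2) := h_pos hx hj
    set Δ : ℝ := y (n-1) - y (n-2) with hΔ_def
    have hΔ0 : 0 ≤ Δ := by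
      have := hub (n-2) (by omega); rw [hΔ_def, hyi1]; linarith
    have hΔu : Δ ≤ u := by
      have := hdev (n-2) (by omega); rw [hΔ_def, hyi1]; linarith
    have h1Δ : (0:ℝ) < 1 + Δ := by linarith
    set δ : ℝ := (x ((n-2)+1) - x (n-2)) / (1 + Δ) with hδ_def
    have hδ0 : 0 < δ := div_pos hh h1Δ
    have hδh : δ ≤ x ((n-2)+1) - x (n-2) := by
      rw [hδ_def, div_le_iff₀ h1Δ]; nlinarith
    have hslΔ : sl x y (n-2) * (x ((n-2)+1) - x (n-2)) = Δ := by
      rw [sl, div_mul_cancel₀ _ hh.ne', hΔ_def, hj1]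
    have hslnn : 0 ≤ sl x y (n-2) := by
      rw [sl]; apply div_nonneg _ hh.le; rw [hj1]; rw [hΔ_def] at hΔ0; linarith
    have hL : ∀ t ∈ Icc (x ((n-2)+1) - δ) (x ((n-2)+1)), M - 1 ≤ lin x y (n-2) t := by
      intro t ht
      have ht1 : -δ ≤ t - x ((n-2)+1) := by linarith [ht.1]
      have ht2 : t - x ((n-2)+1) ≤ 0 := by linarith [ht.2]
      have hs1 : sl x y (n-2) * (-δ) ≤ sl x y (n-2) * (t - x ((n-2)+1)) :=
        mul_le_mul_of_nonneg_left ht1 hslnn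
      have hs2 : -1 ≤ sl x y (n-2) * (-δ) := by
        have hcalc : sl x y (n-2) * (-δ) = -(Δ / (1 + Δ)) := by
          rw [hδ_def]; field_simp; rw [← hslΔ]
        rw [hcalc, neg_le_neg_iff, div_le_one h1Δ]; linarith
      have hshift := lin_shift hx (y := y) hj t
      have hy' : y (n - 2 + 1) = M := by rw [hj1]; exact hyi1
      rw [hshift, hy']
      linarith
    have hmain := integral_exp_lin_lower hn hx hK hj
      (by linarith : x ((n-2)+1) - δ ≤ x ((n-2)+1)) (by linarith) (le_refl _) hL
    refine le_trans ?_ hmain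
    have hδge : gapMin n x hn / (1 + u) ≤ δ := by
      rw [hδ_def]
      exact div_le_div₀ hh.le (gapMin_le hn hj) h1Δ (by linarith)
    have heq : x ((n-2)+1) - (x ((n-2)+1) - δ) = δ := by ring
    rw [heq]
    exact mul_le_mul_of_nonneg_right hδge hE.le

include hx in
lemma sublevel_bound (B : ℝ) :
    ∃ C1 C2 : ℝ, ∀ y : ℕ → ℝ, K n x y → B ≤ FF n x hn y →
      ∀ i, i < n → C2 ≤ y i ∧ y i ≤ C1 := by
  have hgap := gapMin_pos hn hx
  have hab : x 0 < x (n-1) := x_lt hx (by omega) (by omega)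
  have hn0 : (0:ℝ) < n := by positivity
  -- choose C1 via the decay of polynomial × exp(-·)
  obtain ⟨C1, hC1⟩ : ∃ C1, ∀ M, C1 ≤ M →
      (M - B) * (1 + n * (M - B)) / gapMin n x hn * Real.exp (1 - M) < 1 := by
    have h2 := Real.tendsto_pow_mul_exp_neg_atTop_nhds_zero 2
    have h1 := Real.tendsto_pow_mul_exp_neg_atTop_nhds_zero 1
    have h0 := Real.tendsto_exp_neg_atTop_nhds_zero
    have hcomb : Filter.Tendsto (fun M : ℝ =>
        (((n : ℝ) * (M^2 * Real.exp (-M)) + (1 - 2*n*B) * (M^1 * Real.exp (-M))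
          + (n*B^2 - B) * Real.exp (-M)) * Real.exp 1) / gapMin n x hn)
        Filter.atTop (nhds 0) := by
      have := ((((h2.const_mul (n:ℝ)).add (h1.const_mul (1 - 2*n*B))).add
        (h0.const_mul (n*B^2 - B))).mul_const (Real.exp 1)).div_const (gapMin n x hn)
      simpa using this
    have hev := hcomb.eventually_lt_const (by norm_num : (0:ℝ) < 1)
    rw [Filter.eventually_atTop] at hev
    obtain ⟨C1, hC1⟩ := hev
    refine ⟨C1, fun M hM => ?_⟩
    have h := hC1 M hM
    have hptw : (M - B) * (1 + n * (M - B)) / gapMin n x hn * Real.exp (1 - M)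
        = (((n : ℝ) * (M^2 * Real.exp (-M)) + (1 - 2*n*B) * (M^1 * Real.exp (-M))
          + (n*B^2 - B) * Real.exp (-M)) * Real.exp 1) / gapMin n x hn := by
      have hsplit : Real.exp (1 - M) = Real.exp 1 * Real.exp (-M) := by
        rw [show (1:ℝ) - M = 1 + -M by ring, Real.exp_add]
      rw [hsplit]
      field_simp
      ring
    rw [hptw]
    exact h
  refine ⟨C1, (1 - n) * C1 + n * B, ?_⟩
  intro y hK hB i hi
  have hne : (Finset.range n).Nonempty := by rw [Finset.nonempty_range_iff]; omega
  set M : ℝ := (Finset.range n).sup' hne y with hM_def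
  set m : ℝ := (Finset.range n).inf' hne y with hm_def
  have hub : ∀ i, i < n → y i ≤ M := fun i hi => Finset.le_sup' y (Finset.mem_range.mpr hi)
  have hlb : ∀ i, i < n → m ≤ y i := fun i hi => Finset.inf'_le y (Finset.mem_range.mpr hi)
  have hmM : m ≤ M := (hlb i hi).trans (hub i hi)
  have hu : 0 ≤ M - m := by linarith
  have hmax : ∃ i', i' < n ∧ y i' = M := by
    obtain ⟨i', hi', h⟩ := Finset.exists_mem_eq_sup' hne y
    exact ⟨i', Finset.mem_range.mp hi', h.symm⟩
  -- integral lower bounds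
  have hintnn : 0 ≤ ∫ t in (x 0)..(x (n-1)), Real.exp (interp n x hn y t) :=
    intervalIntegral.integral_nonneg hab.le (fun t _ => (Real.exp_nonneg _))
  have hexp := exp_lower_bound hn hx hK hu hmax hub (fun i hi => by linarith [hlb i hi])
  -- sum bounds
  have hsumM : (∑ i ∈ Finset.range n, y i) ≤ n * M := by
    have := Finset.sum_le_card_nsmul (Finset.range n) y M
      (fun i hi => hub i (Finset.mem_range.mp hi))
    simpa [nsmul_eq_mul] using this
  have hsum1 : (∑ i ∈ Finset.range n, y i) ≤ ((n:ℝ) - 1) * M + m := by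
    obtain ⟨i0, hi0, hyi0⟩ := Finset.exists_mem_eq_inf' hne y
    rw [← Finset.sum_erase_add _ _ hi0]
    have hcard : ((Finset.range n).erase i0).card = n - 1 := by
      rw [Finset.card_erase_of_mem hi0, Finset.card_range]
    have hb := Finset.sum_le_card_nsmul ((Finset.range n).erase i0) y M
      (fun i hi => hub i (Finset.mem_range.mp (Finset.mem_of_mem_erase hi)))
    rw [hcard] at hb
    have hcast : ((n - 1 : ℕ) : ℝ) = (n:ℝ) - 1 := by
      have : (1:ℕ) ≤ n := by omega
      push_cast [Nat.cast_sub this]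
      ring
    rw [nsmul_eq_mul, hcast] at hb
    rw [← hyi0]
    linarith
  -- FF bounds
  have hFF1 : FF n x hn y ≤ (((n:ℝ) - 1) * M + m) / n := by
    rw [FF]
    have : (∑ i ∈ Finset.range n, y i) / n ≤ (((n:ℝ) - 1) * M + m) / n :=
      (div_le_div_iff_of_pos_right hn0).mpr hsum1
    linarith [this]
  have hFF2 : FF n x hn y ≤ M - gapMin n x hn / (1 + (M - m)) * Real.exp (M - 1) := by
    rw [FF]
    have h1 : (∑ i ∈ Finset.range n, y i) / n ≤ M := by
      rw [div_le_iff₀ hn0]; linarith [hsumM]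
    linarith [hexp]
  -- derive bounds on M and m
  have hMB : B < M := by
    by_contra h
    push_neg at h
    have hpos : 0 < gapMin n x hn / (1 + (M - m)) * Real.exp (M - 1) :=
      mul_pos (div_pos hgap (by linarith)) (Real.exp_pos _)
    linarith
  have huMB : M - m ≤ n * (M - B) := by
    have hFF1' : FF n x hn y * n ≤ ((n:ℝ) - 1) * M + m := by
      rw [← le_div_iff₀ hn0]; exact hFF1
    have hBn : B * n ≤ FF n x hn y * n := mul_le_mul_of_nonneg_right hB hn0.le
    nlinarith
  have hMC1 : M < C1 := by
    by_contra h
    push_neg at h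
    have hlt := hC1 M h
    -- but the bound from hFF2 forces the expression ≥ 1
    have hEpos : (0:ℝ) < Real.exp (M - 1) := Real.exp_pos _
    have h1mM : Real.exp (1 - M) = (Real.exp (M - 1))⁻¹ := by
      rw [← Real.exp_neg]; ring_nf
    have hkey : gapMin n x hn * Real.exp (M - 1) ≤ (M - B) * (1 + n * (M - B)) := by
      have h2 : gapMin n x hn / (1 + (M - m)) * Real.exp (M - 1) ≤ M - B := by linarith
      rw [div_mul_eq_mul_div, div_le_iff₀ (by linarith : (0:ℝ) < 1 + (M - m))] at h2
      have h3 : (M - B) * (1 + (M - m)) ≤ (M - B) * (1 + n * (M - B)) :=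
        mul_le_mul_of_nonneg_left (by linarith) (by linarith)
      linarith
    have hone : (1:ℝ) ≤ (M - B) * (1 + n * (M - B)) / gapMin n x hn * Real.exp (1 - M) := by
      rw [h1mM, ← div_eq_mul_inv, div_div]
      rw [one_le_div (by positivity : (0:ℝ) < gapMin n x hn * Real.exp (M - 1))]
      linarith [hkey]
    linarith
  have hmC2 : (1 - n) * C1 + n * B ≤ m := by
    have hn1 : (1:ℝ) ≤ (n:ℝ) := by exact_mod_cast (by omega : 1 ≤ n)
    have hprod : (0:ℝ) ≤ ((n:ℝ) - 1) * (C1 - M) :=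
      mul_nonneg (by linarith) (by linarith)
    nlinarith [huMB, hprod]
  exact ⟨le_trans hmC2 (hlb i hi), le_trans (hub i hi) hMC1.le⟩

end Functional

section Congr

variable {n x}
variable (hn : 2 ≤ n)

lemma interp_congr {y z : ℕ → ℝ} (h : ∀ i, i < n → y i = z i) :
    interp n x hn y = interp n x hn z := by
  funext t
  unfold interp
  apply Finset.inf'_congr _ rfl
  intro j hj
  simp only [Finset.mem_range] at hj
  unfold lin sl
  rw [h j (by omega), h (j+1) (by omega)]

lemma K_congr {y z : ℕ → ℝ} (h : ∀ i, i < n → y i = z i) (hK : K n x y) : K n x z := by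
  intro j hj
  have e1 := h j (by omega); have e2 := h (j+1) (by omega); have e3 := h (j+2) (by omega)
  have := hK j hj
  unfold sl at *
  rw [← e1, ← e2, ← e3]
  exact this

include hn in
lemma FF_congr {y z : ℕ → ℝ} (h : ∀ i, i < n → y i = z i) :
    FF n x hn y = FF n x hn z := by
  unfold FF
  rw [interp_congr hn h, Finset.sum_congr rfl (fun i hi => h i (Finset.mem_range.mp hi))]

end Congr

section Exists

/-- extend a vector to `ℕ → ℝ` -/
def extV (v : Fin n → ℝ) : ℕ → ℝ := fun i => if h : i < n then v ⟨i, h⟩ else 0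

variable {n x}

lemma continuous_extV (i : ℕ) : Continuous fun v : Fin n → ℝ => extV n v i := by
  unfold extV
  split_ifs with h
  · exact continuous_apply _
  · exact continuous_const

variable (hn : 2 ≤ n) (hx : ∀ i, i + 1 < n → x i < x (i + 1))

lemma continuous_G : Continuous (fun v : Fin n → ℝ => FF n x hn (extV n v)) := by
  unfold FF
  apply Continuous.sub
  · exact (continuous_finset_sum _ (fun i _ => continuous_extV i)).div_const _
  · have hf : Continuous (Function.uncurry
        (fun (v : Fin n → ℝ) (t : ℝ) => Real.exp (interp n x hn (extV n v) t))) := by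
      apply Real.continuous_exp.comp
      unfold interp
      apply Continuous.finset_inf'_apply
      intro j _
      unfold lin sl
      exact (((continuous_extV j).comp continuous_fst).add
        (((((continuous_extV (j+1)).comp continuous_fst).sub
          ((continuous_extV j).comp continuous_fst)).div_const _).mul
          (continuous_snd.sub continuous_const)))
    exact intervalIntegral.continuous_parametric_intervalIntegral_of_continuous' hf _ _

include hx in
lemma exists_max : ∃ v : Fin n → ℝ, K n x (extV n v) ∧
    ∀ y : ℕ → ℝ, K n x y → FF n x hn y ≤ FF n x hn (extV n v) := by
  classical
  set G : (Fin n → ℝ) → ℝ := fun v => FF n x hn (extV n v) with hG_def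
  have hGc : Continuous G := continuous_G hn
  set B : ℝ := G 0 with hB_def
  have hK0 : K n x (extV n 0) := by
    intro j hj
    simp [sl, extV]
  obtain ⟨C1, C2, hC⟩ := sublevel_bound hn hx B
  set S : Set (Fin n → ℝ) := {v | K n x (extV n v) ∧ B ≤ G v} with hS_def
  have hS0 : (0 : Fin n → ℝ) ∈ S := ⟨hK0, le_refl B⟩
  have hclosed : IsClosed S := by
    have hSeq : S = {v : Fin n → ℝ | K n x (extV n v)} ∩ {v | B ≤ G v} := rfl
    rw [hSeq]
    apply IsClosed.inter
    · have : {v : Fin n → ℝ | K n x (extV n v)} =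
          ⋂ j, ⋂ (_ : j + 2 < n), {v | sl x (extV n v) (j+1) ≤ sl x (extV n v) j} := by
        ext v
        simp only [Set.mem_setOf_eq, Set.mem_iInter, K]
      rw [this]
      refine isClosed_iInter fun j => isClosed_iInter fun hj => isClosed_le ?_ ?_ <;>
      · unfold sl
        exact ((continuous_extV _).sub (continuous_extV _)).div_const _
    · exact isClosed_le continuous_const hGc
  have hsub : S ⊆ Set.pi univ (fun _ : Fin n => Icc C2 C1) := by
    intro v hv
    rw [Set.mem_univ_pi]
    intro i
    have := hC (extV n v) hv.1 hv.2 i.val i.isLt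
    have hvi : extV n v i.val = v i := by simp [extV, i.isLt]
    rw [hvi] at this
    exact this
  have hcompact : IsCompact S :=
    (isCompact_univ_pi (fun _ => isCompact_Icc)).of_isClosed_subset hclosed hsub
  obtain ⟨v, hvS, hvmax⟩ := hcompact.exists_isMaxOn ⟨0, hS0⟩ hGc.continuousOn
  refine ⟨v, hvS.1, ?_⟩
  intro y hKy
  set w : Fin n → ℝ := fun i => y i.val with hw_def
  have hwy : ∀ i, i < n → extV n w i = y i := fun i hi => by simp [extV, hi, hw_def]
  have hFFw : FF n x hn (extV n w) = FF n x hn y := FF_congr hn hwy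
  have hKw : K n x (extV n w) := K_congr (fun i hi => (hwy i hi).symm) hKy
  rcases le_or_gt B (G w) with h | h
  · have hle : G w ≤ G v := hvmax ⟨hKw, h⟩
    calc FF n x hn y = G w := hFFw.symm
      _ ≤ G v := hle
  · calc FF n x hn y = G w := hFFw.symm
      _ ≤ B := h.le
      _ ≤ G v := hvS.2

end Exists

section Unique

lemma exp_avg_le (p q : ℝ) : Real.exp ((p+q)/2) ≤ (Real.exp p + Real.exp q)/2 := by
  have h : Real.exp ((p+q)/2) = Real.exp (p/2) * Real.exp (q/2) := by
    rw [← Real.exp_add]; congr 1; ring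
  have e1 : Real.exp (p/2) * Real.exp (p/2) = Real.exp p := by
    rw [← Real.exp_add]; congr 1; ring
  have e2 : Real.exp (q/2) * Real.exp (q/2) = Real.exp q := by
    rw [← Real.exp_add]; congr 1; ring
  nlinarith [sq_nonneg (Real.exp (p/2) - Real.exp (q/2))]

lemma exp_avg_lt {p q : ℝ} (hpq : p ≠ q) :
    Real.exp ((p+q)/2) < (Real.exp p + Real.exp q)/2 := by
  have h : Real.exp ((p+q)/2) = Real.exp (p/2) * Real.exp (q/2) := by
    rw [← Real.exp_add]; congr 1; ring
  have e1 : Real.exp (p/2) * Real.exp (p/2) = Real.exp p := by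
    rw [← Real.exp_add]; congr 1; ring
  have e2 : Real.exp (q/2) * Real.exp (q/2) = Real.exp q := by
    rw [← Real.exp_add]; congr 1; ring
  have hne : Real.exp (p/2) ≠ Real.exp (q/2) := fun hc =>
    hpq (by have := Real.exp_eq_exp.mp hc; linarith)
  have h2 : 0 < (Real.exp (p/2) - Real.exp (q/2))^2 :=
    (sq_nonneg _).lt_of_ne' (pow_ne_zero 2 (sub_ne_zero.mpr hne))
  nlinarith [h2]

/-- a continuous function vanishing a.e. on `(a,b]` vanishes on `(a,b)`. -/
lemma eq_zero_of_ae_zero {h : ℝ → ℝ} {a b : ℝ}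
    (hcont : ContinuousOn h (Ioo a b))
    (hae : h =ᵐ[volume.restrict (Ioc a b)] 0) {t0 : ℝ} (ht0 : t0 ∈ Ioo a b) :
    h t0 = 0 := by
  by_contra hne
  have hca : ContinuousAt h t0 := hcont.continuousAt (Ioo_mem_nhds ht0.1 ht0.2)
  have h1 : h ⁻¹' {(0:ℝ)}ᶜ ∈ nhds t0 := hca.preimage_mem_nhds (compl_singleton_mem_nhds hne)
  have h2 : (h ⁻¹' {(0:ℝ)}ᶜ) ∩ Ioo a b ∈ nhds t0 := Filter.inter_mem h1 (Ioo_mem_nhds ht0.1 ht0.2)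
  obtain ⟨ε, hε, hball⟩ := Metric.mem_nhds_iff.mp h2
  have hnull : volume {t | ¬ (t ∈ Ioc a b → h t = 0)} = 0 := by
    have h3 : ∀ᵐ t ∂(volume : Measure ℝ), t ∈ Ioc a b → h t = 0 := by
      have := (ae_restrict_iff' measurableSet_Ioc).mp hae
      simpa using this
    rw [ae_iff] at h3
    exact h3
  have hsub2 : Metric.ball t0 ε ⊆ {t | ¬ (t ∈ Ioc a b → h t = 0)} := by
    intro s hs
    have hs2 := hball hs
    simp only [Set.mem_setOf_eq, Classical.not_imp]
    exact ⟨Ioo_subset_Ioc_self hs2.2, by simpa using hs2.1⟩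
  have := measure_mono_null hsub2 hnull
  have hpos := Metric.measure_ball_pos volume t0 hε
  rw [this] at hpos
  exact lt_irrefl 0 hpos

lemma integral_exp_avg_lt {f g : ℝ → ℝ} (hf : Continuous f) (hg : Continuous g)
    {a b : ℝ} (hab : a < b) {t0 : ℝ} (ht0 : t0 ∈ Icc a b) (hne : f t0 ≠ g t0) :
    ∫ t in a..b, Real.exp ((f t + g t)/2)
      < ((∫ t in a..b, Real.exp (f t)) + ∫ t in a..b, Real.exp (g t)) / 2 := by
  set H : ℝ → ℝ := fun t => (Real.exp (f t) + Real.exp (g t))/2 - Real.exp ((f t + g t)/2)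
    with hH_def
  have hHcont : Continuous H := by
    apply Continuous.sub
    · exact ((Real.continuous_exp.comp hf).add (Real.continuous_exp.comp hg)).div_const _
    · exact Real.continuous_exp.comp ((hf.add hg).div_const _)
  have hHnn : ∀ t, 0 ≤ H t := fun t => by
    have := exp_avg_le (f t) (g t); rw [hH_def]; simp only; linarith
  -- find an interior point where f ≠ g
  have hopen : IsOpen {t | f t - g t ≠ 0} :=
    isOpen_compl_singleton.preimage (hf.sub hg)
  have ht0' : t0 ∈ closure (Ioo a b) := by rw [closure_Ioo hab.ne]; exact ht0
  obtain ⟨t1, ht1mem, ht1Ioo⟩ :=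
    mem_closure_iff.mp ht0' _ hopen (sub_ne_zero.mpr hne)
  have ht1ne : f t1 ≠ g t1 := sub_ne_zero.mp ht1mem
  have hHpos : 0 < H t1 := by
    have := exp_avg_lt ht1ne; rw [hH_def]; simp only; linarith
  -- strict positivity of the integral of H
  have hHint : IntervalIntegrable H volume a b := hHcont.intervalIntegrable _ _
  have hInt : 0 < ∫ t in a..b, H t := by
    rcases lt_or_ge 0 (∫ t in a..b, H t) with h | h
    · exact h
    · exfalso
      have h0 : ∫ t in a..b, H t = 0 :=
        le_antisymm h (intervalIntegral.integral_nonneg hab.le (fun t _ => hHnn t))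
      have hae := (intervalIntegral.integral_eq_zero_iff_of_le_of_nonneg_ae hab.le
        (Filter.Eventually.of_forall (fun t => hHnn t)) hHint).mp h0
      have := eq_zero_of_ae_zero hHcont.continuousOn hae ht1Ioo
      rw [this] at hHpos
      exact lt_irrefl 0 hHpos
  -- express the integral of H
  have hIf : IntervalIntegrable (fun t => Real.exp (f t)) volume a b :=
    (Real.continuous_exp.comp hf).intervalIntegrable _ _
  have hIg : IntervalIntegrable (fun t => Real.exp (g t)) volume a b :=
    (Real.continuous_exp.comp hg).intervalIntegrable _ _
  have hIavg : IntervalIntegrable (fun t => Real.exp ((f t + g t)/2)) volume a b :=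
    (Real.continuous_exp.comp ((hf.add hg).div_const _)).intervalIntegrable _ _
  have hsum : ∫ t in a..b, H t
      = ((∫ t in a..b, Real.exp (f t)) + ∫ t in a..b, Real.exp (g t))/2
        - ∫ t in a..b, Real.exp ((f t + g t)/2) := by
    rw [hH_def]
    rw [intervalIntegral.integral_sub ((hIf.add hIg).div_const _) hIavg]
    congr 1
    rw [intervalIntegral.integral_div, intervalIntegral.integral_add hIf hIg]
  linarith [hInt, hsum.symm.le, hsum.le]

variable {n x}
variable (hn : 2 ≤ n) (hx : ∀ i, i + 1 < n → x i < x (i + 1))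

lemma sl_avg {y z : ℕ → ℝ} (j : ℕ) :
    sl x (fun i => (y i + z i)/2) j = (sl x y j + sl x z j)/2 := by
  simp only [sl]; ring

lemma K_avg {y z : ℕ → ℝ} (hy : K n x y) (hz : K n x z) :
    K n x (fun i => (y i + z i)/2) := by
  intro j hj
  rw [sl_avg, sl_avg]
  have := hy j hj; have := hz j hj
  linarith

lemma lin_avg {y z : ℕ → ℝ} (j : ℕ) (t : ℝ) :
    lin x (fun i => (y i + z i)/2) j t = (lin x y j t + lin x z j t)/2 := by
  simp only [lin, sl]; ring

include hx in
lemma interp_avg {y z : ℕ → ℝ} (hy : K n x y) (hz : K n x z)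
    {t : ℝ} (ht : t ∈ Icc (x 0) (x (n-1))) :
    interp n x hn (fun i => (y i + z i)/2) t
      = (interp n x hn y t + interp n x hn z t)/2 := by
  obtain ⟨j, hj, htj⟩ := exists_piece hn hx ht
  rw [interp_eq_lin hn hx (K_avg hy hz) hj htj, interp_eq_lin hn hx hy hj htj,
    interp_eq_lin hn hx hz hj htj, lin_avg]

include hx in
lemma max_unique {y z : ℕ → ℝ} (hy : K n x y) (hz : K n x z)
    (hmax : ∀ w, K n x w → FF n x hn w ≤ FF n x hn y)
    (hFFz : FF n x hn z = FF n x hn y) :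
    ∀ i, i < n → y i = z i := by
  by_contra hcon
  push_neg at hcon
  obtain ⟨i, hi, hnei⟩ := hcon
  have hab : x 0 < x (n-1) := x_lt hx (by omega) (by omega)
  set w : ℕ → ℝ := fun i => (y i + z i)/2 with hw_def
  have hKw : K n x w := K_avg hy hz
  have hfg : interp n x hn y (x i) ≠ interp n x hn z (x i) := by
    rw [interp_knot hn hx hy hi, interp_knot hn hx hz hi]
    exact hnei
  have hstrict := integral_exp_avg_lt (interp_continuous hn (y := y))
    (interp_continuous hn (y := z)) hab (knot_mem hx hi) hfg
  have hcongr : ∫ t in (x 0)..(x (n-1)), Real.exp (interp n x hn w t)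
      = ∫ t in (x 0)..(x (n-1)), Real.exp ((interp n x hn y t + interp n x hn z t)/2) := by
    apply intervalIntegral.integral_congr
    intro t ht
    rw [uIcc_of_le hab.le] at ht
    simp only [hw_def]
    rw [interp_avg hn hx hy hz ht]
  have hsumw : (∑ i ∈ Finset.range n, w i)
      = ((∑ i ∈ Finset.range n, y i) + (∑ i ∈ Finset.range n, z i))/2 := by
    rw [hw_def, ← Finset.sum_add_distrib, ← Finset.sum_div]
  have hFFw : FF n x hn y < FF n x hn w := by
    have hFFy : FF n x hn y = (∑ i ∈ Finset.range n, y i) / n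
        - ∫ t in (x 0)..(x (n-1)), Real.exp (interp n x hn y t) := rfl
    have hFFz' : FF n x hn z = (∑ i ∈ Finset.range n, z i) / n
        - ∫ t in (x 0)..(x (n-1)), Real.exp (interp n x hn z t) := rfl
    have hFFw' : FF n x hn w = (∑ i ∈ Finset.range n, w i) / n
        - ∫ t in (x 0)..(x (n-1)), Real.exp (interp n x hn w t) := rfl
    have hdiv : (((∑ i ∈ Finset.range n, y i) + (∑ i ∈ Finset.range n, z i))/2)/(n:ℝ)
        = ((∑ i ∈ Finset.range n, y i)/n + (∑ i ∈ Finset.range n, z i)/n)/2 := by ring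
    rw [hFFw', hcongr, hsumw, hdiv]
    rw [hFFy, hFFz'] at hFFz
    rw [hFFy]
    linarith [hstrict]
  linarith [hmax w hKw, hFFw]

end Unique

end NPMLE

open NPMLE in
/-- Theorem 2.1: there is a unique (on `[x_0, x_{n-1}]`) concave maximizer of
`Ψ_n` among concave functions on `[x_0, x_{n-1}]`, and it is affine on each `[x_j, x_{j+1}]`. -/
theorem npmle_exists_unique_piecewise_affine
    (n : ℕ) (hn : 2 ≤ n) (x : ℕ → ℝ)
    (hx : ∀ i, i + 1 < n → x i < x (i + 1)) :
    ∃ ψmax : ℝ → ℝ,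
      (ConcaveOn ℝ (Set.Icc (x 0) (x (n - 1))) ψmax ∧
        ∀ ψ : ℝ → ℝ, ConcaveOn ℝ (Set.Icc (x 0) (x (n - 1))) ψ →
          Psi n x ψ ≤ Psi n x ψmax) ∧
      (∀ φ : ℝ → ℝ,
        (ConcaveOn ℝ (Set.Icc (x 0) (x (n - 1))) φ ∧
          ∀ ψ : ℝ → ℝ, ConcaveOn ℝ (Set.Icc (x 0) (x (n - 1))) ψ →
            Psi n x ψ ≤ Psi n x φ) →
        Set.EqOn φ ψmax (Set.Icc (x 0) (x (n - 1)))) ∧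
      (∀ j, j + 1 < n → ∃ c d : ℝ, ∀ t ∈ Set.Icc (x j) (x (j + 1)),
        ψmax t = c + d * t) := by
  classical
  have hab : x 0 < x (n-1) := x_lt hx (by omega) (by omega)
  obtain ⟨v, hKv, hmax⟩ := exists_max hn hx
  set Y : ℕ → ℝ := extV n v with hY_def
  set ψmax : ℝ → ℝ := interp n x hn Y with hψ_def
  have hconc : ConcaveOn ℝ (Set.Icc (x 0) (x (n-1))) ψmax :=
    (interp_concave hn).subset (Set.subset_univ _) (convex_Icc _ _)
  have hPsimax : Psi n x ψmax = FF n x hn Y := Psi_interp hn hx hKv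
  have hge : ∀ ψ : ℝ → ℝ, ConcaveOn ℝ (Set.Icc (x 0) (x (n-1))) ψ →
      Psi n x ψ ≤ Psi n x ψmax := by
    intro ψ hψc
    have h1 := Psi_le_FF hn hx hψc
    have h2 := hmax _ (K_of_concave hx hψc)
    rw [hPsimax]
    linarith
  refine ⟨ψmax, ⟨hconc, hge⟩, ?_, ?_⟩
  · -- uniqueness
    rintro φ ⟨hφc, hφmax⟩ t ht
    have hVeq : Psi n x φ = Psi n x ψmax := le_antisymm (hge φ hφc) (hφmax ψmax hconc)
    set Z : ℕ → ℝ := fun i => φ (x i) with hZ_def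
    have hKZ : K n x Z := K_of_concave hx hφc
    have hPsiFFY : Psi n x φ = FF n x hn Y := by rw [hVeq, hPsimax]
    have hchain : FF n x hn Z = FF n x hn Y := by
      have h1 := Psi_le_FF hn hx hφc
      have h2 := hmax Z hKZ
      exact le_antisymm h2 (hPsiFFY ▸ h1)
    have hYZ : ∀ i, i < n → Y i = Z i := max_unique hn hx hKv hKZ hmax hchain
    have hZY : interp n x hn Z = ψmax := interp_congr hn (fun i hi => (hYZ i hi).symm)
    -- integral equality
    have hIeq : ∫ s in (x 0)..(x (n-1)), Real.exp (φ s)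
        = ∫ s in (x 0)..(x (n-1)), Real.exp (interp n x hn Z s) := by
      have hPsiFFZ : Psi n x φ = FF n x hn Z := by rw [hPsiFFY, hchain]
      have hsums : (∑ i ∈ Finset.range n, φ (x i)) = ∑ i ∈ Finset.range n, Z i := rfl
      unfold Psi FF at hPsiFFZ
      rw [hsums] at hPsiFFZ
      linarith
    rw [hZY] at hIeq
    -- pointwise nonnegativity of the gap
    have hHnn : ∀ s ∈ Set.Icc (x 0) (x (n-1)), 0 ≤ Real.exp (φ s) - Real.exp (ψmax s) := by
      intro s hs
      have h1 : interp n x hn (fun i => φ (x i)) s ≤ φ s := interp_le_concave hn hx hφc hs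
      have h2 : interp n x hn (fun i => φ (x i)) = ψmax := by rw [← hZ_def]; exact hZY
      rw [h2] at h1
      have := Real.exp_le_exp.mpr h1
      linarith
    have hψint : IntervalIntegrable (fun s => Real.exp (ψmax s)) volume (x 0) (x (n-1)) := by
      rw [hψ_def]
      exact integrable_exp_interp hn Y
    have hφint : IntervalIntegrable (fun s => Real.exp (φ s)) volume (x 0) (x (n-1)) :=
      integrable_exp_concave hab hφc
    have hint : IntervalIntegrable (fun s => Real.exp (φ s) - Real.exp (ψmax s)) volume
        (x 0) (x (n-1)) := hφint.sub hψint
    have h0 : ∫ s in (x 0)..(x (n-1)), (Real.exp (φ s) - Real.exp (ψmax s)) = 0 := by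
      rw [intervalIntegral.integral_sub hφint hψint]
      rw [hψ_def]
      rw [hIeq]
      ring
    have hae0 : (0 : ℝ → ℝ) ≤ᵐ[volume.restrict (Set.Ioc (x 0) (x (n-1)))]
        (fun s => Real.exp (φ s) - Real.exp (ψmax s)) := by
      filter_upwards [ae_restrict_mem measurableSet_Ioc] with s hs
      exact hHnn s (Set.Ioc_subset_Icc_self hs)
    have hae := (intervalIntegral.integral_eq_zero_iff_of_le_of_nonneg_ae hab.le hae0 hint).mp h0
    rcases eq_or_lt_of_le ht.1 with h1 | h1
    · -- t = x 0
      have hk : ψmax (x 0) = Y 0 := by rw [hψ_def]; exact interp_knot hn hx hKv (by omega)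
      rw [← h1, hk, hYZ 0 (by omega)]
    · rcases eq_or_lt_of_le ht.2 with h2 | h2
      · -- t = x (n-1)
        have hk : ψmax (x (n-1)) = Y (n-1) := by
          rw [hψ_def]; exact interp_knot hn hx hKv (by omega)
        rw [h2, hk, hYZ (n-1) (by omega)]
      · -- interior point
        have hφcont : ContinuousOn (fun s => Real.exp (φ s) - Real.exp (ψmax s))
            (Set.Ioo (x 0) (x (n-1))) := by
          apply ContinuousOn.sub
          · apply Real.continuous_exp.comp_continuousOn
            have := hφc.continuousOn_interior
            rwa [interior_Icc] at this
          · refine (Real.continuous_exp.comp ?_).continuousOn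
            rw [hψ_def]
            exact interp_continuous hn
        have hz := eq_zero_of_ae_zero hφcont hae ⟨h1, h2⟩
        have hee : Real.exp (φ t) = Real.exp (ψmax t) := by linarith [hz]
        exact Real.exp_eq_exp.mp hee
  · -- piecewise affine
    intro j hj
    refine ⟨Y j - sl x Y j * x j, sl x Y j, ?_⟩
    intro t ht
    rw [hψ_def, interp_eq_lin hn hx hKv hj ht, lin]
    ring
end

section
/- Let ψ̃ : [x_1, x_n] → ℝ be concave. Then ψ̃ maximizes Ψ_n over all concave real-valued functions on [x_1, x_n] if and only if for every function Δ : [x_1, x_n] → ℝ such that ψ̃ + λΔ is concave for some λ > 0, one has (1/n) Σ_{i=1}^n Δ(x_i) ≤ ∫_{x_1}^{x_n} Δ(t) · exp ψ̃(t) dt. -/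
open MeasureTheory
open Set

lemma exp_sub_one_le (h : ℝ) : Real.exp h - 1 ≤ h * Real.exp h := by
  have h1 : (-h) + 1 ≤ Real.exp (-h) := Real.add_one_le_exp (-h)
  have h2 : Real.exp (-h) * Real.exp h = 1 := by
    rw [← Real.exp_add]; simp
  nlinarith [Real.exp_pos h]

lemma abs_exp_sub_one_le (h : ℝ) : |Real.exp h - 1| ≤ |h| * Real.exp |h| := by
  rcases le_or_gt 0 h with hh | hh
  · rw [abs_of_nonneg hh, abs_of_nonneg (by nlinarith [Real.add_one_le_exp h] : (0:ℝ) ≤ Real.exp h - 1)]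
    exact (exp_sub_one_le h).trans (by nlinarith [Real.exp_pos h])
  · rw [abs_of_neg hh, abs_of_nonpos (by nlinarith [Real.exp_lt_one_iff.mpr hh] : Real.exp h - 1 ≤ 0)]
    have := Real.add_one_le_exp h
    nlinarith [Real.one_le_exp (le_of_lt (neg_pos.mpr hh))]

lemma exp_taylor_bound (h : ℝ) : Real.exp h - 1 - h ≤ h ^ 2 * Real.exp |h| := by
  have h1 := exp_sub_one_le h
  have h2 := abs_exp_sub_one_le h
  have h3 : h * (Real.exp h - 1) ≤ |h| * |Real.exp h - 1| := by
    calc h * (Real.exp h - 1) ≤ |h * (Real.exp h - 1)| := le_abs_self _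
    _ = |h| * |Real.exp h - 1| := abs_mul _ _
  have h6 : |h| * |Real.exp h - 1| ≤ |h| * (|h| * Real.exp |h|) :=
    mul_le_mul_of_nonneg_left h2 (abs_nonneg h)
  have habs : |h| * |h| = h ^ 2 := by rw [← abs_mul, ← sq, abs_sq]
  have h4 : h * Real.exp h - h = h * (Real.exp h - 1) := by ring
  have h5 : |h| * (|h| * Real.exp |h|) = h ^ 2 * Real.exp |h| := by
    rw [← mul_assoc, habs]
  linarith

/-- boundedness of a concave function on a closed interval -/
lemma concave_bddAbs {a b : ℝ} (hab : a < b) {f : ℝ → ℝ}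
    (hf : ConcaveOn ℝ (Icc a b) f) : ∃ M, ∀ t ∈ Icc a b, |f t| ≤ M := by
  set m := min (f a) (f b) with hm
  have ha : a ∈ Icc a b := ⟨le_refl a, hab.le⟩
  have hb : b ∈ Icc a b := ⟨hab.le, le_refl b⟩
  have hlow : ∀ t ∈ Icc a b, m ≤ f t := by
    intro t ht
    have : t ∈ segment ℝ a b := by rwa [segment_eq_Icc hab.le]
    exact hf.ge_on_segment ha hb this
  have hup : ∀ t ∈ Icc a b, f t ≤ 2 * f ((a + b) / 2) - m := by
    intro t ht
    have hs : a + b - t ∈ Icc a b := by constructor <;> [linarith [ht.2]; linarith [ht.1]]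
    have key := hf.2 ht hs (by norm_num : (0:ℝ) ≤ 1/2) (by norm_num : (0:ℝ) ≤ 1/2) (by norm_num)
    have heq : (1/2 : ℝ) • t + (1/2 : ℝ) • (a + b - t) = (a + b) / 2 := by
      simp only [smul_eq_mul]; ring
    rw [heq] at key
    simp only [smul_eq_mul] at key
    have := hlow _ hs
    linarith
  refine ⟨max (2 * f ((a + b) / 2) - m) (-m), fun t ht => abs_le.mpr ⟨?_, ?_⟩⟩
  · have h1 : -max (2 * f ((a+b)/2) - m) (-m) ≤ -(-m) := neg_le_neg (le_max_right _ _)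
    simp only [neg_neg] at h1; linarith [hlow t ht]
  · exact (hup t ht).trans (le_max_left _ _)

/-- interval integrability from boundedness + continuity on the interior -/
lemma intInt {a b : ℝ} (hab : a ≤ b) {f : ℝ → ℝ}
    (hc : ContinuousOn f (Ioo a b)) {M : ℝ} (hM : ∀ t ∈ Icc a b, |f t| ≤ M) :
    IntervalIntegrable f volume a b := by
  rw [intervalIntegrable_iff_integrableOn_Ioo_of_le hab]
  have hmeas : AEStronglyMeasurable f (volume.restrict (Ioo a b)) :=
    hc.aestronglyMeasurable measurableSet_Ioo
  refine Integrable.mono' (integrable_const M) hmeas ?_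
  filter_upwards [ae_restrict_mem measurableSet_Ioo] with t ht
  exact hM t (Ioo_subset_Icc_self ht)

lemma x0_lt_xlast {n : ℕ} (hn : 2 ≤ n) {x : ℕ → ℝ}
    (hx : ∀ i, i + 1 < n → x i < x (i + 1)) : x 0 < x (n - 1) := by
  have key : ∀ m : ℕ, m < n → 0 < m → x 0 < x m := by
    intro m
    induction m with
    | zero => intro _ h; exact absurd h (lt_irrefl 0)
    | succ m ih =>
      intro hm _
      rcases Nat.eq_zero_or_pos m with rfl | hmpos
      · exact hx 0 hm
      · exact lt_trans (ih (lt_trans (Nat.lt_succ_self m) hm) hmpos) (hx m hm)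
  exact key (n - 1) (Nat.sub_lt (by omega) one_pos) (by omega)


/-- Theorem 2.2: a concave `ψ̃` on `[x_0, x_{n-1}]` maximizes `Ψ_n` if and
only if for every perturbation `Δ` such that `ψ̃ + λΔ` is concave for some `λ > 0`,
`(1/n) Σᵢ Δ(xᵢ) ≤ ∫ Δ(t)·exp(ψ̃(t)) dt`. -/
theorem npmle_characterization_perturbation
    (n : ℕ) (hn : 2 ≤ n) (x : ℕ → ℝ)
    (hx : ∀ i, i + 1 < n → x i < x (i + 1))
    (ψt : ℝ → ℝ)
    (hconc : ConcaveOn ℝ (Set.Icc (x 0) (x (n - 1))) ψt) :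
    (∀ ψ : ℝ → ℝ, ConcaveOn ℝ (Set.Icc (x 0) (x (n - 1))) ψ →
        Psi n x ψ ≤ Psi n x ψt) ↔
      (∀ Δ : ℝ → ℝ,
        (∃ lam : ℝ, 0 < lam ∧
          ConcaveOn ℝ (Set.Icc (x 0) (x (n - 1))) (fun t => ψt t + lam * Δ t)) →
        (∑ i ∈ Finset.range n, Δ (x i)) / n ≤
          ∫ t in (x 0)..(x (n - 1)), Δ t * Real.exp (ψt t)) := by
  set a := x 0 with ha
  set b := x (n - 1) with hb
  have hab : a < b := x0_lt_xlast hn hx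
  have hnpos : (0 : ℝ) < n := by positivity
  obtain ⟨Kt, hKt⟩ := concave_bddAbs hab hconc
  have hKt0 : 0 ≤ Kt := le_trans (abs_nonneg _) (hKt a ⟨le_refl a, hab.le⟩)
  have ct : ContinuousOn ψt (Ioo a b) := by
    have := hconc.continuousOn_interior
    rwa [interior_Icc] at this
  have cexpt : ContinuousOn (fun t => Real.exp (ψt t)) (Ioo a b) :=
    Real.continuous_exp.comp_continuousOn ct
  have hexpψt : IntervalIntegrable (fun t => Real.exp (ψt t)) volume a b := by
    apply intInt hab.le cexpt (M := Real.exp Kt)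
    intro t ht
    rw [abs_of_pos (Real.exp_pos _)]
    exact Real.exp_le_exp.mpr (le_trans (le_abs_self _) (hKt t ht))
  constructor
  · -- maximality → perturbation inequality
    rintro H Δ ⟨lam0, hlam0, hc0⟩
    obtain ⟨K0, hK0⟩ := concave_bddAbs hab hc0
    set M : ℝ := (K0 + Kt) / lam0 with hM
    have hK00 : 0 ≤ K0 := le_trans (abs_nonneg _) (hK0 a ⟨le_refl a, hab.le⟩)
    have hM0 : 0 ≤ M := by positivity
    have hΔM : ∀ t ∈ Icc a b, |Δ t| ≤ M := by
      intro t ht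
      have h1 := hK0 t ht
      have h2 := hKt t ht
      have h3 : |lam0 * Δ t| ≤ K0 + Kt := by
        have he : lam0 * Δ t = (ψt t + lam0 * Δ t) - ψt t := by ring
        rw [he]
        exact (abs_sub _ _).trans (add_le_add h1 h2)
      rw [abs_mul, abs_of_pos hlam0, mul_comm] at h3
      rw [hM, le_div_iff₀ hlam0]
      exact h3
    have cΔ : ContinuousOn Δ (Ioo a b) := by
      have c0 : ContinuousOn (fun t => ψt t + lam0 * Δ t) (Ioo a b) := by
        have := hc0.continuousOn_interior
        rwa [interior_Icc] at this
      have hrw : Δ = fun t => ((ψt t + lam0 * Δ t) - ψt t) / lam0 := by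
        funext t; field_simp; ring
      rw [hrw]
      exact (c0.sub ct).div_const lam0
    have hΔE : IntervalIntegrable (fun t => Δ t * Real.exp (ψt t)) volume a b := by
      apply intInt hab.le (cΔ.mul cexpt) (M := M * Real.exp Kt)
      intro t ht
      simp only [Pi.mul_apply]
      rw [abs_mul, abs_of_pos (Real.exp_pos _)]
      exact mul_le_mul (hΔM t ht)
        (Real.exp_le_exp.mpr (le_trans (le_abs_self _) (hKt t ht)))
        (Real.exp_pos _).le hM0
    set I := ∫ t in a..b, Δ t * Real.exp (ψt t) with hI
    set C0 : ℝ := M ^ 2 * Real.exp (Kt + lam0 * M) with hC0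
    have hC0nn : 0 ≤ C0 := by positivity
    have main : ∀ lam : ℝ, 0 < lam → lam ≤ lam0 →
        (∑ i ∈ Finset.range n, Δ (x i)) / n ≤ I + lam * (C0 * (b - a)) := by
      intro lam hl hll
      set ψl : ℝ → ℝ := fun t => ψt t + lam * Δ t with hψl
      have hcl : ConcaveOn ℝ (Icc a b) ψl := by
        have h1 : (0:ℝ) ≤ 1 - lam / lam0 := by
          rw [sub_nonneg, div_le_one hlam0]; exact hll
        have h2 : (0:ℝ) ≤ lam / lam0 := by positivity
        have hcomb := (hconc.smul h1).add (hc0.smul h2)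
        convert hcomb using 1
        any_goals rfl
        funext t
        simp only [Pi.add_apply, smul_eq_mul, hψl]
        field_simp
        ring
      have hcψl : ContinuousOn ψl (Ioo a b) := by
        have := hcl.continuousOn_interior
        rwa [interior_Icc] at this
      have cexpl : ContinuousOn (fun t => Real.exp (ψl t)) (Ioo a b) :=
        Real.continuous_exp.comp_continuousOn hcψl
      have hexpψl : IntervalIntegrable (fun t => Real.exp (ψl t)) volume a b := by
        apply intInt hab.le cexpl (M := Real.exp (Kt + lam0 * M))
        intro t ht
        rw [abs_of_pos (Real.exp_pos _)]
        apply Real.exp_le_exp.mpr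
        have h1 : ψt t ≤ Kt := le_trans (le_abs_self _) (hKt t ht)
        have h2 : lam * Δ t ≤ lam0 * M := by
          calc lam * Δ t ≤ lam * |Δ t| :=
                mul_le_mul_of_nonneg_left (le_abs_self _) hl.le
          _ ≤ lam0 * M := mul_le_mul hll (hΔM t ht) (abs_nonneg _) hlam0.le
        simp only [hψl]
        linarith
      have hpt : ∀ t ∈ Icc a b, Real.exp (ψl t) - Real.exp (ψt t) ≤
          lam * (Δ t * Real.exp (ψt t)) + lam ^ 2 * C0 := by
        intro t ht
        have hB := exp_taylor_bound (lam * Δ t)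
        have hb1 : |lam * Δ t| ≤ lam0 * M := by
          rw [abs_mul, abs_of_pos hl]
          exact mul_le_mul hll (hΔM t ht) (abs_nonneg _) hlam0.le
        have hb2 : (lam * Δ t) ^ 2 ≤ lam ^ 2 * M ^ 2 := by
          rw [mul_pow]
          apply mul_le_mul_of_nonneg_left _ (by positivity)
          have hM' := hΔM t ht
          have := abs_le.mp hM'
          nlinarith
        have e1 : Real.exp (lam * Δ t) - 1 - lam * Δ t ≤
            lam ^ 2 * M ^ 2 * Real.exp (lam0 * M) :=
          hB.trans (mul_le_mul hb2 (Real.exp_le_exp.mpr hb1) (Real.exp_pos _).le (by positivity))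
        have e2 : Real.exp (ψt t) * (Real.exp (lam * Δ t) - 1 - lam * Δ t) ≤
            Real.exp (ψt t) * (lam ^ 2 * M ^ 2 * Real.exp (lam0 * M)) :=
          mul_le_mul_of_nonneg_left e1 (Real.exp_pos _).le
        have e3 : Real.exp (ψt t) ≤ Real.exp Kt :=
          Real.exp_le_exp.mpr (le_trans (le_abs_self _) (hKt t ht))
        have e4 : Real.exp (ψt t) * (lam ^ 2 * M ^ 2 * Real.exp (lam0 * M)) ≤
            Real.exp Kt * (lam ^ 2 * M ^ 2 * Real.exp (lam0 * M)) :=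
          mul_le_mul_of_nonneg_right e3 (by positivity)
        have e5 : Real.exp Kt * (lam ^ 2 * M ^ 2 * Real.exp (lam0 * M)) = lam ^ 2 * C0 := by
          rw [hC0, Real.exp_add]; ring
        have e6 : Real.exp (ψl t) - Real.exp (ψt t) - lam * (Δ t * Real.exp (ψt t)) =
            Real.exp (ψt t) * (Real.exp (lam * Δ t) - 1 - lam * Δ t) := by
          have hA : Real.exp (ψl t) = Real.exp (ψt t) * Real.exp (lam * Δ t) := by
            rw [hψl, ← Real.exp_add]
          rw [hA]; ring
        linarith
      have hRHSint : IntervalIntegrable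
          (fun t => lam * (Δ t * Real.exp (ψt t)) + lam ^ 2 * C0) volume a b :=
        (hΔE.const_mul lam).add intervalIntegrable_const
      have hmono := intervalIntegral.integral_mono_on hab.le (hexpψl.sub hexpψt) hRHSint hpt
      have hcalc : (∫ t in a..b, (lam * (Δ t * Real.exp (ψt t)) + lam ^ 2 * C0)) =
          lam * I + lam ^ 2 * C0 * (b - a) := by
        rw [intervalIntegral.integral_add (hΔE.const_mul lam) intervalIntegrable_const,
          intervalIntegral.integral_const_mul, intervalIntegral.integral_const,
          smul_eq_mul, hI]
        ring
      have hsub : (∫ t in a..b, (Real.exp (ψl t) - Real.exp (ψt t))) =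
          (∫ t in a..b, Real.exp (ψl t)) - ∫ t in a..b, Real.exp (ψt t) :=
        intervalIntegral.integral_sub hexpψl hexpψt
      have hmax := H ψl hcl
      simp only [Psi, ← ha, ← hb] at hmax
      have hsuml : (∑ i ∈ Finset.range n, ψl (x i)) =
          (∑ i ∈ Finset.range n, ψt (x i)) + lam * ∑ i ∈ Finset.range n, Δ (x i) := by
        rw [Finset.mul_sum, ← Finset.sum_add_distrib]
      rw [hsuml, add_div] at hmax
      -- hmax : Σψt/n + lam*ΣΔ/n - ∫expψl ≤ Σψt/n - ∫expψt
      have key : lam * (∑ i ∈ Finset.range n, Δ (x i)) / n ≤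
          lam * I + lam ^ 2 * C0 * (b - a) := by
        rw [hsub, hcalc] at hmono
        linarith
      rw [div_le_iff₀ hnpos] at key ⊢
      have hfinal : lam * ((I + lam * (C0 * (b - a))) * n) =
          (lam * I + lam ^ 2 * C0 * (b - a)) * n := by ring
      have := mul_le_mul_of_nonneg_left key hl.le
      nlinarith [mul_pos hl hnpos]
    -- take lam → 0
    set D := C0 * (b - a) with hD
    have hDnn : 0 ≤ D := mul_nonneg hC0nn (by linarith)
    apply le_of_forall_pos_le_add
    intro ε hε
    set lam := min lam0 (ε / (D + 1)) with hlam
    have hlpos : 0 < lam := lt_min hlam0 (div_pos hε (by linarith))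
    have h1 := main lam hlpos (min_le_left _ _)
    have h2 : lam * D ≤ ε := by
      calc lam * D ≤ (ε / (D + 1)) * D :=
            mul_le_mul_of_nonneg_right (min_le_right _ _) hDnn
      _ ≤ ε := by
          rw [div_mul_eq_mul_div, div_le_iff₀ (by linarith : (0:ℝ) < D + 1)]
          nlinarith
    linarith
  · -- perturbation inequality → maximality
    intro H ψ hψ
    set Δ : ℝ → ℝ := fun t => ψ t - ψt t with hΔ
    have hadm : ∃ lam : ℝ, 0 < lam ∧
        ConcaveOn ℝ (Icc a b) (fun t => ψt t + lam * Δ t) := by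
      refine ⟨1, one_pos, ?_⟩
      convert hψ using 2 with t
      simp [hΔ]
    have key := H Δ hadm
    obtain ⟨Kψ, hKψ⟩ := concave_bddAbs hab hψ
    have hKψ0 : 0 ≤ Kψ := le_trans (abs_nonneg _) (hKψ a ⟨le_refl a, hab.le⟩)
    have cψ : ContinuousOn ψ (Ioo a b) := by
      have := hψ.continuousOn_interior
      rwa [interior_Icc] at this
    have cexpψ : ContinuousOn (fun t => Real.exp (ψ t)) (Ioo a b) :=
      Real.continuous_exp.comp_continuousOn cψ
    have hexpψ : IntervalIntegrable (fun t => Real.exp (ψ t)) volume a b := by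
      apply intInt hab.le cexpψ (M := Real.exp Kψ)
      intro t ht
      rw [abs_of_pos (Real.exp_pos _)]
      exact Real.exp_le_exp.mpr (le_trans (le_abs_self _) (hKψ t ht))
    have hΔE : IntervalIntegrable (fun t => Δ t * Real.exp (ψt t)) volume a b := by
      apply intInt hab.le ((cψ.sub ct).mul cexpt) (M := (Kψ + Kt) * Real.exp Kt)
      intro t ht
      simp only [Pi.mul_apply, Pi.sub_apply]
      rw [abs_mul, abs_of_pos (Real.exp_pos _)]
      apply mul_le_mul
      · exact (abs_sub _ _).trans (add_le_add (hKψ t ht) (hKt t ht))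
      · exact Real.exp_le_exp.mpr (le_trans (le_abs_self _) (hKt t ht))
      · exact (Real.exp_pos _).le
      · linarith
    have hmono : (∫ t in a..b, Δ t * Real.exp (ψt t)) ≤
        ∫ t in a..b, (Real.exp (ψ t) - Real.exp (ψt t)) := by
      apply intervalIntegral.integral_mono_on hab.le hΔE (hexpψ.sub hexpψt)
      intro t _
      have h1 := Real.add_one_le_exp (Δ t)
      have h2 : Real.exp (Δ t) * Real.exp (ψt t) = Real.exp (ψ t) := by
        rw [← Real.exp_add]; congr 1; simp [hΔ]
      nlinarith [Real.exp_pos (ψt t)]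
    have hsub : (∫ t in a..b, (Real.exp (ψ t) - Real.exp (ψt t))) =
        (∫ t in a..b, Real.exp (ψ t)) - ∫ t in a..b, Real.exp (ψt t) :=
      intervalIntegral.integral_sub hexpψ hexpψt
    have hsum : (∑ i ∈ Finset.range n, Δ (x i)) =
        (∑ i ∈ Finset.range n, ψ (x i)) - ∑ i ∈ Finset.range n, ψt (x i) := by
      simp only [hΔ, ← Finset.sum_sub_distrib]
    simp only [Psi, ← ha, ← hb]
    rw [hsub] at hmono
    rw [hsum, sub_div] at key
    linarith
end

section
/- Let ψ̂ : [x_1, x_n] → ℝ be concave with Ψ_n(ψ̂) ≥ Ψ_n(ψ) for every concave ψ : [x_1, x_n] → ℝ, and set x̄ := (1/n) Σ_{i=1}^n x_i. Then ∫_{x_1}^{x_n} exp ψ̂(t) dt = 1, ∫_{x_1}^{x_n} t · exp ψ̂(t) dt = x̄, and ∫_{x_1}^{x_n} (t − x̄)² · exp ψ̂(t) dt ≤ (1/n) Σ_{i=1}^n (x_i − x̄)². -/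
open MeasureTheory

/-- A concave function on `[a,b]` is bounded above. -/
lemma concave_bddAbove {a b : ℝ} {ψ : ℝ → ℝ} (hab : a ≤ b)
    (h : ConcaveOn ℝ (Set.Icc a b) ψ) (t : ℝ) (ht : t ∈ Set.Icc a b) :
    ψ t ≤ 2 * ψ ((a + b) / 2) - min (ψ a) (ψ b) := by
  have h2t : a + b - t ∈ Set.Icc a b := ⟨by linarith [ht.2], by linarith [ht.1]⟩
  have hk := h.2 ht h2t (by norm_num : (0:ℝ) ≤ 1/2) (by norm_num : (0:ℝ) ≤ 1/2)
    (by norm_num)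
  have hmid : (1/2 : ℝ) • t + (1/2 : ℝ) • (a + b - t) = (a + b) / 2 := by
    simp only [smul_eq_mul]; ring
  rw [hmid] at hk
  simp only [smul_eq_mul] at hk
  have hmin : min (ψ a) (ψ b) ≤ ψ (a + b - t) :=
    h.min_le_of_mem_Icc (Set.left_mem_Icc.2 hab) (Set.right_mem_Icc.2 hab) h2t
  linarith

/-- Affine functions are concave. -/
lemma concaveOn_affine {s : Set ℝ} (hs : Convex ℝ s) (f : ℝ → ℝ) (α β : ℝ)
    (hf : ∀ t, f t = α * t + β) : ConcaveOn ℝ s f := by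
  refine ⟨hs, fun x _ y _ p q hp hq hpq => ?_⟩
  simp only [hf, smul_eq_mul]
  apply le_of_eq
  linear_combination β * hpq

/-- A nonnegative multiple of `-(t-k)^2` is concave. -/
lemma concaveOn_negsq {s : Set ℝ} (hs : Convex ℝ s) {c : ℝ} (hc : 0 ≤ c) (k : ℝ) :
    ConcaveOn ℝ s (fun t => c * -((t - k) ^ 2)) := by
  refine ⟨hs, fun x _ y _ p q hp hq hpq => ?_⟩
  simp only [smul_eq_mul]
  have hq' : q = 1 - p := by linarith
  subst hq'
  nlinarith [mul_nonneg (mul_nonneg hc (mul_nonneg hp hq)) (sq_nonneg (x - y))]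

/-- If `f 0 = 0`, `f` is nonnegative on `[0,∞)`, and `f` is differentiable at `0`
with derivative `d`, then `0 ≤ d`. -/
lemma deriv_nonneg_right {f : ℝ → ℝ} {d : ℝ} (hf : HasDerivAt f d 0) (h0 : f 0 = 0)
    (hpos : ∀ c : ℝ, 0 ≤ c → 0 ≤ f c) : 0 ≤ d := by
  have h1 : Filter.Tendsto (slope f 0) (nhdsWithin 0 {(0:ℝ)}ᶜ) (nhds d) :=
    hasDerivAt_iff_tendsto_slope.mp hf
  have h2 : Filter.Tendsto (slope f 0) (nhdsWithin 0 (Set.Ioi 0)) (nhds d) :=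
    h1.mono_left (nhdsWithin_mono 0 (fun c hc => by
      simp only [Set.mem_compl_iff, Set.mem_singleton_iff]
      exact ne_of_gt hc))
  refine ge_of_tendsto h2 ?_
  filter_upwards [self_mem_nhdsWithin] with c hc
  have hc' : (0:ℝ) < c := hc
  rw [slope_def_field]
  rw [div_eq_mul_inv]
  have : f c - f 0 = f c := by rw [h0, sub_zero]
  rw [this]
  have : c - 0 = c := sub_zero c
  rw [this]
  exact mul_nonneg (hpos c hc'.le) (inv_nonneg.2 hc'.le)

lemma key_deriv {a b : ℝ} (hab : a ≤ b) {ψ φ : ℝ → ℝ}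
    (hψm : AEStronglyMeasurable ψ (volume.restrict (Set.Ioc a b)))
    {C : ℝ} (hC : ∀ t ∈ Set.Icc a b, ψ t ≤ C)
    (hφ : Continuous φ) {M : ℝ} (hM : ∀ t ∈ Set.Icc a b, |φ t| ≤ M) :
    Integrable (fun t => Real.exp (ψ t) * φ t) (volume.restrict (Set.Ioc a b)) ∧
    HasDerivAt (fun c => ∫ t in Set.Ioc a b, Real.exp (ψ t + c * φ t))
      (∫ t in Set.Ioc a b, Real.exp (ψ t) * φ t) 0 := by
  have hM0 : 0 ≤ M := le_trans (abs_nonneg _) (hM a ⟨le_refl a, hab⟩)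
  have hμfin : (volume.restrict (Set.Ioc a b)) Set.univ < ⊤ := by
    rw [Measure.restrict_apply_univ]
    exact measure_Ioc_lt_top
  have haein : ∀ᵐ t ∂(volume.restrict (Set.Ioc a b)), t ∈ Set.Ioc a b :=
    ae_restrict_mem measurableSet_Ioc
  have hmeas : ∀ c : ℝ, AEStronglyMeasurable (fun t => Real.exp (ψ t + c * φ t))
      (volume.restrict (Set.Ioc a b)) := fun c =>
    Real.continuous_exp.comp_aestronglyMeasurable
      (hψm.add (continuous_const.mul hφ).aestronglyMeasurable)
  have hconst : Integrable (fun _ : ℝ => M * Real.exp (C + M))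
      (volume.restrict (Set.Ioc a b)) := integrable_const_iff.2 (Or.inr ⟨hμfin⟩)
  have hconst2 : Integrable (fun _ : ℝ => Real.exp C)
      (volume.restrict (Set.Ioc a b)) := integrable_const_iff.2 (Or.inr ⟨hμfin⟩)
  have hint0 : Integrable (fun t => Real.exp (ψ t + 0 * φ t))
      (volume.restrict (Set.Ioc a b)) := by
    apply hconst2.mono' (hmeas 0)
    filter_upwards [haein] with t ht
    have h1 := hC t (Set.Ioc_subset_Icc_self ht)
    rw [Real.norm_eq_abs, Real.abs_exp]
    exact Real.exp_le_exp.2 (by linarith)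
  have H := hasDerivAt_integral_of_dominated_loc_of_deriv_le
    (F := fun (c : ℝ) (t : ℝ) => Real.exp (ψ t + c * φ t))
    (F' := fun (c : ℝ) (t : ℝ) => Real.exp (ψ t + c * φ t) * φ t)
    (x₀ := (0:ℝ)) (s := Metric.ball 0 1) (bound := fun _ => M * Real.exp (C + M))
    (Metric.ball_mem_nhds 0 one_pos) (Filter.Eventually.of_forall hmeas) hint0
    ((hmeas 0).mul hφ.aestronglyMeasurable)
    ?_ hconst ?_
  · obtain ⟨hI, hD⟩ := H
    simp only [zero_mul, add_zero] at hI hD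
    exact ⟨hI, hD⟩
  · -- bound
    filter_upwards [haein] with t ht
    intro c hc
    have htI := Set.Ioc_subset_Icc_self ht
    have h1 := hC t htI
    have h2 := hM t htI
    have hcabs : |c| < 1 := by simpa [Real.dist_eq] using hc
    have h3 : c * φ t ≤ M := by
      calc c * φ t ≤ |c * φ t| := le_abs_self _
        _ = |c| * |φ t| := abs_mul _ _
        _ ≤ 1 * M := mul_le_mul hcabs.le h2 (abs_nonneg _) zero_le_one
        _ = M := one_mul M
    rw [norm_mul, Real.norm_eq_abs, Real.norm_eq_abs, Real.abs_exp]
    calc Real.exp (ψ t + c * φ t) * |φ t|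
        ≤ Real.exp (C + M) * M := by
          apply mul_le_mul (Real.exp_le_exp.2 (by linarith)) h2 (abs_nonneg _)
            (Real.exp_pos _).le
      _ = M * Real.exp (C + M) := mul_comm _ _
  · -- differentiability
    refine Filter.Eventually.of_forall fun t => fun c _ => ?_
    exact ((hasDerivAt_mul_const (φ t)).const_add (ψ t)).exp

lemma key_ineq (n : ℕ) (hn : 2 ≤ n) (x : ℕ → ℝ) (hab : x 0 ≤ x (n - 1))
    (ψh φ : ℝ → ℝ)
    (hψm : AEStronglyMeasurable ψh (volume.restrict (Set.Ioc (x 0) (x (n - 1)))))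
    {C : ℝ} (hC : ∀ t ∈ Set.Icc (x 0) (x (n - 1)), ψh t ≤ C)
    (hφ : Continuous φ)
    (hcon : ∀ c : ℝ, 0 ≤ c →
      ConcaveOn ℝ (Set.Icc (x 0) (x (n - 1))) (fun t => ψh t + c * φ t))
    (hmax : ∀ ψ : ℝ → ℝ, ConcaveOn ℝ (Set.Icc (x 0) (x (n - 1))) ψ →
      Psi n x ψ ≤ Psi n x ψh) :
    (∑ i ∈ Finset.range n, φ (x i)) / n ≤
      ∫ t in Set.Ioc (x 0) (x (n - 1)), Real.exp (ψh t) * φ t := by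
  set a := x 0 with ha
  set b := x (n - 1) with hb
  obtain ⟨M, hM⟩ := isCompact_Icc.exists_bound_of_continuousOn
    (s := Set.Icc a b) hφ.continuousOn
  have hM' : ∀ t ∈ Set.Icc a b, |φ t| ≤ M := fun t ht => by
    simpa [Real.norm_eq_abs] using hM t ht
  obtain ⟨hint, hD⟩ := key_deriv hab hψm hC hφ hM'
  set K := (∑ i ∈ Finset.range n, φ (x i)) / (n : ℝ) with hK
  have hderiv : HasDerivAt (fun c : ℝ =>
      (∫ t in Set.Ioc a b, Real.exp (ψh t + c * φ t))
        - (∫ t in Set.Ioc a b, Real.exp (ψh t)) - c * K)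
      ((∫ t in Set.Ioc a b, Real.exp (ψh t) * φ t) - K) 0 := by
    exact (hD.sub_const _).sub (hasDerivAt_mul_const K)
  have h0 : ((∫ t in Set.Ioc a b, Real.exp (ψh t + 0 * φ t))
      - (∫ t in Set.Ioc a b, Real.exp (ψh t)) - 0 * K) = 0 := by
    simp
  have hpos : ∀ c : ℝ, 0 ≤ c →
      0 ≤ (∫ t in Set.Ioc a b, Real.exp (ψh t + c * φ t))
        - (∫ t in Set.Ioc a b, Real.exp (ψh t)) - c * K := by
    intro c hc
    have H := hmax (fun t => ψh t + c * φ t) (hcon c hc)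
    simp only [Psi] at H
    rw [Finset.sum_add_distrib, ← Finset.mul_sum] at H
    rw [intervalIntegral.integral_of_le hab, intervalIntegral.integral_of_le hab] at H
    rw [hK]
    have hn0 : (n : ℝ) ≠ 0 := by positivity
    rw [add_div] at H
    have : c * ((∑ i ∈ Finset.range n, φ (x i)) / (n : ℝ))
        = c * (∑ i ∈ Finset.range n, φ (x i)) / (n : ℝ) := by ring
    rw [this]
    linarith
  have := deriv_nonneg_right hderiv h0 hpos
  linarith

/-- Corollary 2.3: for the maximizer `ψ̂` of `Ψ_n`, the density `exp ψ̂`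
integrates to one, has mean equal to the sample mean `x̄`, and variance at most the
empirical variance. -/
theorem npmle_moment_identities
    (n : ℕ) (hn : 2 ≤ n) (x : ℕ → ℝ)
    (hx : ∀ i, i + 1 < n → x i < x (i + 1))
    (ψh : ℝ → ℝ)
    (hconc : ConcaveOn ℝ (Set.Icc (x 0) (x (n - 1))) ψh)
    (hmax : ∀ ψ : ℝ → ℝ, ConcaveOn ℝ (Set.Icc (x 0) (x (n - 1))) ψ →
      Psi n x ψ ≤ Psi n x ψh) :
    (∫ t in (x 0)..(x (n - 1)), Real.exp (ψh t)) = 1 ∧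
    (∫ t in (x 0)..(x (n - 1)), t * Real.exp (ψh t)) =
      (∑ i ∈ Finset.range n, x i) / n ∧
    (∫ t in (x 0)..(x (n - 1)),
        (t - (∑ i ∈ Finset.range n, x i) / n) ^ 2 * Real.exp (ψh t)) ≤
      (∑ i ∈ Finset.range n, (x i - (∑ j ∈ Finset.range n, x j) / n) ^ 2) / n := by
  have hn0 : (n : ℝ) ≠ 0 := by positivity
  -- x 0 ≤ x (n-1)
  have hmono : ∀ i, i < n → x 0 ≤ x i := by
    intro i
    induction i with
    | zero => exact fun _ => le_refl _
    | succ k ih =>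
      intro hk
      exact le_trans (ih (Nat.lt_of_succ_lt hk)) (hx k hk).le
  have hab : x 0 ≤ x (n - 1) := hmono (n - 1) (Nat.sub_lt (by omega) one_pos)
  set a := x 0 with ha
  set b := x (n - 1) with hb
  set xbar := (∑ i ∈ Finset.range n, x i) / (n : ℝ) with hxbar
  -- bound
  have hC : ∀ t ∈ Set.Icc a b, ψh t ≤ 2 * ψh ((a + b) / 2) - min (ψh a) (ψh b) :=
    fun t ht => concave_bddAbove hab hconc t ht
  -- measurability
  have hcont : ContinuousOn ψh (Set.Ioo a b) := by
    have := hconc.continuousOn_interior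
    rwa [interior_Icc] at this
  have hres : volume.restrict (Set.Ioc a b) = volume.restrict (Set.Ioo a b) :=
    Measure.restrict_congr_set Ioo_ae_eq_Ioc.symm
  have hψm : AEStronglyMeasurable ψh (volume.restrict (Set.Ioc a b)) := by
    rw [hres]
    exact hcont.aestronglyMeasurable measurableSet_Ioo
  have hcvx : Convex ℝ (Set.Icc a b) := convex_Icc a b
  -- part 1
  have h1a := key_ineq n hn x hab ψh (fun _ => (1:ℝ)) hψm hC continuous_const
    (fun c _ => hconc.add (concaveOn_affine hcvx _ 0 (c * 1) (fun t => by ring))) hmax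
  have h1b := key_ineq n hn x hab ψh (fun _ => (-1:ℝ)) hψm hC continuous_const
    (fun c _ => hconc.add (concaveOn_affine hcvx _ 0 (-c) (fun t => by ring))) hmax
  rw [← ha, ← hb] at h1a h1b
  have hsum1 : (∑ _i ∈ Finset.range n, (1:ℝ)) / (n:ℝ) = 1 := by
    simp [Finset.sum_const, hn0]
  have hsum1' : (∑ _i ∈ Finset.range n, (-1:ℝ)) / (n:ℝ) = -1 := by
    simp [Finset.sum_const, hn0]
  rw [hsum1] at h1a
  rw [hsum1'] at h1b
  simp only [mul_one] at h1a
  simp only [mul_neg_one] at h1b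
  rw [integral_neg] at h1b
  have hI : (∫ t in Set.Ioc a b, Real.exp (ψh t)) = 1 := le_antisymm (by linarith) h1a
  -- integrability facts
  obtain ⟨hint1, _⟩ := key_deriv hab hψm hC (continuous_const : Continuous fun _ : ℝ => (1:ℝ))
    (M := 1) (fun t ht => by norm_num)
  obtain ⟨hint2, _⟩ := key_deriv hab hψm hC (continuous_id.sub continuous_const :
      Continuous fun t : ℝ => t - xbar)
    (M := |a - xbar| + |b - a|)
    (fun t ht => by
      simp only [Pi.sub_apply, id_eq]
      rw [abs_le]
      have h1 : -|a - xbar| ≤ a - xbar := neg_abs_le _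
      have h1' : a - xbar ≤ |a - xbar| := le_abs_self _
      have h2 : 0 ≤ |b - a| := abs_nonneg _
      have h2' : b - a ≤ |b - a| := le_abs_self _
      have h3 := ht.1
      have h4 := ht.2
      constructor <;> linarith)
  simp only [mul_one] at hint1
  -- part 2
  have h2a := key_ineq n hn x hab ψh (fun t => t - xbar) hψm hC
    (continuous_id.sub continuous_const)
    (fun c _ => hconc.add (concaveOn_affine hcvx _ c (-(c * xbar)) (fun t => by ring))) hmax
  have h2b := key_ineq n hn x hab ψh (fun t => -(t - xbar)) hψm hC
    ((continuous_id.sub continuous_const).neg)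
    (fun c _ => hconc.add (concaveOn_affine hcvx _ (-c) (c * xbar) (fun t => by ring))) hmax
  rw [← ha, ← hb] at h2a h2b
  have hsum2 : (∑ i ∈ Finset.range n, (x i - xbar)) / (n:ℝ) = 0 := by
    rw [Finset.sum_sub_distrib, Finset.sum_const, Finset.card_range, hxbar, nsmul_eq_mul]
    field_simp
    ring
  have hsum2' : (∑ i ∈ Finset.range n, -(x i - xbar)) / (n:ℝ) = 0 := by
    rw [Finset.sum_neg_distrib]
    rw [neg_div]
    rw [hsum2]
    exact neg_zero
  rw [hsum2] at h2a
  rw [hsum2'] at h2b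
  simp only [mul_neg] at h2b
  rw [integral_neg] at h2b
  have hJ : (∫ t in Set.Ioc a b, Real.exp (ψh t) * (t - xbar)) = 0 :=
    le_antisymm (by linarith) h2a
  have part2 : (∫ t in Set.Ioc a b, t * Real.exp (ψh t)) = xbar := by
    have heq : ∀ t : ℝ, t * Real.exp (ψh t)
        = Real.exp (ψh t) * (t - xbar) + xbar * Real.exp (ψh t) := fun t => by ring
    calc (∫ t in Set.Ioc a b, t * Real.exp (ψh t))
        = ∫ t in Set.Ioc a b,
            (Real.exp (ψh t) * (t - xbar) + xbar * Real.exp (ψh t)) := by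
          simp only [heq]
      _ = (∫ t in Set.Ioc a b, Real.exp (ψh t) * (t - xbar))
            + ∫ t in Set.Ioc a b, xbar * Real.exp (ψh t) :=
          integral_add hint2 (hint1.const_mul xbar)
      _ = 0 + xbar * ∫ t in Set.Ioc a b, Real.exp (ψh t) := by
          rw [hJ, integral_const_mul]
      _ = xbar := by rw [hI]; ring
  -- part 3
  have h3 := key_ineq n hn x hab ψh (fun t => -((t - xbar) ^ 2)) hψm hC
    (((continuous_id.sub continuous_const).pow 2).neg)
    (fun c hc => hconc.add (concaveOn_negsq hcvx hc xbar)) hmax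
  rw [← ha, ← hb] at h3
  simp only [mul_neg] at h3
  rw [integral_neg] at h3
  have hsum3 : (∑ i ∈ Finset.range n, -((x i - xbar) ^ 2)) / (n:ℝ)
      = -((∑ i ∈ Finset.range n, (x i - xbar) ^ 2) / (n:ℝ)) := by
    rw [Finset.sum_neg_distrib, neg_div]
  rw [hsum3] at h3
  have part3 : (∫ t in Set.Ioc a b, Real.exp (ψh t) * (t - xbar) ^ 2)
      ≤ (∑ i ∈ Finset.range n, (x i - xbar) ^ 2) / (n:ℝ) := by linarith
  refine ⟨?_, ?_, ?_⟩
  · rw [intervalIntegral.integral_of_le hab, hI]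
  · rw [intervalIntegral.integral_of_le hab, part2]
  · rw [intervalIntegral.integral_of_le hab]
    have heq : ∀ t : ℝ, (t - xbar) ^ 2 * Real.exp (ψh t)
        = Real.exp (ψh t) * (t - xbar) ^ 2 := fun t => mul_comm _ _
    simp only [heq]
    exact part3
end

section
/- Let ψ̃ : [x_1, x_n] → ℝ be concave and affine on each interval [x_j, x_{j+1}] for 1 ≤ j < n, define F̃(x) := ∫_{x_1}^{x} exp ψ̃(t) dt for x ∈ [x_1, x_n], and assume F̃(x_n) = 1. Then ψ̃ maximizes Ψ_n over all concave real-valued functions on [x_1, x_n] if and only if for every t ∈ [x_1, x_n] one has ∫_{x_1}^{t} F̃(r) dr ≤ ∫_{x_1}^{t} 𝔽_n(r) dr, with equality whenever t ∈ S(ψ̃). -/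
open MeasureTheory

/-- The empirical distribution function `𝔽_n(r) = (1/n)·#{i < n : x_i ≤ r}`. -/
noncomputable def EDF (n : ℕ) (x : ℕ → ℝ) (r : ℝ) : ℝ :=
  (((Finset.range n).filter fun i => x i ≤ r).card : ℝ) / n

/-- The set of knots of a piecewise affine function `h` on `[a,b]`:
points of `(a,b)` where the left and right derivatives differ, together with `a` and `b`. -/
noncomputable def knots (a b : ℝ) (h : ℝ → ℝ) : Set ℝ :=
  {t | t ∈ Set.Ioo a b ∧
      derivWithin h (Set.Iio t) t ≠ derivWithin h (Set.Ioi t) t} ∪ {a, b}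

open Set

section Helpers

/-- combination: if both adjacent slopes are ≥ c then the overall slope is ≥ c -/
lemma comb_ge {f : ℝ → ℝ} {u v w c : ℝ} (huv : u < v) (hvw : v < w)
    (h1 : c ≤ (f v - f u) / (v - u)) (h2 : c ≤ (f w - f v) / (w - v)) :
    c ≤ (f w - f u) / (w - u) := by
  rw [le_div_iff₀ (by linarith)] at *
  linarith

lemma comb_le {f : ℝ → ℝ} {u v w c : ℝ} (huv : u < v) (hvw : v < w)
    (h1 : (f v - f u) / (v - u) ≤ c) (h2 : (f w - f v) / (w - v) ≤ c) :
    (f w - f u) / (w - u) ≤ c := by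
  rw [div_le_iff₀ (by linarith)] at *
  linarith

lemma concaveOn_congr {s : Set ℝ} {f g : ℝ → ℝ} (hf : ConcaveOn ℝ s f)
    (h : Set.EqOn f g s) : ConcaveOn ℝ s g := by
  refine ⟨hf.1, fun x hx y hy α β hα hβ hαβ => ?_⟩
  have hm : α • x + β • y ∈ s := hf.1 hx hy hα hβ hαβ
  rw [← h hx, ← h hy, ← h hm]
  exact hf.2 hx hy hα hβ hαβ

lemma affine_concaveOn (s : Set ℝ) (hs : Convex ℝ s) (α β : ℝ) :
    ConcaveOn ℝ s (fun t => α + β * t) := by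
  refine ⟨hs, fun x hx y hy p q hp hq hpq => ?_⟩
  simp only [smul_eq_mul]
  have : α = (p+q)*α := by rw [hpq]; ring
  nlinarith [this]

lemma hinge_concaveOn (s : Set ℝ) (hs : Convex ℝ s) (t : ℝ) :
    ConcaveOn ℝ s (fun u => min (u - t) 0) := by
  have h1 : ConcaveOn ℝ s (fun u => (-t) + 1 * u) := affine_concaveOn s hs (-t) 1
  have h2 : ConcaveOn ℝ s (fun _ : ℝ => (0:ℝ)) := concaveOn_const 0 hs
  have := h1.inf h2
  refine concaveOn_congr this ?_
  intro u _
  simp only [Pi.inf_apply]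
  have : -t + 1 * u = u - t := by ring
  rw [this]

/-- gluing continuity on two closed sets -/
lemma continuousOn_union_closed {A B : Set ℝ} {f : ℝ → ℝ} (hA : IsClosed A) (hB : IsClosed B)
    (fa : ContinuousOn f A) (fb : ContinuousOn f B) : ContinuousOn f (A ∪ B) := by
  intro t ht
  have key : ∀ C : Set ℝ, IsClosed C → ContinuousOn f C → ContinuousWithinAt f C t := by
    intro C hC fc
    by_cases h : t ∈ C
    · exact fc t h
    · exact continuousWithinAt_of_notMem_closure (by rwa [hC.closure_eq])
  exact (key A hA fa).union (key B hB fb)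

/-- for continuous g, the primitive has derivative g -/
lemma hasDerivAt_primitive_of_continuous {g : ℝ → ℝ} (hg : Continuous g) (a y : ℝ) :
    HasDerivAt (fun u => ∫ s in a..u, g s) (g y) y :=
  intervalIntegral.integral_hasDerivAt_right (hg.intervalIntegrable a y)
    (hg.stronglyMeasurableAtFilter volume (nhds y)) hg.continuousAt

end Helpers

noncomputable section Setup

structure NPMLE where
  n : ℕ
  hn : 2 ≤ n
  x : ℕ → ℝ
  hx : ∀ i, i + 1 < n → x i < x (i + 1)
  ψt : ℝ → ℝ
  hconc : ConcaveOn ℝ (Set.Icc (x 0) (x (n - 1))) ψt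
  haff : ∀ j, j + 1 < n → ∃ c d : ℝ, ∀ t ∈ Set.Icc (x j) (x (j + 1)), ψt t = c + d * t
  Ft : ℝ → ℝ
  hFt : ∀ y, Ft y = ∫ s in (x 0)..y, Real.exp (ψt s)
  hFt1 : Ft (x (n - 1)) = 1

namespace NPMLE

variable (S : NPMLE)

def m : ℕ := S.n - 1
def a : ℝ := S.x 0
def b : ℝ := S.x S.m

lemma hm1 : 1 ≤ S.m := by have := S.hn; unfold m; omega
lemma hnm : S.n = S.m + 1 := by have := S.hn; unfold m; omega

lemma piece_lt {j : ℕ} (hj : j < S.m) : S.x j < S.x (j+1) :=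
  S.hx j (by have := S.hnm; omega)

lemma xmono : ∀ {i j : ℕ}, i ≤ j → j ≤ S.m → S.x i ≤ S.x j := by
  intro i j hij hjm
  induction j with
  | zero => simp_all
  | succ k ih =>
    rcases Nat.eq_or_lt_of_le hij with h | h
    · rw [h]
    · exact le_trans (ih (by omega) (by omega)) (S.piece_lt (by omega)).le

lemma xsmono : ∀ {i j : ℕ}, i < j → j ≤ S.m → S.x i < S.x j := by
  intro i j hij hjm
  calc S.x i < S.x (i+1) := S.piece_lt (by omega)
  _ ≤ S.x j := S.xmono (by omega) hjm

lemma hab : S.a < S.b := S.xsmono S.hm1 le_rfl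

lemma xmem {k : ℕ} (hk : k ≤ S.m) : S.x k ∈ Set.Icc S.a S.b :=
  ⟨S.xmono (Nat.zero_le _) hk, S.xmono hk le_rfl⟩

/-- chosen affine pieces -/
def c (j : ℕ) : ℝ := if h : j + 1 < S.n then (S.haff j h).choose else 0
def d (j : ℕ) : ℝ := if h : j + 1 < S.n then (S.haff j h).choose_spec.choose else 0

lemma heval {j : ℕ} (hj : j < S.m) {t : ℝ} (ht : t ∈ Set.Icc (S.x j) (S.x (j+1))) :
    S.ψt t = S.c j + S.d j * t := by
  have h : j + 1 < S.n := by have := S.hnm; omega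
  rw [c, d, dif_pos h, dif_pos h]
  exact (S.haff j h).choose_spec.choose_spec t ht

lemma hslope {j : ℕ} (hj : j < S.m) :
    S.ψt (S.x (j+1)) - S.ψt (S.x j) = S.d j * (S.x (j+1) - S.x j) := by
  rw [S.heval hj (Set.right_mem_Icc.2 (S.piece_lt hj).le),
      S.heval hj (Set.left_mem_Icc.2 (S.piece_lt hj).le)]
  ring

lemma piece_subset {j : ℕ} (hj : j < S.m) :
    Set.Icc (S.x j) (S.x (j+1)) ⊆ Set.Icc S.a S.b :=
  Set.Icc_subset_Icc (S.xmono (Nat.zero_le _) (by omega)) (S.xmono (by omega) le_rfl)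

lemma hIccconc : ConcaveOn ℝ (Set.Icc S.a S.b) S.ψt := S.hconc

end NPMLE
end Setup

namespace NPMLE
variable (S : NPMLE)
open Set

lemma exact_slope {j : ℕ} (hj : j < S.m) {u v : ℝ} (hu : u ∈ Set.Icc (S.x j) (S.x (j+1)))
    (hv : v ∈ Set.Icc (S.x j) (S.x (j+1))) (huv : u < v) :
    (S.ψt v - S.ψt u) / (v - u) = S.d j := by
  rw [S.heval hj hu, S.heval hj hv]
  rw [div_eq_iff (sub_ne_zero.2 huv.ne')]
  ring

lemma d_anti {j : ℕ} (hj : j + 1 < S.m) : S.d (j+1) ≤ S.d j := by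
  have h1 : S.x j < S.x (j+1) := S.piece_lt (by omega)
  have h2 : S.x (j+1) < S.x (j+2) := S.piece_lt (by omega)
  have := S.hIccconc.slope_anti_adjacent (S.xmem (by omega : j ≤ S.m))
    (S.xmem (by omega : j + 2 ≤ S.m)) h1 h2
  rwa [S.exact_slope (by omega) (Set.left_mem_Icc.2 h1.le) (Set.right_mem_Icc.2 h1.le) h1,
    S.exact_slope (by omega) (Set.left_mem_Icc.2 h2.le) (Set.right_mem_Icc.2 h2.le) h2] at this

/-- slope into an interior grid point from the left is ≥ the left piece slope -/
lemma slope_ge {j : ℕ} (hj : j + 1 ≤ S.m) {v : ℝ} (hv : v ∈ Set.Icc S.a (S.x (j+1)))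
    (hlt : v < S.x (j+1)) : S.d j ≤ (S.ψt (S.x (j+1)) - S.ψt v) / (S.x (j+1) - v) := by
  have hj' : j < S.m := by omega
  rcases le_or_gt (S.x j) v with h | h
  · exact (S.exact_slope hj' ⟨h, hlt.le⟩ (Set.right_mem_Icc.2 (S.piece_lt hj').le) hlt).ge
  · -- v < x j < x (j+1)
    have hx1 : S.x j < S.x (j+1) := S.piece_lt hj'
    have anti := S.hIccconc.slope_anti_adjacent
      (Set.Icc_subset_Icc_right (S.xmono hj le_rfl) hv) (S.xmem hj) h hx1
    rw [S.exact_slope hj' (Set.left_mem_Icc.2 hx1.le) (Set.right_mem_Icc.2 hx1.le) hx1] at anti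
    exact comb_ge h hx1 anti
      (S.exact_slope hj' (Set.left_mem_Icc.2 hx1.le) (Set.right_mem_Icc.2 hx1.le) hx1).ge

/-- slope out of an interior grid point to the right is ≤ the right piece slope -/
lemma slope_le {j : ℕ} (hj : j + 1 < S.m) {w : ℝ} (hw : w ∈ Set.Icc (S.x (j+1)) S.b)
    (hlt : S.x (j+1) < w) : (S.ψt w - S.ψt (S.x (j+1))) / (w - S.x (j+1)) ≤ S.d (j+1) := by
  rcases le_or_gt w (S.x (j+2)) with h | h
  · exact (S.exact_slope (by omega) (Set.left_mem_Icc.2 (S.piece_lt (by omega)).le)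
      ⟨hlt.le, h⟩ hlt).le
  · have hx2 : S.x (j+1) < S.x (j+2) := S.piece_lt (by omega)
    have anti := S.hIccconc.slope_anti_adjacent (S.xmem (by omega : j + 1 ≤ S.m))
      (Set.Icc_subset_Icc_left (S.xmono (Nat.zero_le _) (by omega : j + 1 ≤ S.m)) hw) hx2 h
    rw [S.exact_slope (by omega) (Set.left_mem_Icc.2 hx2.le)
      (Set.right_mem_Icc.2 hx2.le) hx2] at anti
    exact comb_le hx2 h (by
      rw [S.exact_slope (by omega) (Set.left_mem_Icc.2 hx2.le)
        (Set.right_mem_Icc.2 hx2.le) hx2]) anti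

end NPMLE

namespace NPMLE
variable (S : NPMLE)
open Set

/-- key: subtracting a small hinge at an interior knot preserves concavity -/
lemma perturb_concave {j : ℕ} (hj : j + 1 < S.m) {ε : ℝ} (hε : 0 < ε)
    (hεle : ε ≤ S.d j - S.d (j+1)) :
    ConcaveOn ℝ (Set.Icc S.a S.b) (fun s => S.ψt s - ε * min (s - S.x (j+1)) 0) := by
  set k := S.x (j+1) with hk
  set h : ℝ → ℝ := fun s => S.ψt s - ε * min (s - k) 0 with hh
  have hval_le : ∀ s, s ≤ k → h s = S.ψt s - ε * (s - k) := by
    intro s hs; simp only [hh]; rw [min_eq_left (by linarith)]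
  have hval_ge : ∀ s, k ≤ s → h s = S.ψt s := by
    intro s hs; simp only [hh]; rw [min_eq_right (by linarith)]; ring
  have hkmem : k ∈ Set.Icc S.a S.b := S.xmem (by omega)
  refine concaveOn_of_slope_anti_adjacent (convex_Icc _ _) ?_
  intro X Y Z hX hZ hXY hYZ
  have hYmem : Y ∈ Set.Icc S.a S.b := ⟨hX.1.trans hXY.le, hYZ.le.trans hZ.2⟩
  have hanti : ∀ {u v w : ℝ}, u ∈ Set.Icc S.a S.b → w ∈ Set.Icc S.a S.b → u < v → v < w →
      (S.ψt w - S.ψt v) / (w - v) ≤ (S.ψt v - S.ψt u) / (v - u) := fun hu hw h1 h2 =>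
    S.hIccconc.slope_anti_adjacent hu hw h1 h2
  rcases le_or_gt Z k with hZk | hZk
  · -- all points ≤ k : slopes are ψt-slopes minus ε
    have e1 : (h Y - h X) / (Y - X) = (S.ψt Y - S.ψt X) / (Y - X) - ε := by
      rw [hval_le X (by linarith), hval_le Y (by linarith)]
      field_simp [sub_ne_zero.2 hXY.ne']
      ring
    have e2 : (h Z - h Y) / (Z - Y) = (S.ψt Z - S.ψt Y) / (Z - Y) - ε := by
      rw [hval_le Y (by linarith), hval_le Z hZk]
      field_simp [sub_ne_zero.2 hYZ.ne']
      ring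
    rw [e1, e2]
    have := hanti hX hZ hXY hYZ
    linarith
  rcases le_or_gt k X with hkX | hkX
  · -- all points ≥ k
    have e1 : (h Y - h X) / (Y - X) = (S.ψt Y - S.ψt X) / (Y - X) := by
      rw [hval_ge X hkX, hval_ge Y (by linarith)]
    have e2 : (h Z - h Y) / (Z - Y) = (S.ψt Z - S.ψt Y) / (Z - Y) := by
      rw [hval_ge Y (by linarith), hval_ge Z (by linarith)]
    rw [e1, e2]
    exact hanti hX hZ hXY hYZ
  -- now X < k < Z
  have hsge : ∀ {v : ℝ}, v ∈ Set.Icc S.a S.b → v < k → S.d j ≤ (S.ψt k - S.ψt v) / (k - v) :=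
    fun hv hvk => S.slope_ge (by omega) ⟨hv.1, hvk.le⟩ hvk
  have hsle : ∀ {w : ℝ}, w ∈ Set.Icc S.a S.b → k < w →
      (S.ψt w - S.ψt k) / (w - k) ≤ S.d (j+1) :=
    fun hw hkw => S.slope_le hj ⟨hkw.le, hw.2⟩ hkw
  rcases le_or_gt Y k with hYk | hYk
  · -- X < Y ≤ k < Z
    have e1 : (h Y - h X) / (Y - X) = (S.ψt Y - S.ψt X) / (Y - X) - ε := by
      rw [hval_le X hkX.le, hval_le Y hYk]
      field_simp [sub_ne_zero.2 hXY.ne']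
      ring
    rcases eq_or_lt_of_le hYk with hYeq | hYlt
    · -- Y = k
      have e2 : (h Z - h Y) / (Z - Y) = (S.ψt Z - S.ψt Y) / (Z - Y) := by
        rw [hval_ge Y hYeq.ge, hval_ge Z hZk.le]
      rw [e1, e2]
      have h1 := hsle hZ hZk
      rw [← hYeq] at h1
      have h2 := hsge hX (hYeq ▸ hXY)
      rw [← hYeq] at h2
      linarith
    · -- Y < k < Z
      rw [e1]
      have hbk : (h k - h Y) / (k - Y) = (S.ψt k - S.ψt Y) / (k - Y) - ε := by
        rw [hval_le Y hYlt.le, hval_le k le_rfl]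
        field_simp [sub_ne_zero.2 hYlt.ne']
        ring
      have hkZ : (h Z - h k) / (Z - k) = (S.ψt Z - S.ψt k) / (Z - k) := by
        rw [hval_ge k le_rfl, hval_ge Z hZk.le]
      refine comb_le hYlt hZk ?_ ?_
      · rw [hbk]
        have h3 : (S.ψt k - S.ψt Y) / (k - Y) ≤ (S.ψt Y - S.ψt X) / (Y - X) :=
          hanti hX hkmem hXY hYlt
        linarith
      · rw [hkZ]
        have h1 : (S.ψt Z - S.ψt k) / (Z - k) ≤ S.d (j+1) := hsle hZ hZk
        have h2 : S.d j ≤ (S.ψt k - S.ψt Y) / (k - Y) := hsge hYmem hYlt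
        have h3 : (S.ψt k - S.ψt Y) / (k - Y) ≤ (S.ψt Y - S.ψt X) / (Y - X) :=
          hanti hX hkmem hXY hYlt
        linarith
  · -- X < k < Y < Z
    have e2 : (h Z - h Y) / (Z - Y) = (S.ψt Z - S.ψt Y) / (Z - Y) := by
      rw [hval_ge Y hYk.le, hval_ge Z (by linarith)]
    rw [e2]
    have hXk : (h k - h X) / (k - X) = (S.ψt k - S.ψt X) / (k - X) - ε := by
      rw [hval_le X hkX.le, hval_le k le_rfl]
      field_simp [sub_ne_zero.2 hkX.ne']
      ring
    have hkY : (h Y - h k) / (Y - k) = (S.ψt Y - S.ψt k) / (Y - k) := by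
      rw [hval_ge k le_rfl, hval_ge Y hYk.le]
    have hZY : (S.ψt Z - S.ψt Y) / (Z - Y) ≤ (S.ψt Y - S.ψt k) / (Y - k) :=
      hanti hkmem hZ hYk hYZ
    refine comb_ge hkX hYk ?_ ?_
    · rw [hXk]
      have h1 : S.d j ≤ (S.ψt k - S.ψt X) / (k - X) := hsge hX hkX
      have h2 : (S.ψt Y - S.ψt k) / (Y - k) ≤ S.d (j+1) := hsle hYmem hYk
      linarith
    · rw [hkY]
      exact hZY

end NPMLE

namespace NPMLE
variable (S : NPMLE)
open Set Filter

lemma locate {t : ℝ} (ht : t ∈ Set.Icc S.a S.b) :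
    ∃ j, j < S.m ∧ t ∈ Set.Icc (S.x j) (S.x (j+1)) := by
  obtain ⟨h1, h2⟩ := ht
  have key : ∀ k, 1 ≤ k → k ≤ S.m → t ≤ S.x k →
      ∃ j, j < k ∧ t ∈ Set.Icc (S.x j) (S.x (j+1)) := by
    intro k
    induction k with
    | zero => omega
    | succ p ih =>
      intro _ hpm hle
      rcases le_or_gt t (S.x p) with h | h
      · rcases Nat.eq_zero_or_pos p with rfl | hp
        · exact ⟨0, by omega, ⟨h1, h.trans (S.xmono (by omega) (by omega))⟩⟩
        · obtain ⟨j, hj, hmem⟩ := ih hp (by omega) h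
          exact ⟨j, by omega, hmem⟩
      · exact ⟨p, by omega, ⟨h.le, hle⟩⟩
  exact key S.m S.hm1 le_rfl h2

/-- affine function has the obvious derivative within any set -/
lemma hasDerivWithinAt_affine (c d t : ℝ) (s : Set ℝ) :
    HasDerivWithinAt (fun u => c + d * u) d s t := by
  simpa using ((hasDerivAt_id t).const_mul d).const_add c |>.hasDerivWithinAt

/-- ψt agrees with an affine map near points of a piece, from the left of x (j+1) -/
lemma derivWithin_left {j : ℕ} (hj : j < S.m) :
    derivWithin S.ψt (Set.Iio (S.x (j+1))) (S.x (j+1)) = S.d j := by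
  have hlt : S.x j < S.x (j+1) := S.piece_lt hj
  have hev : S.ψt =ᶠ[nhdsWithin (S.x (j+1)) (Set.Iio (S.x (j+1)))]
      (fun u => S.c j + S.d j * u) := by
    filter_upwards [self_mem_nhdsWithin,
      mem_nhdsWithin_of_mem_nhds (Ioi_mem_nhds hlt)] with t ht1 ht2
    exact S.heval hj ⟨le_of_lt ht2, le_of_lt ht1⟩
  have H : HasDerivWithinAt S.ψt (S.d j) (Set.Iio (S.x (j+1))) (S.x (j+1)) :=
    (hasDerivWithinAt_affine (S.c j) (S.d j) _ _).congr_of_eventuallyEq hev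
      (S.heval hj (Set.right_mem_Icc.2 hlt.le))
  exact H.derivWithin (uniqueDiffWithinAt_Iio _)

lemma derivWithin_right {j : ℕ} (hj : j < S.m) :
    derivWithin S.ψt (Set.Ioi (S.x j)) (S.x j) = S.d j := by
  have hlt : S.x j < S.x (j+1) := S.piece_lt hj
  have hev : S.ψt =ᶠ[nhdsWithin (S.x j) (Set.Ioi (S.x j))]
      (fun u => S.c j + S.d j * u) := by
    filter_upwards [self_mem_nhdsWithin,
      mem_nhdsWithin_of_mem_nhds (Iio_mem_nhds hlt)] with t ht1 ht2
    exact S.heval hj ⟨le_of_lt ht1, le_of_lt ht2⟩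
  have H : HasDerivWithinAt S.ψt (S.d j) (Set.Ioi (S.x j)) (S.x j) :=
    (hasDerivWithinAt_affine (S.c j) (S.d j) _ _).congr_of_eventuallyEq hev
      (S.heval hj (Set.left_mem_Icc.2 hlt.le))
  exact H.derivWithin (uniqueDiffWithinAt_Ioi _)

lemma derivWithin_interior {j : ℕ} (hj : j < S.m) {t : ℝ}
    (ht : t ∈ Set.Ioo (S.x j) (S.x (j+1))) :
    derivWithin S.ψt (Set.Iio t) t = S.d j ∧ derivWithin S.ψt (Set.Ioi t) t = S.d j := by
  have hev1 : S.ψt =ᶠ[nhdsWithin t (Set.Iio t)] (fun u => S.c j + S.d j * u) := by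
    filter_upwards [self_mem_nhdsWithin, mem_nhdsWithin_of_mem_nhds (Ioi_mem_nhds ht.1)]
      with u hu1 hu2
    exact S.heval hj ⟨hu2.le, hu1.le.trans ht.2.le⟩
  have hev2 : S.ψt =ᶠ[nhdsWithin t (Set.Ioi t)] (fun u => S.c j + S.d j * u) := by
    filter_upwards [self_mem_nhdsWithin, mem_nhdsWithin_of_mem_nhds (Iio_mem_nhds ht.2)]
      with u hu1 hu2
    exact S.heval hj ⟨ht.1.le.trans hu1.le, hu2.le⟩
  have hmem := S.heval hj (Set.mem_Icc_of_Ioo ht)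
  constructor
  · exact ((hasDerivWithinAt_affine (S.c j) (S.d j) t _).congr_of_eventuallyEq hev1
      hmem).derivWithin (uniqueDiffWithinAt_Iio _)
  · exact ((hasDerivWithinAt_affine (S.c j) (S.d j) t _).congr_of_eventuallyEq hev2
      hmem).derivWithin (uniqueDiffWithinAt_Ioi _)

end NPMLE

namespace NPMLE
variable (S : NPMLE)
open Set

lemma knot_grid {t : ℝ} (ht : t ∈ Set.Ioo S.a S.b)
    (hne : derivWithin S.ψt (Set.Iio t) t ≠ derivWithin S.ψt (Set.Ioi t) t) :
    ∃ j, j + 1 < S.m ∧ t = S.x (j+1) ∧ S.d (j+1) < S.d j := by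
  obtain ⟨j, hj, hmem⟩ := S.locate (Set.Ioo_subset_Icc_self ht)
  rcases eq_or_lt_of_le hmem.1 with heq1 | hlt1
  · -- t = x j
    have hj1 : 1 ≤ j := by
      by_contra hc
      push_neg at hc
      interval_cases j
      exact absurd heq1.symm (ne_of_gt ht.1)
    obtain ⟨i, rfl⟩ : ∃ i, j = i + 1 := ⟨j - 1, by omega⟩
    have him : i + 1 < S.m := by omega
    refine ⟨i, him, heq1.symm, ?_⟩
    have hL := S.derivWithin_left (show i < S.m by omega)
    have hR := S.derivWithin_right (show i + 1 < S.m by omega)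
    rw [← heq1] at hne
    have : S.d i ≠ S.d (i+1) := by rw [← hL, ← hR]; exact hne
    exact lt_of_le_of_ne (S.d_anti him) (this ∘ Eq.symm)
  · rcases eq_or_lt_of_le hmem.2 with heq2 | hlt2
    · -- t = x (j+1)
      have hjm : j + 1 < S.m := by
        rcases eq_or_lt_of_le (show j + 1 ≤ S.m by omega) with h | h
        · rw [heq2, h] at ht
          exact absurd ht.2 (lt_irrefl _)
        · exact h
      refine ⟨j, hjm, heq2, ?_⟩
      have hL := S.derivWithin_left hj
      have hR := S.derivWithin_right hjm
      rw [heq2] at hne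
      have : S.d j ≠ S.d (j+1) := by rw [← hL, ← hR]; exact hne
      exact lt_of_le_of_ne (S.d_anti hjm) (Ne.symm this)
    · -- interior of piece: contradiction
      obtain ⟨hL, hR⟩ := S.derivWithin_interior hj ⟨hlt1, hlt2⟩
      exact absurd (hL.trans hR.symm) hne

/-- conversely, a genuine slope change at an interior grid point is a knot -/
lemma grid_knot {j : ℕ} (hj : j + 1 < S.m) (hne : S.d j ≠ S.d (j+1)) :
    S.x (j+1) ∈ Set.Ioo S.a S.b ∧
      derivWithin S.ψt (Set.Iio (S.x (j+1))) (S.x (j+1)) ≠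
        derivWithin S.ψt (Set.Ioi (S.x (j+1))) (S.x (j+1)) := by
  refine ⟨⟨S.xsmono (by omega) (by omega), S.xsmono (by omega) le_rfl⟩, ?_⟩
  rw [S.derivWithin_left (by omega : j < S.m), S.derivWithin_right hj]
  exact hne

end NPMLE

namespace NPMLE
variable (S : NPMLE)
open Set intervalIntegral

lemma cont_ψt : ContinuousOn S.ψt (Set.Icc S.a S.b) := by
  have key : ∀ k, 1 ≤ k → k ≤ S.m → ContinuousOn S.ψt (Set.Icc S.a (S.x k)) := by
    intro k
    induction k with
    | zero => omega
    | succ p ih =>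
      intro _ hpm
      have hp1 : ContinuousOn S.ψt (Set.Icc (S.x p) (S.x (p+1))) := by
        refine ContinuousOn.congr (f := fun t => S.c p + S.d p * t) ?_ ?_
        · exact (continuous_const.add (continuous_const.mul continuous_id)).continuousOn
        · exact fun t htm => S.heval (by omega) htm
      rcases Nat.eq_zero_or_pos p with rfl | hp
      · simpa [a] using hp1
      · have := continuousOn_union_closed isClosed_Icc isClosed_Icc (ih hp (by omega)) hp1
        rwa [Set.Icc_union_Icc_eq_Icc (a := S.a) (b := S.x p) (c := S.x (p+1))
          (S.xmono (Nat.zero_le _) (by omega)) (S.piece_lt (by omega)).le] at this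
  exact key S.m S.hm1 le_rfl

/-- clamped version of ψt, continuous on all of ℝ -/
noncomputable def ψe : ℝ → ℝ := fun t => S.ψt (max S.a (min t S.b))

lemma ψe_eq {t : ℝ} (ht : t ∈ Set.Icc S.a S.b) : S.ψe t = S.ψt t := by
  unfold ψe
  rw [min_eq_left ht.2, max_eq_right ht.1]

lemma cont_ψe : Continuous S.ψe := by
  refine S.cont_ψt.comp_continuous
    (continuous_const.max (continuous_id.min continuous_const)) fun t => ?_
  exact ⟨le_max_left _ _, max_le S.hab.le (min_le_right _ _)⟩

lemma cont_expψe : Continuous (fun s => Real.exp (S.ψe s)) :=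
  Real.continuous_exp.comp S.cont_ψe

noncomputable def Fe : ℝ → ℝ := fun y => ∫ s in S.a..y, Real.exp (S.ψe s)

lemma Fe_deriv (y : ℝ) : HasDerivAt S.Fe (Real.exp (S.ψe y)) y :=
  hasDerivAt_primitive_of_continuous S.cont_expψe S.a y

lemma cont_Fe : Continuous S.Fe := by
  have : Differentiable ℝ S.Fe := fun y => (S.Fe_deriv y).differentiableAt
  exact this.continuous

lemma Fe_a : S.Fe S.a = 0 := integral_same

lemma Ft_eq {t : ℝ} (ht : t ∈ Set.Icc S.a S.b) : S.Ft t = S.Fe t := by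
  rw [S.hFt t]
  refine intervalIntegral.integral_congr fun s hs => ?_
  rw [Set.uIcc_of_le (show S.x 0 ≤ t from ht.1)] at hs
  rw [S.ψe_eq ⟨hs.1, hs.2.trans ht.2⟩]

lemma Fe_b : S.Fe S.b = 1 := by
  rw [← S.Ft_eq (Set.right_mem_Icc.2 S.hab.le)]
  exact S.hFt1

lemma int_expψt : (∫ s in S.a..S.b, Real.exp (S.ψt s)) = 1 := by
  have h := S.hFt (S.x (S.n - 1))
  rw [S.hFt1] at h
  exact h.symm

lemma Psi_ψt : Psi S.n S.x S.ψt = (∑ i ∈ Finset.range S.n, S.ψt (S.x i)) / S.n - 1 := by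
  unfold Psi
  have hb : S.x (S.n - 1) = S.b := rfl
  rw [hb]
  rw [show (S.x 0 : ℝ) = S.a from rfl]
  rw [S.int_expψt]

end NPMLE

section EDFLemmas
open Set MeasureTheory

lemma ind_mono (c : ℝ) : Monotone (fun r => if c ≤ r then (1:ℝ) else 0) := by
  intro r r' h
  dsimp only
  by_cases hc : c ≤ r
  · rw [if_pos hc, if_pos (hc.trans h)]
  · rw [if_neg hc]
    positivity

lemma ind_intint (c u v : ℝ) :
    IntervalIntegrable (fun r => if c ≤ r then (1:ℝ) else 0) volume u v :=
  ((ind_mono c).monotoneOn _).intervalIntegrable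

lemma int_ind {a c t : ℝ} (hc : a ≤ c) (hat : a ≤ t) :
    (∫ r in a..t, if c ≤ r then (1:ℝ) else 0) = max (t - c) 0 := by
  have hind : ∀ r : ℝ, (if c ≤ r then (1:ℝ) else 0) = Set.indicator (Set.Ici c) (fun _ => 1) r := by
    intro r
    rw [Set.indicator_apply]
    simp [Set.mem_Ici]
  rw [intervalIntegral.integral_congr (g := Set.indicator (Set.Ici c) (fun _ => 1))
      (fun r _ => hind r)]
  rw [intervalIntegral.integral_of_le hat]
  rw [MeasureTheory.setIntegral_indicator measurableSet_Ici]
  rw [MeasureTheory.setIntegral_const]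
  rcases le_or_gt t c with h | h
  · have hμ : volume (Set.Ioc a t ∩ Set.Ici c) = 0 := by
      refine measure_mono_null (fun r hr => ?_) (measure_singleton c)
      have h1 : r ≤ t := hr.1.2
      have h2 : c ≤ r := hr.2
      have : r = c := le_antisymm (h1.trans h) h2
      simpa [Set.mem_singleton_iff]
    rw [measureReal_def, hμ]
    simp [max_eq_right (by linarith : t - c ≤ 0)]
  · have hμ : volume (Set.Ioc a t ∩ Set.Ici c) = ENNReal.ofReal (t - c) := by
      apply le_antisymm
      · calc volume (Set.Ioc a t ∩ Set.Ici c) ≤ volume (Set.Icc c t) := by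
              refine measure_mono fun r hr => ⟨hr.2, hr.1.2⟩
        _ = ENNReal.ofReal (t - c) := Real.volume_Icc
      · calc ENNReal.ofReal (t - c) = volume (Set.Ioc c t) := Real.volume_Ioc.symm
        _ ≤ volume (Set.Ioc a t ∩ Set.Ici c) := by
              refine measure_mono fun r hr => ⟨⟨lt_of_le_of_lt hc hr.1, hr.2⟩, hr.1.le⟩
    rw [measureReal_def, hμ]
    rw [ENNReal.toReal_ofReal (by linarith : (0:ℝ) ≤ t - c)]
    simp [max_eq_left (by linarith : (0:ℝ) ≤ t - c)]

lemma EDF_eq_sum (n : ℕ) (x : ℕ → ℝ) (r : ℝ) :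
    EDF n x r = (∑ i ∈ Finset.range n, if x i ≤ r then (1:ℝ) else 0) / n := by
  unfold EDF
  congr 1
  rw [Finset.card_filter, Nat.cast_sum]
  exact Finset.sum_congr rfl fun i _ => by split <;> simp

lemma EDF_intint (n : ℕ) (x : ℕ → ℝ) (u v : ℝ) :
    IntervalIntegrable (EDF n x) volume u v := by
  have : EDF n x = fun r => (∑ i ∈ Finset.range n, if x i ≤ r then (1:ℝ) else 0) / n := by
    funext r
    exact EDF_eq_sum n x r
  rw [this]
  apply IntervalIntegrable.div_const
  have heq : (fun r => ∑ i ∈ Finset.range n, if x i ≤ r then (1:ℝ) else 0) =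
      ∑ i ∈ Finset.range n, (fun r => if x i ≤ r then (1:ℝ) else 0) := by
    funext r
    rw [Finset.sum_apply]
  rw [heq]
  exact IntervalIntegrable.sum _ fun i _ => ind_intint (x i) u v

end EDFLemmas

namespace NPMLE
variable (S : NPMLE)
open Set MeasureTheory

lemma Q_eq {t : ℝ} (ht : t ∈ Set.Icc S.a S.b) :
    (∫ r in S.a..t, EDF S.n S.x r) =
      (∑ i ∈ Finset.range S.n, max (t - S.x i) 0) / S.n := by
  rw [intervalIntegral.integral_congr (fun r _ => EDF_eq_sum S.n S.x r)]
  rw [intervalIntegral.integral_div]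
  congr 1
  rw [intervalIntegral.integral_finset_sum (fun i _ => ind_intint (S.x i) S.a t)]
  refine Finset.sum_congr rfl fun i hi => ?_
  have hi' : i < S.n := Finset.mem_range.1 hi
  exact int_ind (S.xmono (Nat.zero_le _) (by have := S.hnm; omega)) ht.1

lemma Q_piece {j : ℕ} (hj : j < S.m) :
    (∫ r in (S.x j)..(S.x (j+1)), EDF S.n S.x r) = ((j+1 : ℝ) / S.n) * (S.x (j+1) - S.x j) := by
  have h1 : (∫ r in S.a..(S.x (j+1)), EDF S.n S.x r) - (∫ r in S.a..(S.x j), EDF S.n S.x r)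
      = ∫ r in (S.x j)..(S.x (j+1)), EDF S.n S.x r :=
    intervalIntegral.integral_interval_sub_left (EDF_intint _ _ _ _) (EDF_intint _ _ _ _)
  rw [← h1, S.Q_eq (S.xmem (by omega)), S.Q_eq (S.xmem (by omega))]
  rw [div_sub_div_same]
  rw [← Finset.sum_sub_distrib]
  have hterm : ∀ i ∈ Finset.range S.n,
      max (S.x (j+1) - S.x i) 0 - max (S.x j - S.x i) 0 =
        if i ≤ j then S.x (j+1) - S.x j else 0 := by
    intro i hi
    have hi' : i < S.n := Finset.mem_range.1 hi
    rcases le_or_gt i j with h | h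
    · have h1 : S.x i ≤ S.x j := S.xmono h (by omega)
      have h2 : S.x i ≤ S.x (j+1) := S.xmono (by omega) (by omega)
      rw [if_pos h, max_eq_left (by linarith), max_eq_left (by linarith)]
      ring
    · have h1 : S.x (j+1) ≤ S.x i := S.xmono h (by have := S.hnm; omega)
      have h2 : S.x j ≤ S.x i := S.xmono (by omega) (by have := S.hnm; omega)
      rw [if_neg (by omega), max_eq_right (by linarith), max_eq_right (by linarith)]
      ring
  rw [Finset.sum_congr rfl hterm]
  rw [← Finset.sum_filter]
  have hfil : (Finset.range S.n).filter (fun i => i ≤ j) = Finset.range (j+1) := by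
    ext i
    simp only [Finset.mem_filter, Finset.mem_range]
    constructor
    · rintro ⟨_, h⟩; omega
    · intro h
      have := S.hnm
      constructor <;> omega
  rw [hfil]
  rw [Finset.sum_const, Finset.card_range]
  push_cast
  ring

end NPMLE

namespace NPMLE
variable (S : NPMLE)
open Set MeasureTheory

lemma P_aux (t : ℝ) :
    (∫ r in S.a..t, S.Fe r) = t * S.Fe t - ∫ s in S.a..t, s * Real.exp (S.ψe s) := by
  set g : ℝ → ℝ := fun u =>
    (∫ r in S.a..u, S.Fe r) - u * S.Fe u + ∫ s in S.a..u, s * Real.exp (S.ψe s) with hg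
  have hder : ∀ u, HasDerivAt g 0 u := by
    intro u
    have h1 : HasDerivAt (fun u => ∫ r in S.a..u, S.Fe r) (S.Fe u) u :=
      hasDerivAt_primitive_of_continuous S.cont_Fe S.a u
    have h2 : HasDerivAt (fun u => u * S.Fe u) (1 * S.Fe u + u * Real.exp (S.ψe u)) u :=
      (hasDerivAt_id u).mul (S.Fe_deriv u)
    have h3 : HasDerivAt (fun u => ∫ s in S.a..u, s * Real.exp (S.ψe s))
        (u * Real.exp (S.ψe u)) u :=
      hasDerivAt_primitive_of_continuous (continuous_id.mul S.cont_expψe) S.a u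
    have := (h1.sub h2).add h3
    exact this.congr_deriv (by ring)
  have hconst : g t = g S.a :=
    is_const_of_deriv_eq_zero (fun v => (hder v).differentiableAt)
      (fun v => (hder v).deriv) t S.a
  have hga : g S.a = 0 := by
    simp only [hg, intervalIntegral.integral_same, S.Fe_a]
    ring
  rw [hga] at hconst
  simp only [hg] at hconst
  linarith [hconst]

lemma P_eq {t : ℝ} (ht : t ∈ Set.Icc S.a S.b) :
    (∫ r in S.a..t, S.Ft r) = t * S.Fe t - ∫ s in S.a..t, s * Real.exp (S.ψe s) := by
  rw [← S.P_aux t]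
  refine intervalIntegral.integral_congr fun r hr => ?_
  rw [Set.uIcc_of_le ht.1] at hr
  exact S.Ft_eq ⟨hr.1, hr.2.trans ht.2⟩

lemma hinge_int {t : ℝ} (ht : t ∈ Set.Icc S.a S.b) :
    (∫ s in S.a..S.b, Real.exp (S.ψe s) * min (s - t) 0) = -(∫ r in S.a..t, S.Ft r) := by
  have hcont : Continuous fun s => Real.exp (S.ψe s) * min (s - t) 0 :=
    S.cont_expψe.mul ((continuous_id.sub continuous_const).min continuous_const)
  have hsplit := intervalIntegral.integral_add_adjacent_intervals (μ := volume)
    (hcont.intervalIntegrable S.a t) (hcont.intervalIntegrable t S.b)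
  have h2 : (∫ s in t..S.b, Real.exp (S.ψe s) * min (s - t) 0) = 0 := by
    rw [intervalIntegral.integral_congr (g := fun _ => (0:ℝ)) fun s hs => ?_]
    · exact intervalIntegral.integral_zero
    · rw [Set.uIcc_of_le ht.2] at hs
      rw [min_eq_right (by linarith [hs.1] : (0:ℝ) ≤ s - t)]
      ring
  have hc1 : Continuous (fun s : ℝ => s * Real.exp (S.ψe s)) := continuous_id.mul S.cont_expψe
  have hc2 : Continuous (fun s : ℝ => t * Real.exp (S.ψe s)) := continuous_const.mul S.cont_expψe
  have h1 : (∫ s in S.a..t, Real.exp (S.ψe s) * min (s - t) 0)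
      = (∫ s in S.a..t, s * Real.exp (S.ψe s)) - t * S.Fe t := by
    rw [intervalIntegral.integral_congr
      (g := fun s => s * Real.exp (S.ψe s) - t * Real.exp (S.ψe s)) fun s hs => ?_]
    · rw [intervalIntegral.integral_sub (hc1.intervalIntegrable _ _) (hc2.intervalIntegrable _ _)]
      rw [intervalIntegral.integral_const_mul]
      rfl
    · rw [Set.uIcc_of_le ht.1] at hs
      rw [min_eq_left (by linarith [hs.2] : s - t ≤ (0:ℝ))]
      ring
  rw [← hsplit, h1, h2, S.P_eq ht]
  ring

lemma hinge_sum (t : ℝ) :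
    (∑ i ∈ Finset.range S.n, min (S.x i - t) 0) =
      -∑ i ∈ Finset.range S.n, max (t - S.x i) 0 := by
  rw [← Finset.sum_neg_distrib]
  refine Finset.sum_congr rfl fun i _ => ?_
  rcases le_total (S.x i) t with h | h
  · rw [min_eq_left (by linarith), max_eq_left (by linarith)]
    ring
  · rw [min_eq_right (by linarith), max_eq_right (by linarith)]
    ring

end NPMLE

namespace NPMLE
variable (S : NPMLE)
open Set MeasureTheory

lemma dir_le
    (hmax : ∀ ψ : ℝ → ℝ, ConcaveOn ℝ (Set.Icc (S.x 0) (S.x (S.n - 1))) ψ →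
      Psi S.n S.x ψ ≤ Psi S.n S.x S.ψt)
    (v : ℝ → ℝ) (hv : Continuous v) {ε₀ : ℝ} (hε₀ : 0 < ε₀)
    (hcc : ∀ ε : ℝ, 0 < ε → ε ≤ ε₀ → ConcaveOn ℝ (Set.Icc S.a S.b) (fun s => S.ψt s + ε * v s)) :
    (∑ i ∈ Finset.range S.n, v (S.x i)) / S.n ≤ ∫ s in S.a..S.b, Real.exp (S.ψe s) * v s := by
  obtain ⟨M, hM⟩ := (isCompact_Icc (a := S.a) (b := S.b)).exists_bound_of_continuousOn
    hv.continuousOn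
  have hM0 : 0 ≤ M := (norm_nonneg (v S.a)).trans (hM S.a ⟨le_rfl, S.hab.le⟩)
  set A := (∑ i ∈ Finset.range S.n, v (S.x i)) / S.n with hA
  set B := ∫ s in S.a..S.b, Real.exp (S.ψe s) * v s with hB
  have key : ∀ ε : ℝ, 0 < ε → ε ≤ ε₀ → ε * M ≤ 1 → A ≤ B + ε * M^2 := by
    intro ε hε hεε₀ hεM
    have hψ' := hmax (fun s => S.ψt s + ε * v s) (hcc ε hε hεε₀)
    rw [S.Psi_ψt] at hψ'
    unfold Psi at hψ'
    have hsum : (∑ i ∈ Finset.range S.n, (S.ψt (S.x i) + ε * v (S.x i)))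
        = (∑ i ∈ Finset.range S.n, S.ψt (S.x i)) + ε * (∑ i ∈ Finset.range S.n, v (S.x i)) := by
      rw [Finset.sum_add_distrib, Finset.mul_sum]
    rw [hsum] at hψ'
    have hintc : (∫ s in (S.x 0)..(S.x (S.n-1)), Real.exp (S.ψt s + ε * v s))
        = ∫ s in S.a..S.b, Real.exp (S.ψe s + ε * v s) := by
      refine intervalIntegral.integral_congr fun s hs => ?_
      rw [Set.uIcc_of_le (show S.x 0 ≤ S.x (S.n - 1) from S.hab.le)] at hs
      rw [S.ψe_eq hs]
    rw [hintc] at hψ'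
    have hn0 : (0:ℝ) < S.n := by
      have := S.hn
      positivity
    -- from hψ' : (Σψt + ε Σv)/n - ∫ exp(ψe+εv) ≤ Σψt/n - 1
    have step1 : ε * (∑ i ∈ Finset.range S.n, v (S.x i)) / S.n ≤
        (∫ s in S.a..S.b, Real.exp (S.ψe s + ε * v s)) - 1 := by
      have := hψ'
      rw [add_div] at this
      linarith
    have hce : Continuous fun s => Real.exp (S.ψe s + ε * v s) :=
      Real.continuous_exp.comp (S.cont_ψe.add (continuous_const.mul hv))
    have hsub : (∫ s in S.a..S.b, Real.exp (S.ψe s + ε * v s)) - 1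
        = ∫ s in S.a..S.b, (Real.exp (S.ψe s + ε * v s) - Real.exp (S.ψe s)) := by
      rw [intervalIntegral.integral_sub (hce.intervalIntegrable _ _)
        (S.cont_expψe.intervalIntegrable _ _)]
      have : (∫ s in S.a..S.b, Real.exp (S.ψe s)) = S.Fe S.b := rfl
      rw [this, S.Fe_b]
    have hptw : ∀ s ∈ Set.Icc S.a S.b,
        Real.exp (S.ψe s + ε * v s) - Real.exp (S.ψe s) ≤
          ε * (Real.exp (S.ψe s) * v s) + ε^2 * M^2 * Real.exp (S.ψe s) := by
      intro s hs
      have hvM : |v s| ≤ M := by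
        have := hM s hs
        rwa [Real.norm_eq_abs] at this
      have huabs : |ε * v s| ≤ 1 := by
        rw [abs_mul, abs_of_pos hε]
        calc ε * |v s| ≤ ε * M := by nlinarith [abs_nonneg (v s)]
        _ ≤ 1 := hεM
      have hexp := Real.abs_exp_sub_one_sub_id_le huabs
      have hexp' : Real.exp (ε * v s) ≤ 1 + ε * v s + (ε * v s)^2 := by
        have := abs_le.1 hexp
        linarith [this.2]
      have hsq : (ε * v s)^2 ≤ ε^2 * M^2 := by
        rw [mul_pow]
        have : (v s)^2 ≤ M^2 := sq_le_sq' (by linarith [abs_le.1 hvM]) (abs_le.1 hvM).2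
        nlinarith [sq_nonneg ε]
      have hpos : (0:ℝ) < Real.exp (S.ψe s) := Real.exp_pos _
      have : Real.exp (S.ψe s + ε * v s) = Real.exp (S.ψe s) * Real.exp (ε * v s) := by
        rw [← Real.exp_add]
      rw [this]
      nlinarith [hpos, hexp', hsq]
    have hmono : (∫ s in S.a..S.b, (Real.exp (S.ψe s + ε * v s) - Real.exp (S.ψe s)))
        ≤ ∫ s in S.a..S.b, (ε * (Real.exp (S.ψe s) * v s) + ε^2 * M^2 * Real.exp (S.ψe s)) := by
      refine intervalIntegral.integral_mono_on S.hab.le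
        ((hce.sub S.cont_expψe).intervalIntegrable _ _)
        (((continuous_const.mul (S.cont_expψe.mul hv)).add
          (continuous_const.mul S.cont_expψe)).intervalIntegrable _ _) hptw
    have hrhs : (∫ s in S.a..S.b, (ε * (Real.exp (S.ψe s) * v s) + ε^2 * M^2 * Real.exp (S.ψe s)))
        = ε * B + ε^2 * M^2 := by
      rw [intervalIntegral.integral_add (f := fun s => ε * (Real.exp (S.ψe s) * v s))
          (g := fun s => ε^2 * M^2 * Real.exp (S.ψe s)) ((continuous_const.mul (S.cont_expψe.mul hv)).intervalIntegrable _ _)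
        ((continuous_const.mul S.cont_expψe).intervalIntegrable _ _)]
      rw [intervalIntegral.integral_const_mul, intervalIntegral.integral_const_mul]
      have : (∫ s in S.a..S.b, Real.exp (S.ψe s)) = S.Fe S.b := rfl
      rw [this, S.Fe_b, hB]
      ring
    have : ε * (∑ i ∈ Finset.range S.n, v (S.x i)) / S.n ≤ ε * B + ε^2 * M^2 := by
      calc ε * (∑ i ∈ Finset.range S.n, v (S.x i)) / S.n
          ≤ (∫ s in S.a..S.b, Real.exp (S.ψe s + ε * v s)) - 1 := step1
        _ = _ := hsub
        _ ≤ _ := hmono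
        _ = ε * B + ε^2 * M^2 := hrhs
    have hεA : ε * A = ε * (∑ i ∈ Finset.range S.n, v (S.x i)) / S.n := by
      rw [hA]; ring
    have : ε * A ≤ ε * (B + ε * M^2) := by
      rw [hεA]
      calc ε * (∑ i ∈ Finset.range S.n, v (S.x i)) / S.n ≤ ε * B + ε^2 * M^2 := this
      _ = ε * (B + ε * M^2) := by ring
    exact le_of_mul_le_mul_left this hε
  by_contra hcon
  push_neg at hcon
  set η := A - B with hη
  have hη0 : 0 < η := by rw [hη]; linarith
  set ε := min ε₀ (min (1/(M+1)) (η/(2*(M^2+1)))) with hε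
  have hεpos : 0 < ε := by
    apply lt_min hε₀
    apply lt_min
    · positivity
    · positivity
  have h1 : ε ≤ ε₀ := min_le_left _ _
  have h2 : ε * M ≤ 1 := by
    have : ε ≤ 1/(M+1) := le_trans (min_le_right _ _) (min_le_left _ _)
    have hM1 : 0 < M + 1 := by linarith
    calc ε * M ≤ (1/(M+1)) * M := by nlinarith
    _ ≤ 1 := by rw [div_mul_eq_mul_div, div_le_one hM1]; linarith
  have h3 : ε * M^2 < η := by
    have : ε ≤ η/(2*(M^2+1)) := le_trans (min_le_right _ _) (min_le_right _ _)
    have hpos : (0:ℝ) < 2*(M^2+1) := by positivity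
    calc ε * M^2 ≤ (η/(2*(M^2+1))) * M^2 := by nlinarith [sq_nonneg M]
    _ < η := by
        rw [div_mul_eq_mul_div, div_lt_iff₀ hpos]
        nlinarith [sq_nonneg M]
  have := key ε hεpos h1 h2
  rw [hη] at h3
  linarith

end NPMLE

namespace NPMLE
variable (S : NPMLE)
open Set MeasureTheory

lemma add_concave_dir {v : ℝ → ℝ} (hv : ConcaveOn ℝ (Set.Icc S.a S.b) v) {ε : ℝ} (hε : 0 ≤ ε) :
    ConcaveOn ℝ (Set.Icc S.a S.b) (fun s => S.ψt s + ε * v s) := by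
  have := S.hIccconc.add (hv.smul hε)
  exact this

lemma fwd_ineq
    (hmax : ∀ ψ : ℝ → ℝ, ConcaveOn ℝ (Set.Icc (S.x 0) (S.x (S.n - 1))) ψ →
      Psi S.n S.x ψ ≤ Psi S.n S.x S.ψt)
    {t : ℝ} (ht : t ∈ Set.Icc S.a S.b) :
    (∫ r in S.a..t, S.Ft r) ≤ ∫ r in S.a..t, EDF S.n S.x r := by
  have hv : Continuous fun s => min (s - t) 0 :=
    (continuous_id.sub continuous_const).min continuous_const
  have hcc : ∀ ε : ℝ, 0 < ε → ε ≤ 1 →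
      ConcaveOn ℝ (Set.Icc S.a S.b) (fun s => S.ψt s + ε * min (s - t) 0) :=
    fun ε hε _ => S.add_concave_dir (hinge_concaveOn _ (convex_Icc _ _) t) hε.le
  have := S.dir_le hmax (fun s => min (s - t) 0) hv one_pos hcc
  rw [S.hinge_int ht] at this
  rw [S.hinge_sum t] at this
  rw [neg_div] at this
  have hQ := S.Q_eq ht
  rw [← hQ] at this
  linarith

lemma rev_ineq
    (hmax : ∀ ψ : ℝ → ℝ, ConcaveOn ℝ (Set.Icc (S.x 0) (S.x (S.n - 1))) ψ →
      Psi S.n S.x ψ ≤ Psi S.n S.x S.ψt)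
    {t : ℝ} (ht : t ∈ Set.Icc S.a S.b) {ε₀ : ℝ} (hε₀ : 0 < ε₀)
    (hcc : ∀ ε : ℝ, 0 < ε → ε ≤ ε₀ →
      ConcaveOn ℝ (Set.Icc S.a S.b) (fun s => S.ψt s + ε * -min (s - t) 0)) :
    (∫ r in S.a..t, EDF S.n S.x r) ≤ ∫ r in S.a..t, S.Ft r := by
  have hv : Continuous fun s => -min (s - t) 0 :=
    ((continuous_id.sub continuous_const).min continuous_const).neg
  have := S.dir_le hmax (fun s => -min (s - t) 0) hv hε₀ hcc
  have hneg : (∫ s in S.a..S.b, Real.exp (S.ψe s) * -min (s - t) 0)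
      = -(∫ s in S.a..S.b, Real.exp (S.ψe s) * min (s - t) 0) := by
    rw [← intervalIntegral.integral_neg]
    refine intervalIntegral.integral_congr fun s _ => ?_
    ring
  rw [hneg, S.hinge_int ht, neg_neg] at this
  have hsneg : (∑ i ∈ Finset.range S.n, -min (S.x i - t) 0)
      = -∑ i ∈ Finset.range S.n, min (S.x i - t) 0 := by
    rw [Finset.sum_neg_distrib]
  rw [hsneg, S.hinge_sum t, neg_neg] at this
  have hQ := S.Q_eq ht
  rw [← hQ] at this
  exact this

/-- the necessity direction of the theorem -/
lemma necessity
    (hmax : ∀ ψ : ℝ → ℝ, ConcaveOn ℝ (Set.Icc (S.x 0) (S.x (S.n - 1))) ψ →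
      Psi S.n S.x ψ ≤ Psi S.n S.x S.ψt)
    {t : ℝ} (ht : t ∈ Set.Icc S.a S.b) :
    (∫ r in S.a..t, S.Ft r) ≤ (∫ r in S.a..t, EDF S.n S.x r) ∧
      (t ∈ knots S.a S.b S.ψt →
        (∫ r in S.a..t, S.Ft r) = ∫ r in S.a..t, EDF S.n S.x r) := by
  refine ⟨S.fwd_ineq hmax ht, fun hknot => ?_⟩
  refine le_antisymm (S.fwd_ineq hmax ht) ?_
  rcases hknot with hint | hend
  · -- interior knot
    obtain ⟨j, hj, rfl, hdlt⟩ := S.knot_grid hint.1 hint.2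
    refine S.rev_ineq hmax ht (show (0:ℝ) < S.d j - S.d (j+1) by linarith) ?_
    intro ε hε hεle
    have := S.perturb_concave hj hε hεle
    refine concaveOn_congr this fun s _ => ?_
    ring
  · -- endpoint knots
    rcases hend with rfl | rfl
    · -- t = a : both integrals are zero
      rw [intervalIntegral.integral_same, intervalIntegral.integral_same]
    · -- t = b
      refine S.rev_ineq hmax ht one_pos ?_
      intro ε hε hεle
      have haffc : ConcaveOn ℝ (Set.Icc S.a S.b)
          (fun s => S.ψt s + (ε * S.b + (-ε) * s)) := by
        have haf : ConcaveOn ℝ (Set.Icc S.a S.b) (fun s => ε * S.b + (-ε) * s) :=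
          affine_concaveOn _ (convex_Icc _ _) (ε * S.b) (-ε)
        exact S.hIccconc.add haf
      refine concaveOn_congr haffc fun s hs => ?_
      have : min (s - S.b) 0 = s - S.b := min_eq_left (by linarith [hs.2])
      rw [this]
      ring

end NPMLE

section ConcaveBound
open Set MeasureTheory

/-- a concave function on `[a,b]` is bounded below by the min of its endpoint values -/
lemma concave_ge_min {a b : ℝ} (hab : a < b) {ψ : ℝ → ℝ}
    (hψ : ConcaveOn ℝ (Set.Icc a b) ψ) {s : ℝ} (hs : s ∈ Set.Icc a b) :
    min (ψ a) (ψ b) ≤ ψ s := by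
  set lam := (b - s) / (b - a) with hlam
  set mu := (s - a) / (b - a) with hmu
  have hba : (0:ℝ) < b - a := by linarith
  have hl0 : 0 ≤ lam := div_nonneg (by linarith [hs.2]) hba.le
  have hm0 : 0 ≤ mu := div_nonneg (by linarith [hs.1]) hba.le
  have hsum : lam + mu = 1 := by
    rw [hlam, hmu, ← add_div, div_eq_one_iff_eq hba.ne']
    ring
  have hcomb : lam • a + mu • b = s := by
    simp only [smul_eq_mul, hlam, hmu]
    field_simp
    ring
  have hcc := hψ.2 (Set.left_mem_Icc.2 hab.le) (Set.right_mem_Icc.2 hab.le) hl0 hm0 hsum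
  rw [hcomb] at hcc
  simp only [smul_eq_mul] at hcc
  have h1 : min (ψ a) (ψ b) ≤ ψ a := min_le_left _ _
  have h2 : min (ψ a) (ψ b) ≤ ψ b := min_le_right _ _
  have hmm : min (ψ a) (ψ b) = lam * min (ψ a) (ψ b) + mu * min (ψ a) (ψ b) := by
    rw [← add_mul, hsum, one_mul]
  linarith [mul_le_mul_of_nonneg_left h1 hl0, mul_le_mul_of_nonneg_left h2 hm0]

lemma concave_le_bound {a b : ℝ} (hab : a < b) {ψ : ℝ → ℝ}
    (hψ : ConcaveOn ℝ (Set.Icc a b) ψ) {s : ℝ} (hs : s ∈ Set.Icc a b) :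
    ψ s ≤ 2 * ψ ((a+b)/2) - min (ψ a) (ψ b) := by
  have hs' : a + b - s ∈ Set.Icc a b := ⟨by linarith [hs.2], by linarith [hs.1]⟩
  have hcomb : (1/2 : ℝ) • s + (1/2 : ℝ) • (a + b - s) = (a+b)/2 := by
    simp only [smul_eq_mul]
    ring
  have hmid := hψ.2 hs hs' (by norm_num : (0:ℝ) ≤ 1/2) (by norm_num : (0:ℝ) ≤ 1/2)
    (by norm_num : (1/2:ℝ) + 1/2 = 1)
  rw [hcomb] at hmid
  simp only [smul_eq_mul] at hmid
  have hmin := concave_ge_min hab hψ hs'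
  linarith [hmid, hmin]

lemma exp_concave_integrableOn {a b : ℝ} (hab : a < b) {ψ : ℝ → ℝ}
    (hψ : ConcaveOn ℝ (Set.Icc a b) ψ) :
    IntegrableOn (fun s => Real.exp (ψ s)) (Set.Ioc a b) volume := by
  have hcont : ContinuousOn ψ (Set.Ioo a b) := by
    have := hψ.continuousOn_interior
    rwa [interior_Icc] at this
  have hmeas : AEStronglyMeasurable (fun s => Real.exp (ψ s)) (volume.restrict (Set.Ioo a b)) :=
    (Real.continuous_exp.comp_continuousOn hcont).aestronglyMeasurable measurableSet_Ioo
  have hres : volume.restrict (Set.Ioc a b) = volume.restrict (Set.Ioo a b) :=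
    (Measure.restrict_congr_set (Ioo_ae_eq_Ioc)).symm
  rw [IntegrableOn, hres]
  set Bd := 2 * ψ ((a+b)/2) - min (ψ a) (ψ b) with hBd
  refine Integrable.mono' (g := fun _ => Real.exp Bd) ?_ hmeas ?_
  · exact integrableOn_const (by rw [Real.volume_Ioo]; exact ENNReal.ofReal_ne_top)
  · rw [ae_restrict_iff' measurableSet_Ioo]
    filter_upwards with s hs
    rw [Real.norm_eq_abs, abs_of_pos (Real.exp_pos _)]
    exact Real.exp_le_exp.2 (concave_le_bound hab hψ (Set.Ioo_subset_Icc_self hs))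

end ConcaveBound

namespace NPMLE
variable (S : NPMLE)
open Set MeasureTheory

lemma exp_ψ_intint {ψ : ℝ → ℝ} (hψ : ConcaveOn ℝ (Set.Icc S.a S.b) ψ) {j : ℕ} (hj : j < S.m) :
    IntervalIntegrable (fun s => Real.exp (ψ s)) volume (S.x j) (S.x (j+1)) := by
  rw [intervalIntegrable_iff_integrableOn_Ioc_of_le (S.piece_lt hj).le]
  refine (exp_concave_integrableOn S.hab hψ).mono_set ?_
  exact Set.Ioc_subset_Ioc (S.xmono (Nat.zero_le _) (by omega)) (S.xmono (by omega) le_rfl)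

/-- pointwise chord bound on a piece -/
lemma chord_bound {ψ : ℝ → ℝ} (hψ : ConcaveOn ℝ (Set.Icc S.a S.b) ψ) {j : ℕ} (hj : j < S.m)
    {s : ℝ} (hs : s ∈ Set.Icc (S.x j) (S.x (j+1))) :
    Real.exp (S.ψe s) * (1 + ((ψ (S.x j) - S.ψt (S.x j)) +
      (((ψ (S.x (j+1)) - S.ψt (S.x (j+1))) - (ψ (S.x j) - S.ψt (S.x j))) / (S.x (j+1) - S.x j))
        * (s - S.x j))) ≤ Real.exp (ψ s) := by
  set ℓ := S.x (j+1) - S.x j with hℓ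
  have hℓ0 : (0:ℝ) < ℓ := by rw [hℓ]; linarith [S.piece_lt hj]
  set G := (ψ (S.x j) - S.ψt (S.x j)) +
      (((ψ (S.x (j+1)) - S.ψt (S.x (j+1))) - (ψ (S.x j) - S.ψt (S.x j))) / ℓ) * (s - S.x j)
    with hG
  -- step 1: ψ s ≥ ψe s + G
  have hchord : S.ψe s + G ≤ ψ s := by
    have hmem : s ∈ Set.Icc S.a S.b := S.piece_subset hj hs
    have hψe : S.ψe s = S.c j + S.d j * s := by
      rw [S.ψe_eq hmem]
      exact S.heval hj hs
    set lam := (S.x (j+1) - s) / ℓ with hlam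
    set mu := (s - S.x j) / ℓ with hmu
    have hl0 : 0 ≤ lam := div_nonneg (by linarith [hs.2]) hℓ0.le
    have hm0 : 0 ≤ mu := div_nonneg (by linarith [hs.1]) hℓ0.le
    have hsum : lam + mu = 1 := by
      rw [hlam, hmu, ← add_div, div_eq_one_iff_eq hℓ0.ne']
      rw [hℓ]
      ring
    have hcomb : lam • (S.x j) + mu • (S.x (j+1)) = s := by
      simp only [smul_eq_mul, hlam, hmu]
      field_simp
      ring
    have hcc := hψ.2 (S.xmem (by omega : j ≤ S.m)) (S.xmem (by omega : j + 1 ≤ S.m)) hl0 hm0 hsum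
    rw [hcomb] at hcc
    -- hcc : lam * ψ (x j) + mu * ψ (x (j+1)) ≤ ψ s
    have hd : S.ψt (S.x (j+1)) - S.ψt (S.x j) = S.d j * ℓ := by
      rw [hℓ]; exact S.hslope hj
    have hψtj : S.ψt (S.x j) = S.c j + S.d j * S.x j :=
      S.heval hj (Set.left_mem_Icc.2 (S.piece_lt hj).le)
    -- show ψe s + G = lam * ψ (x j) + mu * ψ (x (j+1))
    have hkey : S.ψe s + G = lam * ψ (S.x j) + mu * ψ (S.x (j+1)) := by
      rw [hψe, hG, hlam, hmu]
      have e1 : S.c j + S.d j * s = ψ (S.x j) - (ψ (S.x j) - S.ψt (S.x j)) + S.d j * (s - S.x j) := by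
        rw [hψtj]; ring
      rw [e1]
      have e2 : (ψ (S.x (j+1)) - S.ψt (S.x (j+1))) - (ψ (S.x j) - S.ψt (S.x j))
          = (ψ (S.x (j+1)) - ψ (S.x j)) - S.d j * ℓ := by
        rw [← hd]; ring
      rw [e2]
      field_simp
      ring
    rw [hkey]
    simpa [smul_eq_mul] using hcc
  -- step 2: exp chain
  calc Real.exp (S.ψe s) * (1 + G) ≤ Real.exp (S.ψe s) * Real.exp G := by
        have := Real.add_one_le_exp G
        nlinarith [Real.exp_pos (S.ψe s)]
    _ = Real.exp (S.ψe s + G) := (Real.exp_add _ _).symm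
    _ ≤ Real.exp (ψ s) := Real.exp_le_exp.2 hchord

end NPMLE

namespace NPMLE
variable (S : NPMLE)
open Set MeasureTheory intervalIntegral

lemma int_exp_piece {j : ℕ} (hj : j < S.m) :
    (∫ s in (S.x j)..(S.x (j+1)), Real.exp (S.ψe s)) = S.Fe (S.x (j+1)) - S.Fe (S.x j) := by
  have := intervalIntegral.integral_interval_sub_left (μ := volume)
    (f := fun s => Real.exp (S.ψe s)) (a := S.a) (b := S.x (j+1)) (c := S.x j)
    (S.cont_expψe.intervalIntegrable _ _) (S.cont_expψe.intervalIntegrable _ _)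
  exact this.symm

lemma piece_ibp {j : ℕ} (hj : j < S.m) (p q : ℝ) :
    (∫ s in (S.x j)..(S.x (j+1)), Real.exp (S.ψe s) * (p + q * (s - S.x j)))
      = (p + q * (S.x (j+1) - S.x j)) * S.Fe (S.x (j+1)) - p * S.Fe (S.x j)
        - q * ∫ r in (S.x j)..(S.x (j+1)), S.Fe r := by
  have hsint : (∫ s in (S.x j)..(S.x (j+1)), s * Real.exp (S.ψe s))
      = (S.x (j+1)) * S.Fe (S.x (j+1)) - (S.x j) * S.Fe (S.x j)
        - ∫ r in (S.x j)..(S.x (j+1)), S.Fe r := by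
    have := intervalIntegral.integral_mul_deriv_eq_deriv_mul_of_hasDerivAt
      (u := fun s : ℝ => s) (v := S.Fe) (u' := fun _ => (1:ℝ))
      (v' := fun s => Real.exp (S.ψe s)) (a := S.x j) (b := S.x (j+1))
      continuous_id.continuousOn S.cont_Fe.continuousOn
      (fun s _ => hasDerivAt_id s) (fun s _ => S.Fe_deriv s)
      (continuous_const.intervalIntegrable _ _) (S.cont_expψe.intervalIntegrable _ _)
    rw [this]
    congr 1
    refine intervalIntegral.integral_congr fun s _ => ?_
    ring
  have hexpand : (∫ s in (S.x j)..(S.x (j+1)), Real.exp (S.ψe s) * (p + q * (s - S.x j)))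
      = (p - q * S.x j) * (∫ s in (S.x j)..(S.x (j+1)), Real.exp (S.ψe s))
        + q * ∫ s in (S.x j)..(S.x (j+1)), s * Real.exp (S.ψe s) := by
    have hi1 : IntervalIntegrable (fun s : ℝ => (p - q * S.x j) * Real.exp (S.ψe s)) volume
        (S.x j) (S.x (j+1)) := (continuous_const.mul S.cont_expψe).intervalIntegrable _ _
    have hi2 : IntervalIntegrable (fun s : ℝ => q * (s * Real.exp (S.ψe s))) volume
        (S.x j) (S.x (j+1)) :=
      (continuous_const.mul (continuous_id.mul S.cont_expψe)).intervalIntegrable _ _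
    rw [← intervalIntegral.integral_const_mul, ← intervalIntegral.integral_const_mul,
      ← intervalIntegral.integral_add hi1 hi2]
    refine intervalIntegral.integral_congr fun s _ => ?_
    ring
  rw [hexpand, S.int_exp_piece hj, hsint]
  ring

end NPMLE

section Abel

lemma abel1 (Δ : ℕ → ℝ) (m : ℕ) :
    (∑ j ∈ Finset.range m, (Δ (j+1) - Δ j) * ((j:ℝ)+1))
      = ((m:ℝ)+1) * Δ m - ∑ i ∈ Finset.range (m+1), Δ i := by
  induction m with
  | zero => simp
  | succ p ih =>
    rw [Finset.sum_range_succ, ih, Finset.sum_range_succ (n := p+1)]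
    push_cast
    ring

lemma abel2 (δ E : ℕ → ℝ) (m : ℕ) :
    (∑ j ∈ Finset.range (m+1), δ j * (E (j+1) - E j))
      = δ m * E (m+1) - δ 0 * E 0 + ∑ j ∈ Finset.range m, (δ j - δ (j+1)) * E (j+1) := by
  induction m with
  | zero => simp; ring
  | succ p ih =>
    rw [Finset.sum_range_succ, ih, Finset.sum_range_succ (n := p)]
    ring

end Abel

namespace NPMLE
variable (S : NPMLE)
open Set MeasureTheory

lemma sufficiency
    (hRHS : ∀ t ∈ Set.Icc S.a S.b,
      (∫ r in S.a..t, S.Ft r) ≤ (∫ r in S.a..t, EDF S.n S.x r) ∧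
      (t ∈ knots S.a S.b S.ψt →
        (∫ r in S.a..t, S.Ft r) = ∫ r in S.a..t, EDF S.n S.x r))
    (ψ : ℝ → ℝ) (hψ : ConcaveOn ℝ (Set.Icc S.a S.b) ψ) :
    Psi S.n S.x ψ ≤ Psi S.n S.x S.ψt := by
  have hn0 : (0:ℝ) < S.n := by have := S.hn; positivity
  set Δ : ℕ → ℝ := fun k => ψ (S.x k) - S.ψt (S.x k) with hΔ
  set δ : ℕ → ℝ := fun j => (Δ (j+1) - Δ j) / (S.x (j+1) - S.x j) with hδ
  have hδℓ : ∀ j, j < S.m → δ j * (S.x (j+1) - S.x j) = Δ (j+1) - Δ j := by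
    intro j hj
    rw [hδ]
    exact div_mul_cancel₀ _ (by linarith [S.piece_lt hj] : S.x (j+1) - S.x j ≠ 0)
  set E : ℕ → ℝ := fun k =>
    (∫ r in S.a..(S.x k), S.Ft r) - (∫ r in S.a..(S.x k), EDF S.n S.x r) with hE
  have hE0 : E 0 = 0 := by
    simp only [hE]
    rw [show S.x 0 = S.a from rfl]
    rw [intervalIntegral.integral_same, intervalIntegral.integral_same]
    ring
  have hEm : E S.m = 0 := by
    simp only [hE]
    have hb : S.x S.m = S.b := rfl
    rw [hb]
    have hknot : S.b ∈ knots S.a S.b S.ψt := Or.inr (by simp)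
    rw [(hRHS S.b (Set.right_mem_Icc.2 S.hab.le)).2 hknot]
    ring
  have hEle : ∀ k, k ≤ S.m → E k ≤ 0 := by
    intro k hk
    simp only [hE]
    have := (hRHS (S.x k) (S.xmem hk)).1
    linarith
  have hEknot : ∀ j, j + 1 < S.m → S.d j ≠ S.d (j+1) → E (j+1) = 0 := by
    intro j hj hne
    obtain ⟨hmem, hder⟩ := S.grid_knot hj hne
    have hknot : S.x (j+1) ∈ knots S.a S.b S.ψt := Or.inl ⟨hmem, hder⟩
    simp only [hE]
    rw [(hRHS (S.x (j+1)) (S.xmem (by omega))).2 hknot]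
    ring
  -- lower bound for the integral of exp ψ
  have hplow : ∀ j ∈ Finset.range S.m,
      ((1 + Δ (j+1)) * S.Fe (S.x (j+1)) - (1 + Δ j) * S.Fe (S.x j))
        - δ j * (∫ r in (S.x j)..(S.x (j+1)), S.Fe r)
      ≤ ∫ t in (S.x j)..(S.x (j+1)), Real.exp (ψ t) := by
    intro j hjr
    have hj : j < S.m := Finset.mem_range.1 hjr
    have hibp := S.piece_ibp hj (1 + Δ j) (δ j)
    have hcoef : (1 + Δ j) + δ j * (S.x (j+1) - S.x j) = 1 + Δ (j+1) := by
      rw [hδℓ j hj]; ring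
    rw [hcoef] at hibp
    rw [show ((1 + Δ (j+1)) * S.Fe (S.x (j+1)) - (1 + Δ j) * S.Fe (S.x j))
        - δ j * (∫ r in (S.x j)..(S.x (j+1)), S.Fe r)
      = (1 + Δ (j+1)) * S.Fe (S.x (j+1)) - (1 + Δ j) * S.Fe (S.x j)
        - δ j * ∫ r in (S.x j)..(S.x (j+1)), S.Fe r from by ring]
    rw [← hibp]
    refine intervalIntegral.integral_mono_on (S.piece_lt hj).le
      ((S.cont_expψe.mul ((continuous_const.add (continuous_const.mul
        (continuous_id.sub continuous_const))))).intervalIntegrable _ _)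
      (S.exp_ψ_intint hψ hj) ?_
    intro s hs
    have hcb := S.chord_bound hψ hj hs
    refine le_trans (le_of_eq ?_) hcb
    simp only [hδ, hΔ]
    ring
  have hsplit : (∑ j ∈ Finset.range S.m, ∫ t in (S.x j)..(S.x (j+1)), Real.exp (ψ t))
      = ∫ t in S.a..S.b, Real.exp (ψ t) :=
    intervalIntegral.sum_integral_adjacent_intervals (fun k hk => S.exp_ψ_intint hψ hk)
  have htel : (∑ j ∈ Finset.range S.m,
      (((1 + Δ (j+1)) * S.Fe (S.x (j+1)) - (1 + Δ j) * S.Fe (S.x j))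
        - δ j * (∫ r in (S.x j)..(S.x (j+1)), S.Fe r)))
      = (1 + Δ S.m)
        - ∑ j ∈ Finset.range S.m, δ j * (∫ r in (S.x j)..(S.x (j+1)), S.Fe r) := by
    rw [Finset.sum_sub_distrib]
    congr 1
    rw [Finset.sum_range_sub (f := fun k => (1 + Δ k) * S.Fe (S.x k))]
    rw [show S.Fe (S.x S.m) = 1 from S.Fe_b, show S.Fe (S.x 0) = 0 from S.Fe_a]
    ring
  have hintlow : (1 + Δ S.m)
      - (∑ j ∈ Finset.range S.m, δ j * (∫ r in (S.x j)..(S.x (j+1)), S.Fe r))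
      ≤ ∫ t in S.a..S.b, Real.exp (ψ t) := by
    rw [← hsplit, ← htel]
    exact Finset.sum_le_sum hplow
  -- identify ∫_j Fe with E-increments
  have hPdiff : ∀ j, j < S.m → (∫ r in (S.x j)..(S.x (j+1)), S.Fe r)
      = (∫ r in S.a..(S.x (j+1)), S.Ft r) - (∫ r in S.a..(S.x j), S.Ft r) := by
    intro j hj
    have h1 : ∀ k, k ≤ S.m → (∫ r in S.a..(S.x k), S.Ft r) = ∫ r in S.a..(S.x k), S.Fe r := by
      intro k hk
      refine intervalIntegral.integral_congr fun r hr => ?_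
      rw [Set.uIcc_of_le (S.xmem hk).1] at hr
      exact S.Ft_eq ⟨hr.1, hr.2.trans (S.xmem hk).2⟩
    rw [h1 (j+1) (by omega), h1 j (by omega)]
    exact (intervalIntegral.integral_interval_sub_left
      (S.cont_Fe.intervalIntegrable _ _) (S.cont_Fe.intervalIntegrable _ _)).symm
  have hQdiff : ∀ j, j < S.m → ((j:ℝ)+1) / S.n * (S.x (j+1) - S.x j)
      = (∫ r in S.a..(S.x (j+1)), EDF S.n S.x r) - (∫ r in S.a..(S.x j), EDF S.n S.x r) := by
    intro j hj
    rw [intervalIntegral.integral_interval_sub_left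
      (EDF_intint _ _ _ _) (EDF_intint _ _ _ _)]
    rw [S.Q_piece hj]
  -- the discrete Abel identity
  have hA1 : (∑ i ∈ Finset.range S.n, Δ i) / S.n
      = Δ S.m - ∑ j ∈ Finset.range S.m, δ j * (((j:ℝ)+1) / S.n * (S.x (j+1) - S.x j)) := by
    have habel := abel1 Δ S.m
    have hterm : ∀ j ∈ Finset.range S.m,
        δ j * (((j:ℝ)+1) / S.n * (S.x (j+1) - S.x j))
          = (Δ (j+1) - Δ j) * ((j:ℝ)+1) / S.n := by
      intro j hjr
      have hj : j < S.m := Finset.mem_range.1 hjr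
      rw [← hδℓ j hj]
      ring
    rw [Finset.sum_congr rfl hterm]
    rw [← Finset.sum_div, habel]
    have hcast : ((S.m:ℝ)+1) = S.n := by
      have := S.hnm
      rw [this]
      push_cast
      ring
    rw [hcast]
    have hrange : Finset.range (S.m + 1) = Finset.range S.n := by rw [← S.hnm]
    rw [hrange]
    field_simp
    ring
  -- main estimate
  have hPsiψ : Psi S.n S.x ψ = (∑ i ∈ Finset.range S.n, ψ (S.x i)) / S.n
      - ∫ t in S.a..S.b, Real.exp (ψ t) := rfl
  have hsumsub : (∑ i ∈ Finset.range S.n, ψ (S.x i)) / S.n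
      = (∑ i ∈ Finset.range S.n, S.ψt (S.x i)) / S.n + (∑ i ∈ Finset.range S.n, Δ i) / S.n := by
    rw [← add_div]
    congr 1
    rw [← Finset.sum_add_distrib]
    refine Finset.sum_congr rfl fun i _ => ?_
    rw [hΔ]
    ring
  rw [hPsiψ, S.Psi_ψt, hsumsub, hA1]
  have hEsum : (∑ j ∈ Finset.range S.m, δ j * (∫ r in (S.x j)..(S.x (j+1)), S.Fe r))
      - (∑ j ∈ Finset.range S.m, δ j * (((j:ℝ)+1) / S.n * (S.x (j+1) - S.x j)))
      = ∑ j ∈ Finset.range S.m, δ j * (E (j+1) - E j) := by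
    rw [← Finset.sum_sub_distrib]
    refine Finset.sum_congr rfl fun j hjr => ?_
    have hj : j < S.m := Finset.mem_range.1 hjr
    rw [hPdiff j hj, hQdiff j hj, hE]
    ring
  -- the Abel-summed quantity is ≤ 0
  obtain ⟨m', hm'⟩ : ∃ m', S.m = m' + 1 := ⟨S.m - 1, by have := S.hm1; omega⟩
  have habel2 := abel2 δ E m'
  have hfinal : (∑ j ∈ Finset.range S.m, δ j * (E (j+1) - E j)) ≤ 0 := by
    rw [hm', habel2, ← hm']
    rw [hEm, hE0]
    have hterms : ∀ j ∈ Finset.range m', (δ j - δ (j+1)) * E (j+1) ≤ 0 := by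
      intro j hjr
      have hj : j + 1 < S.m := by
        have := Finset.mem_range.1 hjr
        omega
      rcases eq_or_ne (S.d j) (S.d (j+1)) with hdeq | hdne
      · -- slopes of ψt equal: use concavity of ψ
        have hδeq : ∀ i, i < S.m → δ i
            = (ψ (S.x (i+1)) - ψ (S.x i)) / (S.x (i+1) - S.x i) - S.d i := by
          intro i hi
          have hℓ : S.x (i+1) - S.x i ≠ 0 := by linarith [S.piece_lt hi]
          rw [hδ]
          simp only [hΔ]
          rw [show ψ (S.x (i+1)) - S.ψt (S.x (i+1)) - (ψ (S.x i) - S.ψt (S.x i))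
            = (ψ (S.x (i+1)) - ψ (S.x i)) - (S.ψt (S.x (i+1)) - S.ψt (S.x i)) from by ring]
          rw [S.hslope hi, sub_div, mul_div_cancel_right₀ _ hℓ]
        have hσ := hψ.slope_anti_adjacent (S.xmem (by omega : j ≤ S.m))
          (S.xmem (by omega : j + 2 ≤ S.m)) (S.piece_lt (by omega)) (S.piece_lt (by omega))
        have h1 := hδeq j (by omega)
        have h2 := hδeq (j+1) (by omega)
        have hge : 0 ≤ δ j - δ (j+1) := by
          rw [h1, h2, hdeq]
          have : (S.x (j+1+1) : ℝ) = S.x (j+2) := by norm_num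
          rw [this]
          linarith [hσ]
        have hle := hEle (j+1) (by omega)
        exact mul_nonpos_of_nonneg_of_nonpos hge hle
      · rw [hEknot j hj hdne]
        ring_nf
        exact le_rfl
    have hsum0 := Finset.sum_nonpos hterms
    simp only [mul_zero]
    linarith [hsum0]
  clear_value Δ δ E
  have hle2 : (∑ j ∈ Finset.range S.m, δ j * (∫ r in (S.x j)..(S.x (j+1)), S.Fe r))
      ≤ ∑ j ∈ Finset.range S.m, δ j * (((j:ℝ)+1) / S.n * (S.x (j+1) - S.x j)) := by
    linarith [hEsum, hfinal]
  linarith [hintlow, hle2]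

end NPMLE

/-- Theorem 2.4: a concave, piecewise affine `ψ̃` on `[x_0, x_{n-1}]` with
`F̃(x) = ∫_{x_0}^x exp ψ̃` and `F̃(x_{n-1}) = 1` maximizes `Ψ_n` if and only if
`∫_{x_0}^t F̃ ≤ ∫_{x_0}^t 𝔽_n` for all `t ∈ [x_0, x_{n-1}]`, with equality at knots of `ψ̃`. -/
theorem npmle_characterization_integrated_cdf
    (n : ℕ) (hn : 2 ≤ n) (x : ℕ → ℝ)
    (hx : ∀ i, i + 1 < n → x i < x (i + 1))
    (ψt : ℝ → ℝ)
    (hconc : ConcaveOn ℝ (Set.Icc (x 0) (x (n - 1))) ψt)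
    (haff : ∀ j, j + 1 < n → ∃ c d : ℝ, ∀ t ∈ Set.Icc (x j) (x (j + 1)),
      ψt t = c + d * t)
    (Ft : ℝ → ℝ) (hFt : ∀ y, Ft y = ∫ s in (x 0)..y, Real.exp (ψt s))
    (hFt1 : Ft (x (n - 1)) = 1) :
    (∀ ψ : ℝ → ℝ, ConcaveOn ℝ (Set.Icc (x 0) (x (n - 1))) ψ →
        Psi n x ψ ≤ Psi n x ψt) ↔
      (∀ t ∈ Set.Icc (x 0) (x (n - 1)),
        (∫ r in (x 0)..t, Ft r) ≤ (∫ r in (x 0)..t, EDF n x r) ∧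
        (t ∈ knots (x 0) (x (n - 1)) ψt →
          (∫ r in (x 0)..t, Ft r) = ∫ r in (x 0)..t, EDF n x r)) := by
  let S : NPMLE := ⟨n, hn, x, hx, ψt, hconc, haff, Ft, hFt, hFt1⟩
  constructor
  · intro hmax t ht
    exact S.necessity hmax ht
  · intro hRHS ψ hψ
    exact S.sufficiency hRHS ψ hψ
end

section
/- For arbitrary points x_1 < x_2: sqrt(f(x_1)·f(x_2)) ≤ (F(x_2) − F(x_1))/(x_2 − x_1). -/
open MeasureTheory

private lemma sinh_ratio (L : ℝ) (hL : L ≠ 0) :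
    1 ≤ (Real.exp (L / 2) - Real.exp (-(L / 2))) / L := by
  have key : ∀ u : ℝ, 0 < u → 1 ≤ (Real.exp u - Real.exp (-u)) / (2 * u) := by
    intro u hu
    have h : u < Real.sinh u := Real.self_lt_sinh_iff.2 hu
    rw [Real.sinh_eq] at h
    rw [le_div_iff₀ (by positivity)]
    linarith
  rcases lt_or_gt_of_ne hL with h | h
  · have := key (-(L/2)) (by linarith)
    rw [neg_neg] at this
    have h2 : (Real.exp (-(L/2)) - Real.exp (L/2)) / (2 * -(L/2)) =
        (Real.exp (L / 2) - Real.exp (-(L / 2))) / L := by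
      rw [div_eq_div_iff (by linarith) hL]; ring
    linarith [h2 ▸ this]
  · have := key (L/2) (by linarith)
    have h2 : (2 : ℝ) * (L/2) = L := by ring
    rwa [h2] at this

/-- For a log-concave probability density `f` with distribution function `F`
and arbitrary points `x₁ < x₂`: `√(f x₁ · f x₂) ≤ (F x₂ − F x₁)/(x₂ − x₁)`. -/
theorem sqrt_prod_le_slope_cdf
    (f : ℝ → ℝ) (hf_nonneg : ∀ x, 0 ≤ f x)
    (hf_int : Integrable f)
    (hf_prob : ∫ x, f x = 1)
    (hf_logconcave : ∀ x y lam : ℝ, 0 ≤ lam → lam ≤ 1 →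
      f x ^ (1 - lam) * f y ^ lam ≤ f ((1 - lam) * x + lam * y))
    (F : ℝ → ℝ) (hF : ∀ x, F x = ∫ t in Set.Iic x, f t)
    (x₁ x₂ : ℝ) (hx : x₁ < x₂) :
    Real.sqrt (f x₁ * f x₂) ≤ (F x₂ - F x₁) / (x₂ - x₁) := by
  have hd : (0:ℝ) < x₂ - x₁ := sub_pos.2 hx
  have hFd : F x₂ - F x₁ = ∫ t in x₁..x₂, f t := by
    rw [hF, hF]
    exact intervalIntegral.integral_Iic_sub_Iic hf_int.integrableOn hf_int.integrableOn
  rw [hFd, le_div_iff₀ hd]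
  set a := f x₁ with ha_def
  set b := f x₂ with hb_def
  rcases eq_or_lt_of_le (hf_nonneg x₁) with ha0 | ha
  · have haz : a = 0 := ha0.symm
    rw [haz, zero_mul, Real.sqrt_zero, zero_mul]
    exact intervalIntegral.integral_nonneg hx.le fun t _ => hf_nonneg t
  rcases eq_or_lt_of_le (hf_nonneg x₂) with hb0 | hb
  · have hbz : b = 0 := hb0.symm
    rw [hbz, mul_zero, Real.sqrt_zero, zero_mul]
    exact intervalIntegral.integral_nonneg hx.le fun t _ => hf_nonneg t
  set L := Real.log b - Real.log a with hL_def
  set k := L / (x₂ - x₁) with hk_def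
  set β := -(k * x₁) - L / 2 with hβ_def
  -- pointwise bound
  have hpt : ∀ t ∈ Set.Icc x₁ x₂,
      Real.sqrt (a * b) * Real.exp (k * t + β) ≤ f t := by
    intro t ht
    set lam := (t - x₁) / (x₂ - x₁) with hlam_def
    have hlam0 : 0 ≤ lam := div_nonneg (by linarith [ht.1]) hd.le
    have hlam1 : lam ≤ 1 := (div_le_one hd).2 (by linarith [ht.2])
    have hteq : (1 - lam) * x₁ + lam * x₂ = t := by
      rw [hlam_def]; linear_combination div_mul_cancel₀ (t - x₁) hd.ne'
    have hlc := hf_logconcave x₁ x₂ lam hlam0 hlam1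
    rw [hteq] at hlc
    refine le_trans (le_of_eq ?_) hlc
    have hsqrt : Real.sqrt (a * b) = Real.exp ((Real.log a + Real.log b) / 2) := by
      rw [Real.sqrt_eq_rpow, Real.rpow_def_of_pos (by positivity),
        Real.log_mul (ne_of_gt ha) (ne_of_gt hb)]
      ring_nf
      rfl
    rw [hsqrt, ← Real.exp_add, Real.rpow_def_of_pos ha, Real.rpow_def_of_pos hb,
      ← Real.exp_add]
    congr 1
    have : k * t + β = lam * L - L / 2 := by
      have : k * t + β = k * (t - x₁) - L / 2 := by rw [hβ_def]; ring
      rw [this, hk_def, hlam_def]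
      field_simp
    rw [this, hL_def]
    ring
  -- integrability
  have hfint : IntervalIntegrable f volume x₁ x₂ := hf_int.intervalIntegrable
  have hgint : IntervalIntegrable
      (fun t => Real.sqrt (a * b) * Real.exp (k * t + β)) volume x₁ x₂ :=
    (Continuous.intervalIntegrable (by continuity) x₁ x₂)
  have hmono : (∫ t in x₁..x₂, Real.sqrt (a * b) * Real.exp (k * t + β))
      ≤ ∫ t in x₁..x₂, f t := by
    apply intervalIntegral.integral_mono_on hx.le hgint hfint
    intro t ht
    exact hpt t ht
  refine le_trans ?_ hmono
  -- compute the integral of the exponential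
  rcases eq_or_ne L 0 with hL0 | hL0
  · have hk0 : k = 0 := by rw [hk_def, hL0, zero_div]
    have hβ0 : β = 0 := by rw [hβ_def, hk0, hL0]; ring
    simp only [hk0, hβ0, zero_mul, add_zero, Real.exp_zero, mul_one]
    rw [intervalIntegral.integral_const, smul_eq_mul, mul_comm]
  · have hk0 : k ≠ 0 := div_ne_zero hL0 (ne_of_gt hd)
    have hcomp : (∫ t in x₁..x₂, Real.exp (k * t + β))
        = k⁻¹ * (Real.exp (L / 2) - Real.exp (-(L / 2))) := by
      rw [intervalIntegral.integral_comp_mul_add Real.exp hk0 β,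
        integral_exp]
      have h1 : k * x₂ + β = L / 2 := by
        rw [hβ_def, hk_def]; field_simp; ring
      have h2 : k * x₁ + β = -(L / 2) := by
        rw [hβ_def]; ring
      rw [h1, h2, smul_eq_mul]
    rw [intervalIntegral.integral_const_mul, hcomp]
    have hratio := sinh_ratio L hL0
    have hkinv : k⁻¹ * (Real.exp (L / 2) - Real.exp (-(L / 2)))
        = (x₂ - x₁) * ((Real.exp (L / 2) - Real.exp (-(L / 2))) / L) := by
      rw [hk_def]; field_simp
    rw [hkinv]
    have hs : (0:ℝ) ≤ Real.sqrt (a * b) := Real.sqrt_nonneg _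
    calc Real.sqrt (a * b) * (x₂ - x₁) = Real.sqrt (a*b) * ((x₂ - x₁) * 1) := by ring
      _ ≤ Real.sqrt (a*b) * ((x₂ - x₁) * ((Real.exp (L / 2) - Real.exp (-(L / 2))) / L)) := by
          apply mul_le_mul_of_nonneg_left _ hs
          apply mul_le_mul_of_nonneg_left hratio hd.le
      _ = _ := by ring
end

section
/- Let x_o ∈ ℝ with f(x_o) > 0 and let x ≠ x_o be real; set h := F(max(x_o, x)) − F(min(x_o, x)). Then f(x)·f(x_o)·(x − x_o)² ≤ h², and if f(x_o)·|x − x_o| ≥ h, then f(x) ≤ f(x_o)·exp(1 − f(x_o)·|x − x_o|/h). -/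
open MeasureTheory

private lemma aux_geo {A B : ℝ} (hA : 0 < A) (hAB : A < B) :
    Real.sqrt (A * B) * (Real.log B - Real.log A) ≤ B - A := by
  have hB : 0 < B := hA.trans hAB
  set p := Real.log A with hp
  set q := Real.log B with hq
  have hpq : p < q := Real.log_lt_log hA hAB
  have hsqrt : Real.sqrt (A * B) = Real.exp ((p + q) / 2) := by
    rw [← Real.exp_log (show (0:ℝ) < Real.sqrt (A*B) from Real.sqrt_pos.2 (mul_pos hA hB)),
      Real.log_sqrt (mul_pos hA hB).le, Real.log_mul hA.ne' hB.ne']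
  have hA' : A = Real.exp p := (Real.exp_log hA).symm
  have hB' : B = Real.exp q := (Real.exp_log hB).symm
  set s := (q - p) / 2 with hs
  have hs0 : 0 < s := by rw [hs]; linarith
  have hsinh : s < Real.sinh s := Real.self_lt_sinh_iff.2 hs0
  rw [hsqrt, hA', hB']
  have h1 : Real.exp q - Real.exp p = Real.exp ((p+q)/2) * (2 * Real.sinh s) := by
    rw [Real.sinh_eq,
      show Real.exp ((p+q)/2) * (2 * ((Real.exp s - Real.exp (-s))/2))
        = Real.exp ((p+q)/2) * Real.exp s - Real.exp ((p+q)/2) * Real.exp (-s) by ring,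
      ← Real.exp_add, ← Real.exp_add, show (p+q)/2 + s = q by rw [hs]; ring,
      show (p+q)/2 + -s = p by rw [hs]; ring]
  have h2 : q - p = 2 * s := by rw [hs]; ring
  rw [h1, h2]
  have := Real.exp_pos ((p+q)/2)
  nlinarith

private lemma final_bounds (a b D H : ℝ) (ha : 0 < a) (hb : 0 < b) (hD : 0 < D)
    (h1 : a = b → D * a ≤ H)
    (h2 : a ≠ b → D * (b - a) / (Real.log b - Real.log a) ≤ H) :
    b * a * D ^ 2 ≤ H ^ 2 ∧ (H ≤ a * D → b ≤ a * Real.exp (1 - a * D / H)) := by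
  have hgeo : D * Real.sqrt (a * b) ≤ H := by
    rcases eq_or_ne a b with he | hne
    · have h1' := h1 he
      rw [← he, Real.sqrt_mul_self ha.le]
      exact h1'
    · have hkey := h2 hne
      rcases lt_or_gt_of_ne hne with hab | hba
      · have hL : 0 < Real.log b - Real.log a := sub_pos.2 (Real.log_lt_log ha hab)
        have hg := aux_geo ha hab
        have hle : Real.sqrt (a * b) ≤ (b - a) / (Real.log b - Real.log a) :=
          (le_div_iff₀ hL).2 hg
        calc D * Real.sqrt (a*b) ≤ D * ((b - a)/(Real.log b - Real.log a)) :=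
              mul_le_mul_of_nonneg_left hle hD.le
          _ = D * (b - a) / (Real.log b - Real.log a) := by ring
          _ ≤ H := hkey
      · have hL : 0 < Real.log a - Real.log b := sub_pos.2 (Real.log_lt_log hb hba)
        have hg := aux_geo hb hba
        have hsym : D * (b - a) / (Real.log b - Real.log a)
            = D * (a - b) / (Real.log a - Real.log b) := by
          rw [show D * (b-a) = -(D*(a-b)) by ring,
            show Real.log b - Real.log a = -(Real.log a - Real.log b) by ring, neg_div_neg_eq]
        rw [hsym] at hkey
        have hle : Real.sqrt (a * b) ≤ (a - b)/(Real.log a - Real.log b) := by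
          rw [mul_comm a b]
          exact (le_div_iff₀ hL).2 hg
        calc D * Real.sqrt (a*b) ≤ D * ((a-b)/(Real.log a - Real.log b)) :=
              mul_le_mul_of_nonneg_left hle hD.le
          _ = D * (a-b)/(Real.log a - Real.log b) := by ring
          _ ≤ H := hkey
  have hH0 : 0 < H := lt_of_lt_of_le (by positivity) hgeo
  constructor
  · have hsq : (D * Real.sqrt (a*b))^2 ≤ H^2 :=
      pow_le_pow_left₀ (by positivity) hgeo 2
    calc b * a * D^2 = (D * Real.sqrt (a*b))^2 := by
          rw [mul_pow, Real.sq_sqrt (by positivity : (0:ℝ) ≤ a * b)]; ring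
      _ ≤ H^2 := hsq
  · intro hle
    rcases lt_trichotomy a b with hab | he | hba
    · exfalso
      have hL : 0 < Real.log b - Real.log a := sub_pos.2 (Real.log_lt_log ha hab)
      have hlt : Real.log (b / a) < b / a - 1 :=
        Real.log_lt_sub_one_of_pos (by positivity) (ne_of_gt ((one_lt_div ha).2 hab))
      rw [Real.log_div hb.ne' ha.ne'] at hlt
      have habd : a * (b / a - 1) = b - a := by field_simp
      have h3 : a * (Real.log b - Real.log a) < b - a := by nlinarith
      have hkey := h2 (ne_of_lt hab)
      have h4 : a * D * (Real.log b - Real.log a) < D * (b - a) := by nlinarith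
      have h5 : a * D < D * (b - a) / (Real.log b - Real.log a) := (lt_div_iff₀ hL).2 h4
      linarith
    · have h1' := h1 he
      have hHeq : H = a * D := le_antisymm hle (by linarith [h1'])
      rw [hHeq, div_self (by positivity : a * D ≠ 0), sub_self, Real.exp_zero, mul_one]
      exact he.ge
    · have hL : 0 < Real.log a - Real.log b := sub_pos.2 (Real.log_lt_log hb hba)
      have hkey := h2 (ne_of_gt hba)
      have hsym : D * (b - a) / (Real.log b - Real.log a)
          = D * (a - b) / (Real.log a - Real.log b) := by
        rw [show D * (b-a) = -(D*(a-b)) by ring,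
          show Real.log b - Real.log a = -(Real.log a - Real.log b) by ring, neg_div_neg_eq]
      rw [hsym] at hkey
      have hdab : D * (a - b) ≤ H * (Real.log a - Real.log b) := (div_le_iff₀ hL).1 hkey
      have hlog1 : Real.log (a/b) ≤ a/b - 1 := Real.log_le_sub_one_of_pos (by positivity)
      rw [Real.log_div ha.ne' hb.ne'] at hlog1
      have hb1 : b * (Real.log a - Real.log b) ≤ a - b := by
        have : b * (a/b - 1) = a - b := by field_simp
        nlinarith
      have hdb : D * b ≤ H := by
        have h6 : (D * b) * (Real.log a - Real.log b) ≤ H * (Real.log a - Real.log b) := by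
          nlinarith
        exact le_of_mul_le_mul_right h6 hL
      have hfinal : a * D ≤ H * (1 + (Real.log a - Real.log b)) := by nlinarith
      have ht : a * D / H ≤ 1 + (Real.log a - Real.log b) :=
        (div_le_iff₀ hH0).2 (by linarith)
      calc b = Real.exp (Real.log b) := (Real.exp_log hb).symm
        _ ≤ Real.exp (Real.log a + (1 - a * D / H)) := by
            apply Real.exp_le_exp.2; linarith
        _ = a * Real.exp (1 - a * D / H) := by rw [Real.exp_add, Real.exp_log ha]

private lemma integral_bound (f : ℝ → ℝ)
    (hf_int : Integrable f)
    (hf_logconcave : ∀ x y lam : ℝ, 0 ≤ lam → lam ≤ 1 →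
      f x ^ (1 - lam) * f y ^ lam ≤ f ((1 - lam) * x + lam * y))
    (u v : ℝ) (huv : u < v) (hA : 0 < f u) (hB : 0 < f v) :
    (f u = f v → (v - u) * f u ≤ ∫ t in u..v, f t) ∧
    (f u ≠ f v → (v - u) * (f v - f u) / (Real.log (f v) - Real.log (f u))
      ≤ ∫ t in u..v, f t) := by
  have hvu : (0:ℝ) < v - u := sub_pos.2 huv
  have ptwise : ∀ t ∈ Set.Icc u v,
      f u ^ ((v - t)/(v - u)) * f v ^ ((t - u)/(v - u)) ≤ f t := by
    intro t ht
    obtain ⟨ht1, ht2⟩ := ht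
    have hlam0 : 0 ≤ (t - u)/(v - u) := div_nonneg (by linarith) hvu.le
    have hlam1 : (t - u)/(v - u) ≤ 1 := (div_le_one hvu).2 (by linarith)
    have key := hf_logconcave u v ((t - u)/(v - u)) hlam0 hlam1
    have e0 : (t - u)/(v - u) * (v - u) = t - u := div_mul_cancel₀ _ hvu.ne'
    have e1 : (1 - (t - u)/(v - u)) * u + (t - u)/(v - u) * v = t := by
      rw [show (1 - (t - u)/(v - u)) * u + (t - u)/(v - u) * v
        = u + (t - u)/(v - u) * (v - u) by ring, e0]; ring
    have e2 : 1 - (t - u)/(v - u) = (v - t)/(v - u) := by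
      rw [eq_div_iff hvu.ne', sub_mul, one_mul, e0]; ring
    rw [e1, e2] at key
    exact key
  constructor
  · intro hAB
    have ptc : ∀ t ∈ Set.Icc u v, f u ≤ f t := by
      intro t ht
      have hp := ptwise t ht
      rw [← hAB, ← Real.rpow_add hA,
        show (v - t)/(v - u) + (t - u)/(v - u) = 1 by
          rw [← add_div, show v - t + (t - u) = v - u by ring, div_self hvu.ne'],
        Real.rpow_one] at hp
      exact hp
    calc (v - u) * f u = ∫ _t in u..v, f u := by
          rw [intervalIntegral.integral_const, smul_eq_mul]
      _ ≤ ∫ t in u..v, f t :=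
          intervalIntegral.integral_mono_on huv.le intervalIntegrable_const
            hf_int.intervalIntegrable ptc
  · intro hAB
    have hlog : Real.log (f u) ≠ Real.log (f v) := fun e =>
      hAB (by rw [← Real.exp_log hA, ← Real.exp_log hB, e])
    set c : ℝ := (Real.log (f v) - Real.log (f u)) / (v - u) with hc
    have hc0 : c ≠ 0 := div_ne_zero (sub_ne_zero.2 (Ne.symm hlog)) hvu.ne'
    set α : ℝ := Real.log (f u) - c * u with hα
    have hgu : α + c * u = Real.log (f u) := by rw [hα]; ring
    have hgv : α + c * v = Real.log (f v) := by
      have hcc : c * (v - u) = Real.log (f v) - Real.log (f u) := by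
        rw [hc]; exact div_mul_cancel₀ _ hvu.ne'
      have h2' : α + c * v = Real.log (f u) + c * (v - u) := by rw [hα]; ring
      rw [h2', hcc]; ring
    have hptA : ∀ t : ℝ, α + c * t
        = (v - t)/(v - u) * Real.log (f u) + (t - u)/(v - u) * Real.log (f v) := by
      intro t
      rw [hα, hc]
      field_simp
      ring
    have hgcont : Continuous fun t => Real.exp (α + c * t) := by continuity
    have hgint : IntervalIntegrable (fun t => Real.exp (α + c * t)) volume u v :=
      hgcont.intervalIntegrable u v
    have hptle : ∀ t ∈ Set.Icc u v, Real.exp (α + c * t) ≤ f t := by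
      intro t ht
      have hpw := ptwise t ht
      have heq : Real.exp (α + c * t)
          = f u ^ ((v - t)/(v - u)) * f v ^ ((t - u)/(v - u)) := by
        rw [hptA t, Real.exp_add, Real.rpow_def_of_pos hA, Real.rpow_def_of_pos hB,
          mul_comm (Real.log (f u)), mul_comm (Real.log (f v))]
      rw [heq]
      exact hpw
    have hderiv : ∀ t ∈ Set.uIcc u v,
        HasDerivAt (fun s => c⁻¹ * Real.exp (α + c * s)) (Real.exp (α + c * t)) t := by
      intro t _
      have h1 : HasDerivAt (fun s : ℝ => α + c * s) c t := by
        simpa using ((hasDerivAt_id t).const_mul c).const_add α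
      have h3 := h1.exp.const_mul c⁻¹
      have h4 : c⁻¹ * (Real.exp (α + c * t) * c) = Real.exp (α + c * t) := by
        rw [mul_comm (Real.exp _) c, ← mul_assoc, inv_mul_cancel₀ hc0, one_mul]
      rw [h4] at h3
      exact h3
    have hFTC : ∫ t in u..v, Real.exp (α + c * t)
        = c⁻¹ * Real.exp (α + c * v) - c⁻¹ * Real.exp (α + c * u) :=
      intervalIntegral.integral_eq_sub_of_hasDerivAt hderiv hgint
    calc (v - u) * (f v - f u) / (Real.log (f v) - Real.log (f u))
        = c⁻¹ * f v - c⁻¹ * f u := by rw [hc, inv_div]; ring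
      _ = c⁻¹ * Real.exp (α + c * v) - c⁻¹ * Real.exp (α + c * u) := by
          rw [hgu, hgv, Real.exp_log hA, Real.exp_log hB]
      _ = ∫ t in u..v, Real.exp (α + c * t) := hFTC.symm
      _ ≤ ∫ t in u..v, f t :=
          intervalIntegral.integral_mono_on huv.le hgint hf_int.intervalIntegrable hptle

/-- For a log-concave probability density `f` with distribution function `F`,
a point `x_o` with `f x_o > 0` and `x ≠ x_o`, setting `h := F(max(x_o,x)) − F(min(x_o,x))`:
`f x · f x_o · (x − x_o)² ≤ h²`, and if `f x_o · |x − x_o| ≥ h` then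
`f x ≤ f x_o · exp(1 − f x_o · |x − x_o| / h)`. -/
theorem logconcave_density_tail_bounds
    (f : ℝ → ℝ) (hf_nonneg : ∀ x, 0 ≤ f x)
    (hf_int : Integrable f)
    (hf_prob : ∫ x, f x = 1)
    (hf_logconcave : ∀ x y lam : ℝ, 0 ≤ lam → lam ≤ 1 →
      f x ^ (1 - lam) * f y ^ lam ≤ f ((1 - lam) * x + lam * y))
    (F : ℝ → ℝ) (hF : ∀ x, F x = ∫ t in Set.Iic x, f t)
    (xo x : ℝ) (hxo : 0 < f xo) (hx : x ≠ xo)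
    (h : ℝ) (hh : h = F (max xo x) - F (min xo x)) :
    f x * f xo * (x - xo) ^ 2 ≤ h ^ 2 ∧
      (h ≤ f xo * |x - xo| → f x ≤ f xo * Real.exp (1 - f xo * |x - xo| / h)) := by
  have hD : |x - xo| = max xo x - min xo x := by
    rw [max_sub_min_eq_abs, abs_sub_comm]
  have hhI : h = ∫ t in (min xo x)..(max xo x), f t := by
    rw [hh, hF, hF, intervalIntegral.integral_Iic_sub_Iic hf_int.integrableOn hf_int.integrableOn]
  have hD0 : 0 < |x - xo| := abs_pos.2 (sub_ne_zero.2 hx)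
  rcases (hf_nonneg x).eq_or_lt with hb0 | hb0
  · constructor
    · rw [← hb0]
      simpa using sq_nonneg h
    · intro _
      rw [← hb0]
      positivity
  · have hHH : (f xo = f x → |x - xo| * f xo ≤ h) ∧
        (f xo ≠ f x → |x - xo| * (f x - f xo) / (Real.log (f x) - Real.log (f xo)) ≤ h) := by
      rcases hx.lt_or_gt with hlt | hlt
      · have hmin : min xo x = x := min_eq_right hlt.le
        have hmax : max xo x = xo := max_eq_left hlt.le
        have hDv : |x - xo| = xo - x := by rw [hD, hmax, hmin]
        have hbd := integral_bound f hf_int hf_logconcave x xo hlt hb0 hxo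
        rw [hhI, hmin, hmax, hDv]
        constructor
        · intro he
          rw [he]
          exact hbd.1 he.symm
        · intro hne
          have hkey := hbd.2 (Ne.symm hne)
          have heq : (xo - x)*(f x - f xo)/(Real.log (f x) - Real.log (f xo))
              = (xo - x)*(f xo - f x)/(Real.log (f xo) - Real.log (f x)) := by
            rw [show (xo - x)*(f x - f xo) = -((xo - x)*(f xo - f x)) by ring,
              show Real.log (f x) - Real.log (f xo)
                = -(Real.log (f xo) - Real.log (f x)) by ring, neg_div_neg_eq]
          rw [heq]
          exact hkey
      · have hmin : min xo x = xo := min_eq_left hlt.le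
        have hmax : max xo x = x := max_eq_right hlt.le
        have hDv : |x - xo| = x - xo := by rw [hD, hmax, hmin]
        have hbd := integral_bound f hf_int hf_logconcave xo x hlt hxo hb0
        rw [hhI, hmin, hmax, hDv]
        exact hbd
    have hfin := final_bounds (f xo) (f x) |x - xo| h hxo hb0 hD0 hHH.1 hHH.2
    refine ⟨?_, hfin.2⟩
    calc f x * f xo * (x - xo)^2 = f x * f xo * |x - xo|^2 := by rw [sq_abs]
      _ ≤ h^2 := hfin.1
end

section
/- The function x ↦ f(x)/F(x) is non-increasing on {x : F(x) > 0}, and the function x ↦ f(x)/(1 − F(x)) is non-decreasing on {x : F(x) < 1}. -/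
open MeasureTheory

lemma rpow_split_aux (a lam : ℝ) (ha : 0 ≤ a) : a ^ (1 - lam) * a ^ lam = a := by
  rcases eq_or_ne lam 0 with h | h
  · simp [h]
  rcases ha.eq_or_lt with h0 | h0
  · rw [← h0, Real.zero_rpow h, mul_zero]
  · rw [← Real.rpow_add h0]; simp

lemma four_point_aux (f : ℝ → ℝ) (hf_nonneg : ∀ x, 0 ≤ f x)
    (hf_logconcave : ∀ x y lam : ℝ, 0 ≤ lam → lam ≤ 1 →
      f x ^ (1 - lam) * f y ^ lam ≤ f ((1 - lam) * x + lam * y))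
    {a b c d : ℝ} (hac : a ≤ c) (hcb : c ≤ b) (had : a ≤ d) (hdb : d ≤ b)
    (hsum : a + b = c + d) : f a * f b ≤ f c * f d := by
  rcases eq_or_lt_of_le (hac.trans hcb) with hab | hab
  · have hca : c = a := le_antisymm (by linarith) hac
    have hda : d = a := le_antisymm (by linarith) had
    rw [hca, hda, ← hab]
  · set lam : ℝ := (c - a) / (b - a) with hlam
    have hba : (0:ℝ) < b - a := by linarith
    have h0 : 0 ≤ lam := div_nonneg (by linarith) hba.le
    have h1 : lam ≤ 1 := (div_le_one hba).mpr (by linarith)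
    have h0' : 0 ≤ 1 - lam := by linarith
    have h1' : 1 - lam ≤ 1 := by linarith
    have hc : (1 - lam) * a + lam * b = c := by
      field_simp [hlam]
      have hl : lam * (b - a) = c - a := by rw [hlam]; exact div_mul_cancel₀ _ hba.ne'
      linarith
    have hd : (1 - (1 - lam)) * a + (1 - lam) * b = d := by
      field_simp [hlam]
      ring_nf
      nlinarith [hsum]
    have H1 := hf_logconcave a b lam h0 h1
    have H2 := hf_logconcave a b (1 - lam) h0' h1'
    rw [hc] at H1
    rw [hd] at H2
    have key : (f a ^ (1 - lam) * f b ^ lam) * (f a ^ (1 - (1 - lam)) * f b ^ (1 - lam))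
        = f a * f b := by
      have e1 : f a ^ (1 - lam) * f a ^ (1 - (1 - lam)) = f a := by
        have : (1 : ℝ) - (1 - lam) = lam := by ring
        rw [this]; exact rpow_split_aux _ _ (hf_nonneg a)
      have e2 : f b ^ lam * f b ^ (1 - lam) = f b := by
        rw [mul_comm]; exact rpow_split_aux _ _ (hf_nonneg b)
      calc (f a ^ (1 - lam) * f b ^ lam) * (f a ^ (1 - (1 - lam)) * f b ^ (1 - lam))
          = (f a ^ (1 - lam) * f a ^ (1 - (1 - lam))) * (f b ^ lam * f b ^ (1 - lam)) := by ring
        _ = f a * f b := by rw [e1, e2]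
    calc f a * f b
        = (f a ^ (1 - lam) * f b ^ lam) * (f a ^ (1 - (1 - lam)) * f b ^ (1 - lam)) := key.symm
      _ ≤ f c * f d := by
          apply mul_le_mul H1 H2 (mul_nonneg (Real.rpow_nonneg (hf_nonneg a) _) (Real.rpow_nonneg (hf_nonneg b) _)) (hf_nonneg c)

/-- For a log-concave probability density `f` with distribution function `F`,
the function `f/F` is non-increasing on `{x : F x > 0}` and `f/(1 − F)` is non-decreasing
on `{x : F x < 1}`. -/
theorem hazard_monotone_of_logconcave
    (f : ℝ → ℝ) (hf_nonneg : ∀ x, 0 ≤ f x)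
    (hf_int : Integrable f)
    (hf_prob : ∫ x, f x = 1)
    (hf_logconcave : ∀ x y lam : ℝ, 0 ≤ lam → lam ≤ 1 →
      f x ^ (1 - lam) * f y ^ lam ≤ f ((1 - lam) * x + lam * y))
    (F : ℝ → ℝ) (hF : ∀ x, F x = ∫ t in Set.Iic x, f t) :
    AntitoneOn (fun x => f x / F x) {x | 0 < F x} ∧
      MonotoneOn (fun x => f x / (1 - F x)) {x | F x < 1} := by
  -- translation invariance of set integrals
  have emb : ∀ c : ℝ, MeasurableEmbedding (fun t : ℝ => t + c) := fun c =>
    (MeasurableEquiv.addRight c).measurableEmbedding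
  have shift : ∀ (c : ℝ) (s : Set ℝ),
      ∫ t in (fun t : ℝ => t + c) ⁻¹' s, f (t + c) = ∫ t in s, f t := fun c s =>
    (measurePreserving_add_right volume c).setIntegral_preimage_emb (emb c) f s
  have hshiftInt : ∀ c : ℝ, Integrable (fun t : ℝ => f (t + c)) := fun c =>
    ((measurePreserving_add_right volume c).integrable_comp_emb (emb c)).mpr hf_int
  -- monotonicity of F
  have hFmono : ∀ x y : ℝ, x ≤ y → F x ≤ F y := by
    intro x y hxy
    rw [hF x, hF y]
    exact setIntegral_mono_set hf_int.integrableOn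
      ((ae_of_all _ hf_nonneg).filter_mono (ae_mono Measure.restrict_le_self))
      ((Set.Iic_subset_Iic.mpr hxy).eventuallyLE)
  -- complement formula
  have hcompl : ∀ z : ℝ, ∫ t in Set.Ioi z, f t = 1 - F z := by
    intro z
    have h := integral_add_compl (measurableSet_Iic (a := z)) hf_int
    rw [Set.compl_Iic, hf_prob] at h
    rw [hF z]; linarith
  -- main inequality 1 : f y * F x ≤ f x * F y for x ≤ y
  have main1 : ∀ x y : ℝ, x ≤ y → f y * F x ≤ f x * F y := by
    intro x y hxy
    set c : ℝ := y - x with hc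
    have hint1 : IntegrableOn (fun t => f y * f t) (Set.Iic x) :=
      (hf_int.const_mul _).integrableOn
    have hint2 : IntegrableOn (fun t => f x * f (t + c)) (Set.Iic x) :=
      ((hshiftInt c).const_mul _).integrableOn
    have hpt : ∀ t ∈ Set.Iic x, f y * f t ≤ f x * f (t + c) := by
      intro t ht
      rw [Set.mem_Iic] at ht
      have h4 := four_point_aux f hf_nonneg hf_logconcave
        (a := t) (b := y) (c := x) (d := t + c)
        (by linarith) hxy (by simp [hc]; linarith) (by simp [hc]; linarith) (by ring)
      calc f y * f t = f t * f y := mul_comm _ _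
        _ ≤ f x * f (t + c) := h4
    have hle := setIntegral_mono_on hint1 hint2 measurableSet_Iic hpt
    rw [integral_const_mul, integral_const_mul] at hle
    have hpre : (fun t : ℝ => t + c) ⁻¹' Set.Iic y = Set.Iic x := by
      ext t
      simp only [Set.mem_preimage, Set.mem_Iic, hc]
      constructor <;> intro <;> linarith
    have hch : ∫ t in Set.Iic x, f (t + c) = ∫ t in Set.Iic y, f t := by
      rw [← hpre, shift]
    rw [hch] at hle
    rw [hF x, hF y]
    exact hle
  -- main inequality 2 : f x * (1 - F y) ≤ f y * (1 - F x) for x ≤ y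
  have main2 : ∀ x y : ℝ, x ≤ y → f x * (1 - F y) ≤ f y * (1 - F x) := by
    intro x y hxy
    set c : ℝ := x - y with hc
    have hint1 : IntegrableOn (fun t => f x * f t) (Set.Ioi y) :=
      (hf_int.const_mul _).integrableOn
    have hint2 : IntegrableOn (fun t => f y * f (t + c)) (Set.Ioi y) :=
      ((hshiftInt c).const_mul _).integrableOn
    have hpt : ∀ t ∈ Set.Ioi y, f x * f t ≤ f y * f (t + c) := by
      intro t ht
      rw [Set.mem_Ioi] at ht
      exact four_point_aux f hf_nonneg hf_logconcave
        (a := x) (b := t) (c := y) (d := t + c)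
        hxy (by linarith) (by simp [hc]; linarith) (by simp [hc]; linarith) (by ring)
    have hle := setIntegral_mono_on hint1 hint2 measurableSet_Ioi hpt
    rw [integral_const_mul, integral_const_mul] at hle
    have hpre : (fun t : ℝ => t + c) ⁻¹' Set.Ioi x = Set.Ioi y := by
      ext t
      simp only [Set.mem_preimage, Set.mem_Ioi, hc]
      constructor <;> intro <;> linarith
    have hch : ∫ t in Set.Ioi y, f (t + c) = ∫ t in Set.Ioi x, f t := by
      rw [← hpre, shift]
    rw [hch, hcompl, hcompl] at hle
    exact hle
  constructor
  · intro x hx y hy hxy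
    simp only [Set.mem_setOf_eq] at hx hy
    dsimp only
    rw [div_le_div_iff₀ hy hx]
    exact main1 x y hxy
  · intro x hx y hy hxy
    simp only [Set.mem_setOf_eq] at hx hy
    have hxlt : F x < 1 := lt_of_le_of_lt (hFmono x y hxy) hy
    dsimp only
    rw [div_le_div_iff₀ (by linarith) (by linarith)]
    exact main2 x y hxy
end
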